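/- arXiv:2006.11226 — 8 statements merged into one kernel-verified Lean document; each statement's English description precedes it below -/
import Mathlib

section
/- Let f : ℝ^d → ℝ be convex and differentiable, and let (w_t)_{t≥0} be gradient descent iterates w_{t+1} := w_t − η∇f(w_t) with step size η > 0 satisfying f(w_{t+1}) − f(w_t) ≤ −(η/2)‖∇f(w_t)‖² for all t ≥ 0. Then for every w ∈ ℝ^d and every t, ‖w_{t+1} − w‖² ≤ ‖w_t − w‖² + 2η(f(w) − f(w_{t+1})); consequently lim_{t→∞} f(w_t) = inf_{w∈ℝ^d} f(w), and if the infimum of f is not attained then lim_{t→∞} ‖w_t‖ = ∞. -/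
open Filter RealInnerProductSpace

/-! Convexity gives `⟪∇f(w_t), v - w_t⟫ ≤ f v - f(w_t)`; expanding `‖w_t - η∇f(w_t) - v‖²` and
using the descent condition yields the one-step inequality. Since `f(w_t)` is nonincreasing,
telescoping it gives `2ηt (f(w_t) - f v) ≤ ‖w_0 - v‖²`, so `f(w_t)` eventually drops below every
value above `inf f`. If `‖w_t‖` does not diverge, the iterates have a cluster point `u` (by
compactness of balls), and by continuity of `f` the previous point forces `f u ≤ f v` for every
`v`: the infimum is attained. -/

theorem ConvexOn.le_sub_of_hasFDerivAt {E : Type*} [NormedAddCommGroup E] [NormedSpace ℝ E]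
    {s : Set E} {f : E → ℝ} {f' : E →L[ℝ] ℝ} {x y : E}
    (hf : ConvexOn ℝ s f) (hx : x ∈ s) (hy : y ∈ s) (hf' : HasFDerivAt f f' x) :
    f' (y - x) ≤ f y - f x := by
  set L : ℝ →ᵃ[ℝ] E := AffineMap.lineMap x y
  have hL : ConvexOn ℝ (L ⁻¹' s) (f ∘ L) := hf.comp_affineMap L
  have hderiv : HasDerivAt (f ∘ L) (f' (y - x)) 0 := by
    have hLderiv : HasDerivAt L (y - x) 0 := AffineMap.hasDerivAt_lineMap
    have hL0 : L 0 = x := AffineMap.lineMap_apply_zero x y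
    exact (hL0 ▸ hf').comp_hasDerivAt 0 hLderiv
  simpa [L, slope_def_field] using
    hL.le_slope_of_hasDerivAt (by simpa [L] using hx) (by simpa [L] using hy) zero_lt_one hderiv

section InnerProductSpace

variable {E : Type*} [NormedAddCommGroup E] [InnerProductSpace ℝ E]

theorem norm_sub_smul_sub_sq_le_of_descent {f : E → ℝ} {η : ℝ} (hη : 0 ≤ η) {x g v : E}
    (hsub : ⟪g, v - x⟫ ≤ f v - f x)
    (hdesc : f (x - η • g) - f x ≤ -(η / 2) * ‖g‖ ^ 2) :
    ‖x - η • g - v‖ ^ 2 ≤ ‖x - v‖ ^ 2 + 2 * η * (f v - f (x - η • g)) := by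
  have hexpand : ‖x - η • g - v‖ ^ 2 = ‖x - v‖ ^ 2 + 2 * η * ⟪g, v - x⟫ + η ^ 2 * ‖g‖ ^ 2 := by
    rw [sub_right_comm, norm_sub_sq_real, inner_smul_right, norm_smul, mul_pow,
      Real.norm_eq_abs, sq_abs, ← neg_sub x v, inner_neg_right, real_inner_comm]
    ring
  rw [hexpand]
  nlinarith [mul_le_mul_of_nonneg_left hsub hη]

variable [CompleteSpace E]

theorem ConvexOn.inner_gradient_le_sub {s : Set E} {f : E → ℝ} {x y : E}
    (hf : ConvexOn ℝ s f) (hx : x ∈ s) (hy : y ∈ s) (hd : DifferentiableAt ℝ f x) :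
    ⟪gradient f x, y - x⟫ ≤ f y - f x := by
  rw [inner_gradient_left]
  exact hf.le_sub_of_hasFDerivAt hx hy hd.hasFDerivAt

theorem antitone_comp_of_descent {f : E → ℝ} {η : ℝ} {w : ℕ → E} (hη : 0 ≤ η)
    (hdesc : ∀ t, f (w (t + 1)) - f (w t) ≤ -(η / 2) * ‖gradient f (w t)‖ ^ 2) :
    Antitone (f ∘ w) :=
  antitone_nat_of_succ_le fun t => by
    show f (w (t + 1)) ≤ f (w t)
    have : 0 ≤ η / 2 * ‖gradient f (w t)‖ ^ 2 := by positivity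
    linarith [hdesc t]

end InnerProductSpace

section Rate

variable {E : Type*} [SeminormedAddCommGroup E] {f : E → ℝ} {η : ℝ} {w : ℕ → E}

theorem norm_sub_sq_add_mul_sub_le_of_step (hη : 0 ≤ η) (hanti : Antitone (f ∘ w)) {v : E}
    (hstep : ∀ t, ‖w (t + 1) - v‖ ^ 2 ≤ ‖w t - v‖ ^ 2 + 2 * η * (f v - f (w (t + 1))))
    (t : ℕ) : ‖w t - v‖ ^ 2 + 2 * η * t * (f (w t) - f v) ≤ ‖w 0 - v‖ ^ 2 := by
  induction t with
  | zero => simp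
  | succ t ih =>
    have hmono : f (w (t + 1)) ≤ f (w t) := hanti t.le_succ
    have : 0 ≤ 2 * η * t := by positivity
    push_cast
    nlinarith [hstep t, mul_le_mul_of_nonneg_left hmono this]

theorem eventually_lt_of_mul_sub_le (hη : 0 < η)
    (hrate : ∀ v t, 2 * η * t * (f (w t) - f v) ≤ ‖w 0 - v‖ ^ 2)
    (c : ℝ) (hc : ∃ v, f v < c) : ∀ᶠ t in atTop, f (w t) < c := by
  obtain ⟨v, hv⟩ := hc
  have hgap : 0 < 2 * η * (c - f v) := by have := sub_pos.2 hv; positivity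
  filter_upwards [eventually_gt_atTop ⌈‖w 0 - v‖ ^ 2 / (2 * η * (c - f v))⌉₊] with t ht
  have hlarge : ‖w 0 - v‖ ^ 2 < 2 * η * t * (c - f v) := by
    have := (div_lt_iff₀ hgap).1 (Nat.lt_of_ceil_lt ht)
    linarith
  have ht_pos : 0 < 2 * η * t := by
    have : (0 : ℝ) < t := by exact_mod_cast (Nat.zero_le _).trans_lt ht
    positivity
  nlinarith [hrate v t]

end Rate

theorem MapClusterPt.le_of_eventually_lt {X ι : Type*} [TopologicalSpace X] {l : Filter ι}
    {f : X → ℝ} (hf : Continuous f) {x : ι → X} {u : X} (hu : MapClusterPt u l x)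
    (hx : ∀ c, (∃ v, f v < c) → ∀ᶠ t in l, f (x t) < c) (v : X) : f u ≤ f v := by
  by_contra! hvu
  obtain ⟨c, hvc, hcu⟩ := exists_between hvu
  have hclosed : IsClosed {y | f y ≤ c} := isClosed_le hf continuous_const
  have : f u ≤ c :=
    hclosed.mem_of_mapClusterPt hu ((hx c ⟨v, hvc⟩).mono fun _ => le_of_lt)
  linarith

theorem exists_mapClusterPt_of_not_tendsto_norm_atTop {E : Type*} [SeminormedAddCommGroup E]
    [ProperSpace E] {x : ℕ → E} (hx : ¬Tendsto (fun t => ‖x t‖) atTop atTop) :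
    ∃ u, MapClusterPt u atTop x := by
  simp only [tendsto_atTop, not_forall, not_eventually, not_le] at hx
  obtain ⟨b, hb⟩ := hx
  obtain ⟨u, -, hu⟩ := (isCompact_closedBall (0 : E) b).exists_mapClusterPt_of_frequently
    (hb.mono fun t ht => by simpa using ht.le)
  exact ⟨u, hu⟩

/-- Basic properties of gradient descent on a convex
differentiable function `f : ℝ^d → ℝ` with step size `η > 0` satisfying the
descent condition `f(w_{t+1}) − f(w_t) ≤ −(η/2)‖∇f(w_t)‖²`:
(a) for every `w` and `t`, `‖w_{t+1} − w‖² ≤ ‖w_t − w‖² + 2η(f(w) − f(w_{t+1}))`;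
(b) `f(w_t)` converges to `inf f` (phrased: it eventually goes below any value
that is not a lower bound of `f`);
(c) if the infimum of `f` is not attained then `‖w_t‖ → ∞`. -/
theorem gradient_descent_basic_properties
    {d : ℕ} (f : EuclideanSpace ℝ (Fin d) → ℝ)
    (hconv : ConvexOn ℝ Set.univ f)
    (hdiff : Differentiable ℝ f)
    (η : ℝ) (hη : 0 < η)
    (w : ℕ → EuclideanSpace ℝ (Fin d))
    (hgd : ∀ t : ℕ, w (t + 1) = w t - η • gradient f (w t))
    (hdesc : ∀ t : ℕ, f (w (t + 1)) - f (w t) ≤ -(η / 2) * ‖gradient f (w t)‖ ^ 2) :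
    (∀ (v : EuclideanSpace ℝ (Fin d)) (t : ℕ),
        ‖w (t + 1) - v‖ ^ 2 ≤ ‖w t - v‖ ^ 2 + 2 * η * (f v - f (w (t + 1)))) ∧
    (∀ c : ℝ, (∃ v, f v < c) → ∀ᶠ t in atTop, f (w t) < c) ∧
    ((∀ u, ∃ v, f v < f u) →
        Tendsto (fun t : ℕ => ‖w t‖) atTop atTop) := by
  have hstep : ∀ v t, ‖w (t + 1) - v‖ ^ 2 ≤ ‖w t - v‖ ^ 2 + 2 * η * (f v - f (w (t + 1))) := by
    intro v t
    have hdesc_t := hdesc t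
    rw [hgd t] at hdesc_t ⊢
    exact norm_sub_smul_sub_sq_le_of_descent hη.le
      (hconv.inner_gradient_le_sub trivial trivial (hdiff _)) hdesc_t
  have hanti := antitone_comp_of_descent hη.le hdesc
  have hrate : ∀ v t, 2 * η * t * (f (w t) - f v) ≤ ‖w 0 - v‖ ^ 2 := fun v t =>
    (le_add_of_nonneg_left (sq_nonneg _)).trans
      (norm_sub_sq_add_mul_sub_le_of_step hη.le hanti (hstep v) t)
  have hbelow := eventually_lt_of_mul_sub_le hη hrate
  refine ⟨hstep, hbelow, fun hnot_attained => ?_⟩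
  by_contra hbounded
  obtain ⟨u, hu⟩ := exists_mapClusterPt_of_not_tendsto_norm_atTop hbounded
  obtain ⟨v, hvu⟩ := hnot_attained u
  exact (hu.le_of_eventually_lt hdiff.continuous hbelow v).not_gt hvu
end

section
/- Suppose the infimum of the empirical risk R over ℝ^d is not attained. Then for every B > 0 the regularized solution satisfies w̄(B)/B = −∇R(w̄(B))/‖∇R(w̄(B))‖; conversely, if ‖w‖ = B and w/B = −∇R(w)/‖∇R(w)‖, then w = w̄(B). -/
open Filter RealInnerProductSpace Set Metric

/-! The risk `R` is convex and differentiable, and since its infimum is not attained its gradient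
never vanishes. If `w` minimizes `R` on the ball of radius `B`, first-order optimality gives
`⟪∇R(w), u - w⟫ ≥ 0` on the ball; testing it at `u = -B ∇R(w) / ‖∇R(w)‖` makes
`‖w + B ∇R(w) / ‖∇R(w)‖‖²` nonpositive. Conversely, if `w = -B ∇R(w) / ‖∇R(w)‖`, the gradient
inequality `R(u) ≥ R(w) + ⟪∇R(w), u - w⟫` and Cauchy–Schwarz make `w` a minimizer on the ball.
Minimizers are unique: each lies on the sphere, while the midpoint of two distinct ones is again a
minimizer but lies strictly inside the ball. -/

section InnerProductSpace

variable {F : Type*} [NormedAddCommGroup F] [InnerProductSpace ℝ F] {B : ℝ} {g w : F}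

theorem inner_eq_neg_mul_norm_of_inv_smul_eq (hB : B ≠ 0) (h : B⁻¹ • w = -(‖g‖⁻¹ • g)) :
    ⟪g, w⟫ = -(B * ‖g‖) := by
  have hw : w = -((B * ‖g‖⁻¹) • g) := by
    rw [mul_smul, ← smul_neg, ← h, smul_smul, mul_inv_cancel₀ hB, one_smul]
  rw [hw, inner_neg_right, real_inner_smul_right, real_inner_self_eq_norm_sq]
  rcases eq_or_ne ‖g‖ 0 with h0 | h0
  · simp [h0]
  · field_simp

theorem norm_eq_of_inv_smul_eq (hB : 0 < B) (hg : g ≠ 0) (h : B⁻¹ • w = -(‖g‖⁻¹ • g)) :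
    ‖w‖ = B := by
  have := congrArg norm h
  rw [norm_smul, norm_neg, norm_smul, norm_inv, norm_inv, norm_norm,
    inv_mul_cancel₀ (norm_ne_zero_iff.mpr hg), Real.norm_of_nonneg hB.le] at this
  field_simp at this
  exact this

theorem inv_smul_eq_neg_of_inner_le (hB : 0 < B) (hg : g ≠ 0) (hw : ‖w‖ ≤ B)
    (h : ⟪g, w⟫ ≤ -(B * ‖g‖)) : B⁻¹ • w = -(‖g‖⁻¹ • g) := by
  have hgpos : 0 < ‖g‖ := norm_pos_iff.mpr hg
  set c := B / ‖g‖ with hc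
  have hcg : ‖c • g‖ = B := by
    rw [norm_smul, Real.norm_of_nonneg (by positivity), hc]
    field_simp
  have hsq : ‖w + c • g‖ ^ 2 ≤ 0 :=
    calc ‖w + c • g‖ ^ 2 = ‖w‖ ^ 2 + 2 * (c * ⟪g, w⟫) + B ^ 2 := by
          rw [norm_add_sq_real, hcg, real_inner_smul_right, real_inner_comm]
      _ ≤ B ^ 2 + 2 * (c * -(B * ‖g‖)) + B ^ 2 := by gcongr
      _ = 0 := by rw [hc]; field_simp; ring
  have hzero : w + c • g = 0 :=
    norm_eq_zero.mp <| (pow_eq_zero_iff two_ne_zero).mp <| le_antisymm hsq (by positivity)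
  have hBc : B⁻¹ * c = ‖g‖⁻¹ := by rw [hc]; field_simp
  rw [eq_neg_of_add_eq_zero_left hzero, smul_neg, smul_smul, hBc]

end InnerProductSpace

section Gradient

variable {F : Type*} [NormedAddCommGroup F] [InnerProductSpace ℝ F] [CompleteSpace F]
  {f : F → ℝ} {s : Set F} {B : ℝ} {w v : F}

theorem ConvexOn.add_inner_gradient_le (hf : ConvexOn ℝ s f) (hw : w ∈ s) (hv : v ∈ s)
    (hd : DifferentiableAt ℝ f w) : f w + ⟪gradient f w, v - w⟫ ≤ f v := by
  let line : ℝ →ᵃ[ℝ] F := AffineMap.lineMap w v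
  have hderiv : HasDerivAt (f ∘ line) ⟪gradient f w, v - w⟫ 0 := by
    rw [inner_gradient_left]
    exact hd.hasFDerivAt.comp_hasDerivAt_of_eq 0 AffineMap.hasDerivAt_lineMap (by simp [line])
  have hslope := (hf.comp_affineMap line).le_slope_of_hasDerivAt (by simpa [line] using hw)
    (by simpa [line] using hv) one_pos hderiv
  simp [slope, line] at hslope
  rw [inner_gradient_left, map_sub]
  linarith

theorem ConvexOn.isMinOn_univ_of_gradient_eq_zero (hf : ConvexOn ℝ univ f)
    (hd : DifferentiableAt ℝ f w) (hg : gradient f w = 0) : IsMinOn f univ w := fun v _ => by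
  simpa [hg] using hf.add_inner_gradient_le (mem_univ w) (mem_univ v) hd

theorem IsMinOn.inner_gradient_sub_nonneg (hmin : IsMinOn f s w) (hs : Convex ℝ s) (hw : w ∈ s)
    (hv : v ∈ s) (hd : DifferentiableAt ℝ f w) : 0 ≤ ⟪gradient f w, v - w⟫ := by
  rw [inner_gradient_left]
  exact hmin.localize.hasFDerivWithinAt_nonneg hd.hasFDerivAt.hasFDerivWithinAt
    (sub_mem_posTangentConeAt_of_segment_subset (hs.segment_subset hw hv))

theorem IsMinOn.inv_smul_eq_neg_normalized_gradient (hmin : IsMinOn f (closedBall 0 B) w)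
    (hw : w ∈ closedBall 0 B) (hd : DifferentiableAt ℝ f w) (hg : gradient f w ≠ 0)
    (hB : 0 < B) : B⁻¹ • w = -(‖gradient f w‖⁻¹ • gradient f w) := by
  set g := gradient f w
  refine inv_smul_eq_neg_of_inner_le hB hg (mem_closedBall_zero_iff.mp hw) ?_
  set u := -((B * ‖g‖⁻¹) • g)
  have hu : B⁻¹ • u = -(‖g‖⁻¹ • g) := by
    rw [smul_neg, smul_smul, ← mul_assoc, inv_mul_cancel₀ hB.ne', one_mul]
  have huB : u ∈ closedBall 0 B := mem_closedBall_zero_iff.mpr (norm_eq_of_inv_smul_eq hB hg hu).le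
  have hopt := hmin.inner_gradient_sub_nonneg (convex_closedBall 0 B) hw huB hd
  rw [inner_sub_right, inner_eq_neg_mul_norm_of_inv_smul_eq hB.ne' hu] at hopt
  linarith

theorem ConvexOn.isMinOn_closedBall_of_inv_smul_eq (hf : ConvexOn ℝ univ f)
    (hd : DifferentiableAt ℝ f v) (hB : B ≠ 0)
    (h : B⁻¹ • v = -(‖gradient f v‖⁻¹ • gradient f v)) : IsMinOn f (closedBall 0 B) v :=
  fun u hu => show f v ≤ f u by
    have h1 := hf.add_inner_gradient_le (mem_univ v) (mem_univ u) hd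
    have h2 := neg_le_of_abs_le (abs_real_inner_le_norm (gradient f v) u)
    have h3 :=
      mul_le_mul_of_nonneg_left (mem_closedBall_zero_iff.mp hu) (norm_nonneg (gradient f v))
    rw [inner_sub_right, inner_eq_neg_mul_norm_of_inv_smul_eq hB h] at h1
    linarith

theorem ConvexOn.eq_of_isMinOn_closedBall {w₁ w₂ : F} (hf : ConvexOn ℝ (closedBall 0 B) f)
    (hd : Differentiable ℝ f) (hg : ∀ u, gradient f u ≠ 0) (hB : 0 < B)
    (h₁ : IsMinOn f (closedBall 0 B) w₁) (h₂ : IsMinOn f (closedBall 0 B) w₂)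
    (hw₁ : w₁ ∈ closedBall 0 B) (hw₂ : w₂ ∈ closedBall 0 B) : w₁ = w₂ := by
  by_contra hne
  set m := (2 : ℝ)⁻¹ • w₁ + (2 : ℝ)⁻¹ • w₂
  have hm : m ∈ closedBall 0 B := hf.1 hw₁ hw₂ (by norm_num) (by norm_num) (by norm_num)
  have hmin : IsMinOn f (closedBall 0 B) m := fun u hu =>
    calc f m ≤ (2 : ℝ)⁻¹ • f w₁ + (2 : ℝ)⁻¹ • f w₂ :=
          hf.2 hw₁ hw₂ (by norm_num) (by norm_num) (by norm_num)
      _ ≤ (2 : ℝ)⁻¹ • f u + (2 : ℝ)⁻¹ • f u := by gcongr; exacts [h₁ hu, h₂ hu]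
      _ = f u := by rw [← add_smul]; norm_num
  have hmB := norm_eq_of_inv_smul_eq hB (hg m)
    (hmin.inv_smul_eq_neg_normalized_gradient hm (hd m) (hg m) hB)
  have hmlt := norm_combo_lt_of_ne (mem_closedBall_zero_iff.mp hw₁) (mem_closedBall_zero_iff.mp hw₂)
    hne (a := 2⁻¹) (b := 2⁻¹) (by norm_num) (by norm_num) (by norm_num)
  exact hmlt.ne hmB

end Gradient

theorem ConvexOn.const_mul_sum_comp_mul_inner {F ι : Type*} [NormedAddCommGroup F]
    [InnerProductSpace ℝ F] [Fintype ι] {ℓ : ℝ → ℝ} (hℓ : ConvexOn ℝ univ ℓ) {c : ℝ} (hc : 0 ≤ c)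
    (x : ι → F) (y : ι → ℝ) : ConvexOn ℝ univ (fun w => c * ∑ i, ℓ (y i * ⟪w, x i⟫)) := by
  have hterm (i : ι) : ConvexOn ℝ univ (fun w => ℓ (y i * ⟪w, x i⟫)) :=
    hℓ.comp_linearMap (y i • (innerₗ F).flip (x i))
  have hsum : ConvexOn ℝ univ (fun w => ∑ i, ℓ (y i * ⟪w, x i⟫)) := by
    simpa only [Finset.sum_fn] using Finset.sum_induction (s := Finset.univ)
      (fun i w => ℓ (y i * ⟪w, x i⟫)) (ConvexOn ℝ univ) (fun _ _ => ConvexOn.add)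
      (convexOn_const 0 convex_univ) (fun i _ => hterm i)
  exact hsum.smul hc

theorem regularized_solution_collinear_with_gradient_general
    {d n : ℕ}
    (x : Fin n → EuclideanSpace ℝ (Fin d)) (y : Fin n → ℝ)
    (ℓ : ℝ → ℝ)
    (hconv : ConvexOn ℝ Set.univ ℓ)
    (hdiff : Differentiable ℝ ℓ)
    (R : EuclideanSpace ℝ (Fin d) → ℝ)
    (hR : R = fun w => (1 / (n : ℝ)) * ∑ i, ℓ (y i * ⟪w, x i⟫))
    (hunatt : ∀ u, ∃ v, R v < R u)
    (wbar : ℝ → EuclideanSpace ℝ (Fin d))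
    (hwbar : ∀ B : ℝ, 0 ≤ B → ‖wbar B‖ ≤ B ∧ ∀ v, ‖v‖ ≤ B → R (wbar B) ≤ R v) :
    (∀ B : ℝ, 0 < B →
      B⁻¹ • wbar B = -(‖gradient R (wbar B)‖⁻¹ • gradient R (wbar B))) ∧
    (∀ (B : ℝ) (v : EuclideanSpace ℝ (Fin d)), 0 < B → ‖v‖ = B →
      B⁻¹ • v = -(‖gradient R v‖⁻¹ • gradient R v) → v = wbar B) := by
  have hRconv : ConvexOn ℝ univ R := hR ▸ hconv.const_mul_sum_comp_mul_inner (by positivity) x y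
  have hRdiff : Differentiable ℝ R := hR ▸ .const_mul (.fun_sum fun i _ =>
    hdiff.comp ((differentiable_id.inner ℝ (differentiable_const (x i))).const_mul (y i))) _
  have hgrad (u) : gradient R u ≠ 0 := fun h0 => by
    obtain ⟨v, hv⟩ := hunatt u
    exact (hRconv.isMinOn_univ_of_gradient_eq_zero (hRdiff u) h0 (mem_univ v)).not_gt hv
  have hwbar_min {B : ℝ} (hB : 0 < B) :
      wbar B ∈ closedBall 0 B ∧ IsMinOn R (closedBall 0 B) (wbar B) :=
    ⟨mem_closedBall_zero_iff.mpr (hwbar B hB.le).1,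
      fun v hv => (hwbar B hB.le).2 v (mem_closedBall_zero_iff.mp hv)⟩
  refine ⟨fun B hB => ?_, fun B v hB hvB hv => ?_⟩
  · obtain ⟨hw, hwmin⟩ := hwbar_min hB
    exact hwmin.inv_smul_eq_neg_normalized_gradient hw (hRdiff _) (hgrad _) hB
  · obtain ⟨hw, hwmin⟩ := hwbar_min hB
    exact (hRconv.subset (subset_univ _) (convex_closedBall 0 B)).eq_of_isMinOn_closedBall hRdiff
      hgrad hB (hRconv.isMinOn_closedBall_of_inv_smul_eq (hRdiff v) hB.ne' hv) hwmin
      (mem_closedBall_zero_iff.mpr hvB.le) hw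

/-- If the infimum of the empirical risk `R` is not attained,
then for every `B > 0` the regularized solution is collinear with the negative
risk gradient: `w̄(B)/B = −∇R(w̄(B))/‖∇R(w̄(B))‖`; conversely, if `‖w‖ = B` and
`w/B = −∇R(w)/‖∇R(w)‖`, then `w = w̄(B)`. -/
theorem regularized_solution_collinear_with_gradient
    {d n : ℕ} (hn : 0 < n)
    (x : Fin n → EuclideanSpace ℝ (Fin d)) (y : Fin n → ℝ)
    (hx : ∀ i, ‖x i‖ ≤ 1) (hy : ∀ i, y i = 1 ∨ y i = -1)
    (ℓ : ℝ → ℝ)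
    (hconv : ConvexOn ℝ Set.univ ℓ)
    (hdiff : Differentiable ℝ ℓ)
    (hanti : StrictAnti ℓ)
    (hlim0 : Tendsto ℓ atTop (nhds 0))
    (R : EuclideanSpace ℝ (Fin d) → ℝ)
    (hR : R = fun w => (1 / (n : ℝ)) * ∑ i, ℓ (y i * ⟪w, x i⟫))
    (hunatt : ∀ u, ∃ v, R v < R u)
    (wbar : ℝ → EuclideanSpace ℝ (Fin d))
    (hwbar : ∀ B : ℝ, 0 ≤ B → ‖wbar B‖ ≤ B ∧ ∀ v, ‖v‖ ≤ B → R (wbar B) ≤ R v) :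
    (∀ B : ℝ, 0 < B →
      B⁻¹ • wbar B = -(‖gradient R (wbar B)‖⁻¹ • gradient R (wbar B))) ∧
    (∀ (B : ℝ) (v : EuclideanSpace ℝ (Fin d)), 0 < B → ‖v‖ = B →
      B⁻¹ • v = -(‖gradient R v‖⁻¹ • gradient R v) → v = wbar B) :=
  regularized_solution_collinear_with_gradient_general x y ℓ hconv hdiff R hR hunatt wbar hwbar
end

section
/- Suppose the training data is linearly separable, and the step size satisfies η ≤ 1/(2R(w_0)) and R(w_{t+1}) − R(w_t) ≤ −(η/2)‖∇R(w_t)‖² for all t. Then the limit lim_{t→∞} w_t/‖w_t‖ of the gradient descent direction exists if and only if the limit lim_{B→∞} w̄(B)/B of the regularization-path direction exists, and when they exist they are equal. -/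
/-!
Gradient descent is Fejér monotone towards every point of lower risk: if `R z ≤ R (w t₂)` and
`t₁ ≤ t₂` then `‖w t₂ - z‖ ≤ ‖w t₁ - z‖`, that is `‖w t₂‖² - ‖w t₁‖² ≤ 2 ⟪w t₂ - w t₁, z⟫`.
Since the risk strictly decreases along the separating direction, `w̄ B` has norm `B` and is the
least-norm point of its (convex) sublevel set, so `B² ≤ ⟪v, w̄ B⟫` whenever `R v ≤ R (w̄ B)`.
The risk tends to `0` both along the iterates and along the path, and the iterates move by at
most `1` per step, so `‖w t‖` grows without gaps.

Both directions compare two iterates `w t₁`, `w t₂` with `‖w t₁‖ ≈ (1 - κ) ‖w t₂‖`.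
If `w t / ‖w t‖ → u`, let `t₂` be the last time with `R (w t₂) ≥ R (w̄ B)`: Fejér monotonicity
towards `w̄ B` bounds `‖w t₂‖ ≲ B`, and then `B² ≤ ⟪w (t₂ + 1), w̄ B⟫` forces `⟪u, w̄ B⟫ ≳ B`.
If `w̄ B / B → u`, Fejér monotonicity towards `w̄ ‖w t₂‖`, at a time `t₂` where the alignment
`⟪w t / ‖w t‖, u⟫` is close to its liminf, shows that this liminf is at least `1 - 2κ`.
-/

open Filter Set RealInnerProductSpace
open scoped Topology

theorem Nat.exists_crossing (p : ℕ → Prop) {a b : ℕ} (hab : a ≤ b) (ha : p a) (hb : ¬ p b) :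
    ∃ t, a ≤ t ∧ t < b ∧ p t ∧ ¬ p (t + 1) := by
  induction b, hab using Nat.le_induction with
  | base => exact absurd ha hb
  | succ b hab ih =>
    by_cases hpb : p b
    · exact ⟨b, hab, b.lt_succ_self, hpb, hb⟩
    · obtain ⟨t, hat, htb, hpt, hpt'⟩ := ih hpb
      exact ⟨t, hat, htb.trans b.lt_succ_self, hpt, hpt'⟩

theorem exists_level_crossing {a : ℕ → ℝ} (ha : ∀ t, a (t + 1) ≤ a t + 1) {T t₂ : ℕ} {c : ℝ}
    (hT : T ≤ t₂) (haT : a T ≤ c) (hc : c < a t₂) :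
    ∃ t₁, T ≤ t₁ ∧ t₁ ≤ t₂ ∧ a t₁ ≤ c ∧ c ≤ a t₁ + 1 := by
  obtain ⟨t₁, hTt₁, ht₁, hle, hlt⟩ :=
    Nat.exists_crossing (fun t => a t ≤ c) hT haT hc.not_ge
  exact ⟨t₁, hTt₁, ht₁.le, hle, (not_le.1 hlt).le.trans (ha t₁)⟩

section InnerProduct

variable {F : Type*} [NormedAddCommGroup F] [InnerProductSpace ℝ F]

theorem norm_inv_norm_smul_le_one (a : F) : ‖‖a‖⁻¹ • a‖ ≤ 1 := by
  rcases eq_or_ne a 0 with rfl | ha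
  · simp
  · exact (norm_smul_inv_norm ha).le

theorem abs_inner_inv_norm_smul_le_one {u : F} (hu : ‖u‖ ≤ 1) (a : F) :
    |⟪‖a‖⁻¹ • a, u⟫| ≤ 1 :=
  (abs_real_inner_le_norm _ _).trans
    (mul_le_one₀ (norm_inv_norm_smul_le_one a) (norm_nonneg u) hu)

theorem real_inner_eq_norm_mul_inner_inv_norm_smul (a u : F) :
    ⟪a, u⟫ = ‖a‖ * ⟪‖a‖⁻¹ • a, u⟫ := by
  rcases eq_or_ne a 0 with rfl | ha
  · simp
  · rw [real_inner_smul_left, ← mul_assoc, mul_inv_cancel₀ (norm_ne_zero_iff.2 ha), one_mul]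

theorem norm_sub_smul_le_of_norm_inv_smul_sub_le {a u : F} {r δ : ℝ} (hr : 0 ≤ r)
    (ha : r = 0 → a = 0) (h : ‖r⁻¹ • a - u‖ ≤ δ) : ‖a - r • u‖ ≤ δ * r := by
  rcases hr.eq_or_lt with rfl | hr
  · simp [ha rfl]
  · calc ‖a - r • u‖ = ‖r • (r⁻¹ • a - u)‖ := by rw [smul_sub, smul_inv_smul₀ hr.ne']
      _ = r * ‖r⁻¹ • a - u‖ := by rw [norm_smul, Real.norm_of_nonneg hr.le]
      _ ≤ δ * r := by rw [mul_comm]; exact mul_le_mul_of_nonneg_right h hr.le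

theorem abs_inner_sub_le_of_norm_sub_smul_le {a u : F} {r ε : ℝ} (h : ‖a - r • u‖ ≤ ε) (z : F) :
    |⟪a, z⟫ - r * ⟪u, z⟫| ≤ ε * ‖z‖ := by
  rw [← real_inner_smul_left, ← inner_sub_left]
  exact (abs_real_inner_le_norm _ _).trans (mul_le_mul_of_nonneg_right h (norm_nonneg z))

theorem sq_norm_sub_sq_norm_le_of_norm_sub_le {a b z : F} (h : ‖b - z‖ ≤ ‖a - z‖) :
    ‖b‖ ^ 2 - ‖a‖ ^ 2 ≤ 2 * ⟪b - a, z⟫ := by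
  have := pow_le_pow_left₀ (norm_nonneg _) h 2
  rw [norm_sub_sq_real, norm_sub_sq_real] at this
  rw [inner_sub_left]
  linarith

theorem tendsto_nhds_of_eventually_le_inner {α : Type*} {l : Filter α} {f : α → F} {u : F}
    (hu : ‖u‖ ≤ 1) (hf : ∀ᶠ x in l, ‖f x‖ ≤ 1) (h : ∀ ε > 0, ∀ᶠ x in l, 1 - ε ≤ ⟪f x, u⟫) :
    Tendsto f l (𝓝 u) := by
  refine Metric.tendsto_nhds.2 fun ε hε => ?_
  filter_upwards [hf, h (ε ^ 2 / 4) (by positivity)] with x hfx hx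
  rw [dist_eq_norm, ← pow_lt_pow_iff_left₀ (norm_nonneg _) hε.le two_ne_zero, norm_sub_sq_real]
  nlinarith [norm_nonneg (f x), norm_nonneg u]

end InnerProduct

section Convex

variable {F : Type*} [NormedAddCommGroup F] [InnerProductSpace ℝ F]

theorem convexOn_finset_sum {ι : Type*} (s : Finset ι) {g : ι → F → ℝ}
    (hg : ∀ i ∈ s, ConvexOn ℝ univ (g i)) : ConvexOn ℝ univ (fun w => ∑ i ∈ s, g i w) := by
  refine ⟨convex_univ, fun a _ b _ α β hα hβ hαβ => ?_⟩
  simp only [smul_eq_mul, Finset.mul_sum, ← Finset.sum_add_distrib]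
  exact Finset.sum_le_sum fun i hi => (hg i hi).2 trivial trivial hα hβ hαβ

theorem ConvexOn.inner_gradient_le [CompleteSpace F] {f : F → ℝ} (hf : ConvexOn ℝ univ f) {w : F}
    (hd : DifferentiableAt ℝ f w) (z : F) : ⟪gradient f w, z - w⟫ ≤ f z - f w := by
  let L : ℝ →ᵃ[ℝ] F := AffineMap.lineMap w z
  have hderiv : HasDerivAt (f ∘ L) ⟪gradient f w, z - w⟫ 0 := by
    simpa using hd.hasGradientAt.hasFDerivAt.comp_hasDerivAt_of_eq 0
      AffineMap.hasDerivAt_lineMap (by simp)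
  simpa [slope, L] using
    (hf.comp_affineMap L).le_slope_of_hasDerivAt (mem_univ 0) (mem_univ 1) zero_lt_one hderiv

end Convex

section GradientDescent

variable {F : Type*} [NormedAddCommGroup F] [InnerProductSpace ℝ F] [CompleteSpace F]
  {R : F → ℝ} {η : ℝ} {w : ℕ → F}

theorem antitone_risk_gd (hη : 0 ≤ η)
    (hdesc : ∀ t, R (w (t + 1)) - R (w t) ≤ -(η / 2) * ‖gradient R (w t)‖ ^ 2) :
    Antitone fun t => R (w t) :=
  antitone_nat_of_succ_le fun t => by nlinarith [hdesc t, sq_nonneg ‖gradient R (w t)‖]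

theorem norm_gd_step_sq_le (hgd : ∀ t, w (t + 1) = w t - η • gradient R (w t)) (hη : 0 ≤ η)
    (hdesc : ∀ t, R (w (t + 1)) - R (w t) ≤ -(η / 2) * ‖gradient R (w t)‖ ^ 2) (t : ℕ) :
    ‖w (t + 1) - w t‖ ^ 2 ≤ 2 * η * (R (w t) - R (w (t + 1))) := by
  have hstep : w (t + 1) - w t = -(η • gradient R (w t)) := by rw [hgd t]; abel
  rw [hstep, norm_neg, norm_smul, Real.norm_of_nonneg hη]
  nlinarith [mul_le_mul_of_nonneg_left (hdesc t) hη]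

theorem norm_gd_succ_le (hgd : ∀ t, w (t + 1) = w t - η • gradient R (w t)) (hη : 0 ≤ η)
    (hdesc : ∀ t, R (w (t + 1)) - R (w t) ≤ -(η / 2) * ‖gradient R (w t)‖ ^ 2)
    (hR : ∀ v, 0 < R v) (hη₀ : η ≤ 1 / (2 * R (w 0))) (t : ℕ) : ‖w (t + 1)‖ ≤ ‖w t‖ + 1 := by
  have hstep : ‖w (t + 1) - w t‖ ≤ 1 := by
    refine (sq_le_one_iff₀ (norm_nonneg _)).1 ((norm_gd_step_sq_le hgd hη hdesc t).trans ?_)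
    have := antitone_risk_gd hη hdesc (Nat.zero_le t)
    have := (le_div_iff₀ (by linarith [hR (w 0)])).1 hη₀
    nlinarith [hR (w (t + 1))]
  linarith [norm_le_norm_add_norm_sub' (w (t + 1)) (w t)]

theorem norm_gd_sub_sq_add_le (hgd : ∀ t, w (t + 1) = w t - η • gradient R (w t)) (hη : 0 ≤ η)
    (hdesc : ∀ t, R (w (t + 1)) - R (w t) ≤ -(η / 2) * ‖gradient R (w t)‖ ^ 2)
    (hconv : ConvexOn ℝ univ R) (hdiff : Differentiable ℝ R) (z : F) (t : ℕ) :
    ‖w (t + 1) - z‖ ^ 2 + 2 * η * (R (w (t + 1)) - R z) ≤ ‖w t - z‖ ^ 2 := by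
  have hfirst : R (w t) - R z ≤ ⟪w t - z, gradient R (w t)⟫ := by
    have := hconv.inner_gradient_le (hdiff (w t)) z
    rw [← neg_sub, inner_neg_right, real_inner_comm] at this
    linarith
  have hexpand : ‖w (t + 1) - z‖ ^ 2
      = ‖w t - z‖ ^ 2 - 2 * η * ⟪w t - z, gradient R (w t)⟫ + ‖w (t + 1) - w t‖ ^ 2 := by
    have hstep : w (t + 1) - w t = -(η • gradient R (w t)) := by rw [hgd t]; abel
    rw [show w (t + 1) - z = (w t - z) + (w (t + 1) - w t) by abel, norm_add_sq_real, hstep,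
      inner_neg_right, real_inner_smul_right]
    ring
  nlinarith [norm_gd_step_sq_le hgd hη hdesc t]

theorem norm_gd_sub_le_of_risk_le (hgd : ∀ t, w (t + 1) = w t - η • gradient R (w t))
    (hη : 0 ≤ η) (hdesc : ∀ t, R (w (t + 1)) - R (w t) ≤ -(η / 2) * ‖gradient R (w t)‖ ^ 2)
    (hconv : ConvexOn ℝ univ R) (hdiff : Differentiable ℝ R) {z : F} {t₁ t₂ : ℕ}
    (ht : t₁ ≤ t₂) (hz : R z ≤ R (w t₂)) : ‖w t₂ - z‖ ≤ ‖w t₁ - z‖ := by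
  induction t₂, ht using Nat.le_induction with
  | base => rfl
  | succ t ht ih =>
    have hstep := norm_gd_sub_sq_add_le hgd hη hdesc hconv hdiff z t
    refine ((pow_le_pow_iff_left₀ (norm_nonneg _) (norm_nonneg _) two_ne_zero).1 ?_).trans
      (ih (hz.trans (antitone_risk_gd hη hdesc t.le_succ)))
    nlinarith

theorem gd_regret_le (hgd : ∀ t, w (t + 1) = w t - η • gradient R (w t)) (hη : 0 ≤ η)
    (hdesc : ∀ t, R (w (t + 1)) - R (w t) ≤ -(η / 2) * ‖gradient R (w t)‖ ^ 2)
    (hconv : ConvexOn ℝ univ R) (hdiff : Differentiable ℝ R) (z : F) (T : ℕ) :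
    2 * η * T * (R (w T) - R z) ≤ ‖w 0 - z‖ ^ 2 - ‖w T - z‖ ^ 2 := by
  induction T with
  | zero => simp
  | succ T ih =>
    have hstep := norm_gd_sub_sq_add_le hgd hη hdesc hconv hdiff z T
    have hmono : 2 * η * T * R (w (T + 1)) ≤ 2 * η * T * R (w T) :=
      mul_le_mul_of_nonneg_left (antitone_risk_gd hη hdesc T.le_succ) (by positivity)
    push_cast
    linarith

theorem tendsto_risk_gd (hgd : ∀ t, w (t + 1) = w t - η • gradient R (w t)) (hη : 0 < η)
    (hdesc : ∀ t, R (w (t + 1)) - R (w t) ≤ -(η / 2) * ‖gradient R (w t)‖ ^ 2)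
    (hconv : ConvexOn ℝ univ R) (hdiff : Differentiable ℝ R) (hR : ∀ v, 0 ≤ R v)
    (hinf : ∀ ε > 0, ∃ z, R z < ε) : Tendsto (fun t => R (w t)) atTop (𝓝 0) := by
  refine tendsto_order.2 ⟨fun a ha => .of_forall fun t => ha.trans_le (hR _), fun a ha => ?_⟩
  obtain ⟨z, hz⟩ := hinf a ha
  have hvanish : Tendsto (fun T : ℕ => ‖w 0 - z‖ ^ 2 / (2 * η) / T) atTop (𝓝 0) :=
    tendsto_const_div_atTop_nhds_zero_nat _
  filter_upwards [hvanish.eventually (gt_mem_nhds (sub_pos.2 hz)), eventually_gt_atTop 0]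
    with T hT hT0
  have hregret := gd_regret_le hgd hη.le hdesc hconv hdiff z T
  have hbound : R (w T) - R z ≤ ‖w 0 - z‖ ^ 2 / (2 * η) / T := by
    rw [div_div, le_div_iff₀ (by positivity)]
    nlinarith [sq_nonneg ‖w T - z‖]
  linarith

end GradientDescent

section RegularizationPath

variable {F : Type*} [NormedAddCommGroup F] [InnerProductSpace ℝ F] {R : F → ℝ} {wbar : ℝ → F}
  {u₀ : F}

def IsRegularizationPath (R : F → ℝ) (wbar : ℝ → F) : Prop :=
  ∀ B : ℝ, 0 ≤ B → ‖wbar B‖ ≤ B ∧ ∀ v, ‖v‖ ≤ B → R (wbar B) ≤ R v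

namespace IsRegularizationPath

theorem le_norm_of_risk_le (hpath : IsRegularizationPath R wbar) (hu₀ : ‖u₀‖ ≤ 1)
    (hdescent : ∀ z (s : ℝ), 0 < s → R (z + s • u₀) < R z) {B : ℝ} (hB : 0 ≤ B) {z : F}
    (hz : R z ≤ R (wbar B)) : B ≤ ‖z‖ := by
  by_contra! hzB
  have hnorm : ‖z + (B - ‖z‖) • u₀‖ ≤ B := by
    calc ‖z + (B - ‖z‖) • u₀‖ ≤ ‖z‖ + (B - ‖z‖) * ‖u₀‖ := by
          grw [norm_add_le, norm_smul, Real.norm_of_nonneg (sub_nonneg.2 hzB.le)]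
      _ ≤ B := by nlinarith
  linarith [hdescent z _ (sub_pos.2 hzB), (hpath B hB).2 _ hnorm]

theorem norm_eq (hpath : IsRegularizationPath R wbar) (hu₀ : ‖u₀‖ ≤ 1)
    (hdescent : ∀ z (s : ℝ), 0 < s → R (z + s • u₀) < R z) {B : ℝ} (hB : 0 ≤ B) :
    ‖wbar B‖ = B :=
  le_antisymm (hpath B hB).1 (hpath.le_norm_of_risk_le hu₀ hdescent hB le_rfl)

theorem sq_le_inner_of_risk_le (hpath : IsRegularizationPath R wbar) (hu₀ : ‖u₀‖ ≤ 1)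
    (hdescent : ∀ z (s : ℝ), 0 < s → R (z + s • u₀) < R z) (hconv : ConvexOn ℝ univ R)
    {B : ℝ} (hB : 0 ≤ B) {v : F} (hv : R v ≤ R (wbar B)) : B ^ 2 ≤ ⟪v, wbar B⟫ := by
  -- `wbar B` is the point of least norm of the convex set `K`, i.e. the projection of `0` on it.
  set K := {x ∈ univ | R x ≤ R (wbar B)}
  have hmem : wbar B ∈ K := ⟨trivial, le_rfl⟩
  have hmin : ‖0 - wbar B‖ = ⨅ x : K, ‖0 - (x : F)‖ := by
    have : Nonempty K := ⟨⟨_, hmem⟩⟩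
    refine le_antisymm (le_ciInf fun x => ?_) (ciInf_le ?_ (⟨_, hmem⟩ : K))
    · simpa [hpath.norm_eq hu₀ hdescent hB] using hpath.le_norm_of_risk_le hu₀ hdescent hB x.2.2
    · exact ⟨0, by rintro _ ⟨x, rfl⟩; exact norm_nonneg _⟩
  have := (norm_eq_iInf_iff_real_inner_le_zero (hconv.convex_le _) hmem).1 hmin v ⟨trivial, hv⟩
  rw [zero_sub, inner_neg_left, inner_sub_right, real_inner_self_eq_norm_sq,
    hpath.norm_eq hu₀ hdescent hB, real_inner_comm] at this
  linarith

theorem tendsto_risk (hpath : IsRegularizationPath R wbar) (hu₀ : ‖u₀‖ ≤ 1)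
    (hR : ∀ v, 0 ≤ R v) (hlim : Tendsto (fun s : ℝ => R (s • u₀)) atTop (𝓝 0)) :
    Tendsto (fun B => R (wbar B)) atTop (𝓝 0) := by
  refine squeeze_zero' (.of_forall fun B => hR _) ?_ hlim
  filter_upwards [eventually_ge_atTop 0] with B hB
  refine (hpath B hB).2 _ ?_
  rw [norm_smul, Real.norm_of_nonneg hB]
  nlinarith [norm_nonneg u₀]

theorem tendsto_norm_atTop (hpath : IsRegularizationPath R wbar) (hu₀ : ‖u₀‖ ≤ 1)
    (hdescent : ∀ z (s : ℝ), 0 < s → R (z + s • u₀) < R z) (hR : ∀ v, 0 < R v)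
    {α : Type*} {l : Filter α} {f : α → F} (hf : Tendsto (fun x => R (f x)) l (𝓝 0)) :
    Tendsto (fun x => ‖f x‖) l atTop := by
  refine tendsto_atTop.2 fun B => ?_
  filter_upwards [hf.eventually (gt_mem_nhds (hR (wbar (max B 0))))] with x hx
  exact (le_max_left B 0).trans (hpath.le_norm_of_risk_le hu₀ hdescent (le_max_right B 0) hx.le)

end IsRegularizationPath

end RegularizationPath

section Window

variable {F : Type*} [NormedAddCommGroup F] [InnerProductSpace ℝ F]

theorem norm_le_of_window_of_aligned {a b z u : F} {κ : ℝ} (hκ : 0 < κ) (hκ' : κ ≤ 1 / 2)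
    (hu : ‖u‖ ≤ 1) (ha : ‖a - ‖a‖ • u‖ ≤ κ ^ 2 / 2 * ‖a‖) (hb : ‖b - ‖b‖ • u‖ ≤ κ ^ 2 / 2 * ‖b‖)
    (hwin : ‖a‖ ≤ (1 - κ) * ‖b‖) (hwin' : (1 - κ) * ‖b‖ ≤ ‖a‖ + 1) (hz : ‖b - z‖ ≤ ‖a - z‖) :
    (2 - κ) * ‖b‖ ≤ 2 * (1 + κ) * ‖z‖ + 1 := by
  have hq : ⟪u, z⟫ ≤ ‖z‖ := (real_inner_le_norm u z).trans (by nlinarith [norm_nonneg z])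
  have hKW := sq_norm_sub_sq_norm_le_of_norm_sub_le hz
  have hza := abs_le.1 (abs_inner_sub_le_of_norm_sub_smul_le ha z)
  have hzb := abs_le.1 (abs_inner_sub_le_of_norm_sub_smul_le hb z)
  rw [inner_sub_left] at hKW
  have hD : κ * ‖b‖ ≤ ‖b‖ - ‖a‖ := by linarith
  have hsum : (‖b‖ - ‖a‖) * (‖a‖ + ‖b‖) ≤ (‖b‖ - ‖a‖) * (2 * (1 + κ) * ‖z‖) := by
    have e1 : (‖b‖ - ‖a‖) * ⟪u, z⟫ ≤ (‖b‖ - ‖a‖) * ‖z‖ :=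
      mul_le_mul_of_nonneg_left hq (by nlinarith [norm_nonneg b])
    have e2 : κ ^ 2 / 2 * (‖a‖ + ‖b‖) * ‖z‖ ≤ κ * (‖b‖ - ‖a‖) * ‖z‖ := by
      have hab : ‖a‖ ≤ ‖b‖ := by nlinarith [norm_nonneg b]
      refine mul_le_mul_of_nonneg_right ?_ (norm_nonneg z)
      nlinarith [mul_le_mul_of_nonneg_left hD hκ.le, mul_le_mul_of_nonneg_left hab (sq_nonneg κ)]
    nlinarith
  rcases lt_or_ge 0 (‖b‖ - ‖a‖) with hpos | hnpos
  · have := le_of_mul_le_mul_left hsum hpos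
    linarith
  · have : ‖b‖ ≤ 0 := by nlinarith
    nlinarith [norm_nonneg b, norm_nonneg z]

theorem le_inner_of_aligned {c z u : F} {κ : ℝ} (hκ : 0 < κ) (hκ' : κ ≤ 1 / 2)
    (hc : ‖c - ‖c‖ • u‖ ≤ κ ^ 2 / 2 * ‖c‖) (hcz : ‖z‖ ^ 2 ≤ ⟪c, z⟫)
    (hnorm : (2 - κ) * (‖c‖ - 1) ≤ 2 * (1 + κ) * ‖z‖ + 1) (hz : 3 ≤ 2 * κ * ‖z‖) :
    (1 - 4 * κ) * ‖z‖ ≤ ⟪u, z⟫ := by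
  have hz0 : 0 < ‖z‖ := by nlinarith
  have hcz' : ‖z‖ * ‖z‖ ≤ ‖c‖ * (⟪u, z⟫ + κ ^ 2 / 2 * ‖z‖) := by
    have := (abs_le.1 (abs_inner_sub_le_of_norm_sub_smul_le hc z)).2
    nlinarith
  have hpos : 0 < ⟪u, z⟫ + κ ^ 2 / 2 * ‖z‖ := by
    by_contra! h
    nlinarith [mul_nonpos_of_nonneg_of_nonpos (norm_nonneg c) h]
  have hc' : (2 - κ) * ‖c‖ ≤ 2 * (1 + 2 * κ) * ‖z‖ := by linarith
  have hmain : (2 - κ) * ‖z‖ ≤ 2 * (1 + 2 * κ) * (⟪u, z⟫ + κ ^ 2 / 2 * ‖z‖) := by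
    refine le_of_mul_le_mul_left ?_ hz0
    nlinarith [mul_le_mul_of_nonneg_right hc' hpos.le]
  nlinarith [mul_pos hκ hz0, mul_pos (mul_pos hκ hκ) hz0]

theorem one_sub_two_mul_le_of_window {a b z u : F} {κ L : ℝ} (hκ : 0 < κ) (hκ' : κ ≤ 1 / 2)
    (hb1 : 1 ≤ κ * ‖b‖) (hz : ‖z - ‖b‖ • u‖ ≤ κ ^ 2 / 4 * ‖b‖)
    (hwin : ‖a‖ ≤ (1 - κ) * ‖b‖) (hwin' : (1 - κ) * ‖b‖ ≤ ‖a‖ + 1) (hfejer : ‖b - z‖ ≤ ‖a - z‖)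
    (ha : (L - κ ^ 2 / 4) * ‖a‖ ≤ ⟪a, u⟫) (hb : ⟪b, u⟫ ≤ (L + κ ^ 2 / 4) * ‖b‖) :
    1 - 2 * κ ≤ L := by
  have hKW := sq_norm_sub_sq_norm_le_of_norm_sub_le hfejer
  have hzba := (abs_le.1 (abs_inner_sub_le_of_norm_sub_smul_le hz (b - a))).2
  have hba : κ ^ 2 / 4 * ‖b‖ * ‖b - a‖ ≤ κ ^ 2 / 4 * ‖b‖ * (‖a‖ + ‖b‖) :=
    mul_le_mul_of_nonneg_left ((norm_sub_le b a).trans_eq (add_comm _ _)) (by positivity)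
  rw [inner_sub_right, inner_sub_right, ← real_inner_comm u b, ← real_inner_comm u a,
    real_inner_comm b z, real_inner_comm a z] at hzba
  rw [inner_sub_left] at hKW
  have hb0 : 0 < ‖b‖ := by nlinarith [norm_nonneg b]
  have hD : κ * ‖b‖ ≤ ‖b‖ - ‖a‖ := by linarith
  have hsum : (‖b‖ - ‖a‖) * (‖a‖ + ‖b‖) ≤ (‖b‖ - ‖a‖) * (2 * ‖b‖ * (L + κ)) := by
    have e1 : κ ^ 2 / 2 * (‖a‖ + ‖b‖) ≤ κ * (‖b‖ - ‖a‖) := by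
      nlinarith [mul_le_mul_of_nonneg_left hD hκ.le, norm_nonneg a]
    nlinarith [mul_le_mul_of_nonneg_left e1 hb0.le]
  have := le_of_mul_le_mul_left hsum (by nlinarith)
  nlinarith

end Window

section Directions

variable {F : Type*} [NormedAddCommGroup F] [InnerProductSpace ℝ F] {R : F → ℝ} {w : ℕ → F}
  {wbar : ℝ → F}

theorem tendsto_path_dir_of_tendsto_gd_dir (hnorm : ∀ B, 0 ≤ B → ‖wbar B‖ = B)
    (hF1 : ∀ B, 0 ≤ B → ∀ v, R v ≤ R (wbar B) → B ^ 2 ≤ ⟪v, wbar B⟫) (hR : ∀ v, 0 < R v)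
    (hgd0 : Tendsto (fun t => R (w t)) atTop (𝓝 0))
    (hpath0 : Tendsto (fun B => R (wbar B)) atTop (𝓝 0))
    (hfejer : ∀ z t₁ t₂, t₁ ≤ t₂ → R z ≤ R (w t₂) → ‖w t₂ - z‖ ≤ ‖w t₁ - z‖)
    (hstep : ∀ t, ‖w (t + 1)‖ ≤ ‖w t‖ + 1) {u : F}
    (hu : Tendsto (fun t => ‖w t‖⁻¹ • w t) atTop (𝓝 u)) :
    Tendsto (fun B => B⁻¹ • wbar B) atTop (𝓝 u) := by
  have hu1 : ‖u‖ ≤ 1 := le_of_tendsto' hu.norm fun t => norm_inv_norm_smul_le_one _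
  refine tendsto_nhds_of_eventually_le_inner hu1 ?_ fun ε hε => ?_
  · filter_upwards [eventually_gt_atTop 0] with B hB
    rw [norm_smul, hnorm B hB.le, norm_inv, Real.norm_of_nonneg hB.le, inv_mul_cancel₀ hB.ne']
  set κ := min (1 / 2) (ε / 4)
  have hκ : 0 < κ := by positivity
  have hκ' : κ ≤ 1 / 2 := min_le_left _ _
  have hκε : 4 * κ ≤ ε := by linarith [min_le_right (1 / 2) (ε / 4)]
  obtain ⟨T, hT⟩ := eventually_atTop.1
    (hu.eventually (Metric.closedBall_mem_nhds u (by positivity : 0 < κ ^ 2 / 2)))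
  have halign (t : ℕ) (ht : T ≤ t) : ‖w t - ‖w t‖ • u‖ ≤ κ ^ 2 / 2 * ‖w t‖ :=
    norm_sub_smul_le_of_norm_inv_smul_sub_le (norm_nonneg _) norm_eq_zero.1
      (mem_closedBall_iff_norm.1 (hT t ht))
  filter_upwards [eventually_ge_atTop (max (3 / (2 * κ)) (2 * ‖w T‖ + 2)),
    hpath0.eventually (gt_mem_nhds (hR (w T)))] with B hB hRB
  have hB0 : 0 < B := lt_of_lt_of_le (by positivity) ((le_max_right _ _).trans hB)
  obtain ⟨hBκ, hBT⟩ := max_le_iff.1 hB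
  rw [div_le_iff₀ (by positivity)] at hBκ
  -- `t₂` is the last iterate whose risk is at least that of `wbar B`
  obtain ⟨b, hb, hTb⟩ := ((hgd0.eventually (gt_mem_nhds (hR (wbar B)))).and
    (eventually_ge_atTop T)).exists
  obtain ⟨t₂, hTt₂, -, ht₂, ht₃⟩ :=
    Nat.exists_crossing (fun t => R (wbar B) ≤ R (w t)) hTb hRB.le hb.not_ge
  have hF := hF1 B hB0.le _ (not_le.1 ht₃).le
  have h₂ : B - 1 ≤ ‖w t₂‖ := by
    have := hF.trans (real_inner_le_norm _ _)
    rw [hnorm B hB0.le] at this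
    nlinarith [hstep t₂]
  obtain ⟨t₁, hTt₁, ht₁t₂, hwin, hwin'⟩ := exists_level_crossing (a := fun t => ‖w t‖) hstep
    hTt₂ (c := (1 - κ) * ‖w t₂‖) (by nlinarith)
    (by nlinarith [mul_pos hκ (by linarith [norm_nonneg (w T)] : 0 < ‖w t₂‖)])
  have hbound := norm_le_of_window_of_aligned hκ hκ' hu1 (halign t₁ hTt₁) (halign t₂ hTt₂)
    hwin hwin' (hfejer _ _ _ ht₁t₂ ht₂)
  have key := le_inner_of_aligned hκ hκ' (halign (t₂ + 1) (by omega))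
    (by rwa [hnorm B hB0.le]) (by nlinarith [hstep t₂]) (by rw [hnorm B hB0.le]; linarith)
  rw [hnorm B hB0.le] at key
  rw [real_inner_smul_left, real_inner_comm, le_inv_mul_iff₀ hB0]
  nlinarith

theorem one_sub_two_mul_le_liminf_inner (hpath : IsRegularizationPath R wbar)
    (hfejer : ∀ z t₁ t₂, t₁ ≤ t₂ → R z ≤ R (w t₂) → ‖w t₂ - z‖ ≤ ‖w t₁ - z‖)
    (hstep : ∀ t, ‖w (t + 1)‖ ≤ ‖w t‖ + 1) (hnorm : Tendsto (fun t => ‖w t‖) atTop atTop)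
    {u : F} (hu1 : ‖u‖ ≤ 1) (hu : Tendsto (fun B => B⁻¹ • wbar B) atTop (𝓝 u)) {κ : ℝ}
    (hκ : 0 < κ) (hκ' : κ ≤ 1 / 2) :
    1 - 2 * κ ≤ liminf (fun t => ⟪‖w t‖⁻¹ • w t, u⟫) atTop := by
  set Y := fun t => ⟪‖w t‖⁻¹ • w t, u⟫
  set L := liminf Y atTop
  have hY (t : ℕ) : ⟪w t, u⟫ = Y t * ‖w t‖ := by
    rw [real_inner_eq_norm_mul_inner_inv_norm_smul, mul_comm]
  have hY1 (t : ℕ) : |Y t| ≤ 1 := abs_inner_inv_norm_smul_le_one hu1 (w t)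
  have hδ : 0 < κ ^ 2 / 4 := by positivity
  obtain ⟨T, hT⟩ := eventually_atTop.1 (eventually_lt_of_lt_liminf (sub_lt_self L hδ)
    (isBoundedUnder_of_eventually_ge (.of_forall fun t => (abs_le.1 (hY1 t)).1)))
  obtain ⟨B₀, hB₀⟩ := eventually_atTop.1 (hu.eventually (Metric.closedBall_mem_nhds u hδ))
  have hfreq : ∃ᶠ t in atTop, Y t < L + κ ^ 2 / 4 :=
    frequently_lt_of_liminf_lt (isCoboundedUnder_ge_of_eventually_le _
      (.of_forall fun t => (abs_le.1 (hY1 t)).2)) (lt_add_of_pos_right L hδ)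
  obtain ⟨t₂, ⟨hTt₂, hbig⟩, hYt₂⟩ := (((eventually_ge_atTop T).and (hnorm.eventually_ge_atTop
    (max (max (1 / κ) B₀) (2 * ‖w T‖)))).and_frequently hfreq).exists
  simp only [max_le_iff, div_le_iff₀ hκ] at hbig
  have h₂ : 0 < ‖w t₂‖ := by nlinarith
  obtain ⟨t₁, hTt₁, ht₁t₂, hwin, hwin'⟩ := exists_level_crossing (a := fun t => ‖w t‖) hstep
    hTt₂ (c := (1 - κ) * ‖w t₂‖) (by nlinarith) (by nlinarith)
  refine one_sub_two_mul_le_of_window (z := wbar ‖w t₂‖) hκ hκ' (by linarith)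
    (norm_sub_smul_le_of_norm_inv_smul_sub_le h₂.le (fun h => absurd h h₂.ne')
      (mem_closedBall_iff_norm.1 (hB₀ _ hbig.1.2))) hwin hwin'
    (hfejer _ _ _ ht₁t₂ ((hpath _ h₂.le).2 _ le_rfl)) ?_ ?_
  · rw [hY]
    exact mul_le_mul_of_nonneg_right (hT t₁ hTt₁).le (norm_nonneg _)
  · rw [hY]
    exact mul_le_mul_of_nonneg_right hYt₂.le (norm_nonneg _)

theorem tendsto_gd_dir_of_tendsto_path_dir (hpath : IsRegularizationPath R wbar)
    (hfejer : ∀ z t₁ t₂, t₁ ≤ t₂ → R z ≤ R (w t₂) → ‖w t₂ - z‖ ≤ ‖w t₁ - z‖)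
    (hstep : ∀ t, ‖w (t + 1)‖ ≤ ‖w t‖ + 1) (hnorm : Tendsto (fun t => ‖w t‖) atTop atTop)
    {u : F} (hu : Tendsto (fun B => B⁻¹ • wbar B) atTop (𝓝 u)) :
    Tendsto (fun t => ‖w t‖⁻¹ • w t) atTop (𝓝 u) := by
  have hu1 : ‖u‖ ≤ 1 := by
    refine le_of_tendsto hu.norm ?_
    filter_upwards [eventually_gt_atTop 0] with B hB
    rw [norm_smul, norm_inv, Real.norm_of_nonneg hB.le, inv_mul_le_one₀ hB]
    exact (hpath B hB.le).1
  have hL : 1 ≤ liminf (fun t => ⟪‖w t‖⁻¹ • w t, u⟫) atTop := le_of_forall_sub_le fun ε hε => by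
    have := one_sub_two_mul_le_liminf_inner hpath hfejer hstep hnorm hu1 hu
      (lt_min one_half_pos (half_pos hε)) (min_le_left _ _)
    linarith [min_le_right (1 / 2 : ℝ) (ε / 2)]
  refine tendsto_nhds_of_eventually_le_inner hu1 (.of_forall fun t => norm_inv_norm_smul_le_one _)
    fun ε hε => ?_
  refine (eventually_lt_of_lt_liminf (by linarith) ?_).mono fun t ht => ht.le
  exact isBoundedUnder_of_eventually_ge (.of_forall fun t =>
    (abs_le.1 (abs_inner_inv_norm_smul_le_one hu1 (w t))).1)

end Directions

theorem tendsto_gd_dir_iff_tendsto_path_dir {F : Type*} [NormedAddCommGroup F]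
    [InnerProductSpace ℝ F] [CompleteSpace F] {R : F → ℝ} (hconv : ConvexOn ℝ univ R)
    (hdiff : Differentiable ℝ R) (hR : ∀ v, 0 < R v) {u₀ : F} (hu₀ : ‖u₀‖ ≤ 1)
    (hdescent : ∀ z (s : ℝ), 0 < s → R (z + s • u₀) < R z)
    (hlim : Tendsto (fun s : ℝ => R (s • u₀)) atTop (𝓝 0)) {η : ℝ} (hη : 0 < η) {w : ℕ → F}
    (hgd : ∀ t, w (t + 1) = w t - η • gradient R (w t)) (hη₀ : η ≤ 1 / (2 * R (w 0)))
    (hdesc : ∀ t, R (w (t + 1)) - R (w t) ≤ -(η / 2) * ‖gradient R (w t)‖ ^ 2) {wbar : ℝ → F}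
    (hpath : IsRegularizationPath R wbar) :
    ((∃ u, Tendsto (fun t => ‖w t‖⁻¹ • w t) atTop (𝓝 u)) ↔
      (∃ u, Tendsto (fun B => B⁻¹ • wbar B) atTop (𝓝 u))) ∧
    (∀ u u', Tendsto (fun t => ‖w t‖⁻¹ • w t) atTop (𝓝 u) →
      Tendsto (fun B => B⁻¹ • wbar B) atTop (𝓝 u') → u = u') := by
  have hR0 (v : F) : 0 ≤ R v := (hR v).le
  have hinf (ε : ℝ) (hε : 0 < ε) : ∃ z, R z < ε := by
    obtain ⟨s, hs⟩ := (hlim.eventually (gt_mem_nhds hε)).exists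
    exact ⟨s • u₀, hs⟩
  have hgd0 := tendsto_risk_gd hgd hη hdesc hconv hdiff hR0 hinf
  have hfejer : ∀ z t₁ t₂, t₁ ≤ t₂ → R z ≤ R (w t₂) → ‖w t₂ - z‖ ≤ ‖w t₁ - z‖ :=
    fun _ _ _ => norm_gd_sub_le_of_risk_le hgd hη.le hdesc hconv hdiff
  have hstep := norm_gd_succ_le hgd hη.le hdesc hR hη₀
  have hgd_to_path {u : F} (hu : Tendsto (fun t => ‖w t‖⁻¹ • w t) atTop (𝓝 u)) :=
    tendsto_path_dir_of_tendsto_gd_dir (fun B hB => hpath.norm_eq hu₀ hdescent hB)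
      (fun B hB v hv => hpath.sq_le_inner_of_risk_le hu₀ hdescent hconv hB hv) hR hgd0
      (hpath.tendsto_risk hu₀ hR0 hlim) hfejer hstep hu
  refine ⟨⟨fun ⟨u, hu⟩ => ⟨u, hgd_to_path hu⟩, fun ⟨u, hu⟩ => ⟨u, ?_⟩⟩,
    fun u u' hu hu' => tendsto_nhds_unique (hgd_to_path hu) hu'⟩
  exact tendsto_gd_dir_of_tendsto_path_dir hpath hfejer hstep
    (hpath.tendsto_norm_atTop hu₀ hdescent hR hgd0) hu

section EmpiricalRisk

variable {F : Type*} [NormedAddCommGroup F] [InnerProductSpace ℝ F] {n : ℕ} {ℓ : ℝ → ℝ}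
  {x : Fin n → F} {y : Fin n → ℝ}

noncomputable def empiricalRisk (ℓ : ℝ → ℝ) (x : Fin n → F) (y : Fin n → ℝ) (w : F) : ℝ :=
  (1 / (n : ℝ)) * ∑ i, ℓ (y i * ⟪w, x i⟫)

theorem convexOn_empiricalRisk (hconv : ConvexOn ℝ univ ℓ) :
    ConvexOn ℝ univ (empiricalRisk ℓ x y) := by
  refine (convexOn_finset_sum _ fun i _ => ?_).smul (c := 1 / (n : ℝ)) (by positivity)
  have hlin : (fun w : F => ℓ (y i * ⟪w, x i⟫)) = ℓ ∘ (y i • innerₛₗ ℝ (x i)) := by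
    ext w
    simp [real_inner_comm]
  rw [hlin]
  exact hconv.comp_linearMap _

theorem differentiable_empiricalRisk (hdiff : Differentiable ℝ ℓ) :
    Differentiable ℝ (empiricalRisk ℓ x y) := by
  refine (Differentiable.fun_sum fun i _ => hdiff.comp ?_).const_mul _
  exact (differentiable_id.inner ℝ (differentiable_const (x i))).const_mul (y i)

theorem empiricalRisk_pos (hn : 0 < n) (hℓ : ∀ s, 0 < ℓ s) (w : F) :
    0 < empiricalRisk ℓ x y w :=
  mul_pos (by positivity) (Finset.sum_pos (fun i _ => hℓ _) ⟨⟨0, hn⟩, Finset.mem_univ _⟩)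

theorem empiricalRisk_add_smul_lt (hn : 0 < n) (hanti : StrictAnti ℓ) {u : F}
    (hmargin : ∀ i, 0 < y i * ⟪u, x i⟫) (z : F) {s : ℝ} (hs : 0 < s) :
    empiricalRisk ℓ x y (z + s • u) < empiricalRisk ℓ x y z := by
  refine mul_lt_mul_of_pos_left (Finset.sum_lt_sum_of_nonempty ⟨⟨0, hn⟩, Finset.mem_univ _⟩
    fun i _ => hanti ?_) (by positivity)
  rw [inner_add_left, real_inner_smul_left]
  nlinarith [hmargin i]

theorem empiricalRisk_smul_le (hn : 0 < n) (hanti : StrictAnti ℓ) {u : F} {γ : ℝ}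
    (hmargin : ∀ i, γ ≤ y i * ⟪u, x i⟫) {s : ℝ} (hs : 0 ≤ s) :
    empiricalRisk ℓ x y (s • u) ≤ ℓ (s * γ) := by
  calc empiricalRisk ℓ x y (s • u) ≤ (1 / (n : ℝ)) * ∑ _i : Fin n, ℓ (s * γ) := by
        refine mul_le_mul_of_nonneg_left (Finset.sum_le_sum fun i _ => hanti.antitone ?_)
          (by positivity)
        rw [real_inner_smul_left, mul_left_comm]
        exact mul_le_mul_of_nonneg_left (hmargin i) hs
    _ = ℓ (s * γ) := by
        rw [Finset.sum_const, Finset.card_univ, Fintype.card_fin, nsmul_eq_mul]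
        field_simp

theorem tendsto_empiricalRisk_smul (hn : 0 < n) (hanti : StrictAnti ℓ) (hℓ : ∀ s, 0 < ℓ s)
    (hlim : Tendsto ℓ atTop (𝓝 0)) {u : F} {γ : ℝ} (hγ : 0 < γ)
    (hmargin : ∀ i, γ ≤ y i * ⟪u, x i⟫) :
    Tendsto (fun s : ℝ => empiricalRisk ℓ x y (s • u)) atTop (𝓝 0) := by
  refine squeeze_zero' (.of_forall fun s => (empiricalRisk_pos hn hℓ _).le) ?_
    (hlim.comp (tendsto_id.atTop_mul_const hγ))
  filter_upwards [eventually_ge_atTop 0] with s hs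
  exact empiricalRisk_smul_le hn hanti hmargin hs

end EmpiricalRisk

theorem gd_direction_converges_iff_regularization_path_converges_general
    {d n : ℕ} (hn : 0 < n)
    (x : Fin n → EuclideanSpace ℝ (Fin d)) (y : Fin n → ℝ)
    (hsep : ∃ (u : EuclideanSpace ℝ (Fin d)) (γ : ℝ), ‖u‖ = 1 ∧ 0 < γ ∧
      ∀ i, γ ≤ y i * ⟪u, x i⟫)
    (ℓ : ℝ → ℝ)
    (hconv : ConvexOn ℝ Set.univ ℓ)
    (hdiff : Differentiable ℝ ℓ)
    (hanti : StrictAnti ℓ)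
    (hlim0 : Tendsto ℓ atTop (nhds 0))
    (R : EuclideanSpace ℝ (Fin d) → ℝ)
    (hR : R = fun w => (1 / (n : ℝ)) * ∑ i, ℓ (y i * ⟪w, x i⟫))
    (η : ℝ) (hη : 0 < η)
    (w : ℕ → EuclideanSpace ℝ (Fin d))
    (hgd : ∀ t : ℕ, w (t + 1) = w t - η • gradient R (w t))
    (hη2 : η ≤ 1 / (2 * R (w 0)))
    (hdesc : ∀ t : ℕ, R (w (t + 1)) - R (w t) ≤ -(η / 2) * ‖gradient R (w t)‖ ^ 2)
    (wbar : ℝ → EuclideanSpace ℝ (Fin d))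
    (hwbar : ∀ B : ℝ, 0 ≤ B → ‖wbar B‖ ≤ B ∧ ∀ v, ‖v‖ ≤ B → R (wbar B) ≤ R v) :
    ((∃ u, Tendsto (fun t : ℕ => ‖w t‖⁻¹ • w t) atTop (nhds u)) ↔
      (∃ u, Tendsto (fun B : ℝ => B⁻¹ • wbar B) atTop (nhds u))) ∧
    (∀ u u' : EuclideanSpace ℝ (Fin d),
      Tendsto (fun t : ℕ => ‖w t‖⁻¹ • w t) atTop (nhds u) →
      Tendsto (fun B : ℝ => B⁻¹ • wbar B) atTop (nhds u') → u = u') := by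
  obtain ⟨u₀, γ, hu₀, hγ, hmargin⟩ := hsep
  have hℓ (s : ℝ) : 0 < ℓ s :=
    (hanti.antitone.le_of_tendsto hlim0 _).trans_lt (hanti (lt_add_one s))
  subst hR
  exact tendsto_gd_dir_iff_tendsto_path_dir (convexOn_empiricalRisk hconv)
    (differentiable_empiricalRisk hdiff) (empiricalRisk_pos hn hℓ) hu₀.le
    (empiricalRisk_add_smul_lt hn hanti fun i => hγ.trans_le (hmargin i))
    (tendsto_empiricalRisk_smul hn hanti hℓ hlim0 hγ hmargin) hη hgd hη2 hdesc hwbar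

/-- For linearly separable data, with step size satisfying
`η ≤ 1/(2R(w₀))` and the descent condition, the gradient-descent direction
`w_t/‖w_t‖` converges iff the regularization-path direction `w̄(B)/B`
converges, and when both exist they are equal. -/
theorem gd_direction_converges_iff_regularization_path_converges
    {d n : ℕ} (hn : 0 < n)
    (x : Fin n → EuclideanSpace ℝ (Fin d)) (y : Fin n → ℝ)
    (hx : ∀ i, ‖x i‖ ≤ 1) (hy : ∀ i, y i = 1 ∨ y i = -1)
    (hsep : ∃ (u : EuclideanSpace ℝ (Fin d)) (γ : ℝ), ‖u‖ = 1 ∧ 0 < γ ∧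
      ∀ i, γ ≤ y i * ⟪u, x i⟫)
    (ℓ : ℝ → ℝ)
    (hconv : ConvexOn ℝ Set.univ ℓ)
    (hdiff : Differentiable ℝ ℓ)
    (hanti : StrictAnti ℓ)
    (hlim0 : Tendsto ℓ atTop (nhds 0))
    (R : EuclideanSpace ℝ (Fin d) → ℝ)
    (hR : R = fun w => (1 / (n : ℝ)) * ∑ i, ℓ (y i * ⟪w, x i⟫))
    (η : ℝ) (hη : 0 < η)
    (w : ℕ → EuclideanSpace ℝ (Fin d))
    (hgd : ∀ t : ℕ, w (t + 1) = w t - η • gradient R (w t))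
    (hη2 : η ≤ 1 / (2 * R (w 0)))
    (hdesc : ∀ t : ℕ, R (w (t + 1)) - R (w t) ≤ -(η / 2) * ‖gradient R (w t)‖ ^ 2)
    (wbar : ℝ → EuclideanSpace ℝ (Fin d))
    (hwbar : ∀ B : ℝ, 0 ≤ B → ‖wbar B‖ ≤ B ∧ ∀ v, ‖v‖ ≤ B → R (wbar B) ≤ R v) :
    ((∃ u, Tendsto (fun t : ℕ => ‖w t‖⁻¹ • w t) atTop (nhds u)) ↔
      (∃ u, Tendsto (fun B : ℝ => B⁻¹ • wbar B) atTop (nhds u))) ∧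
    (∀ u u' : EuclideanSpace ℝ (Fin d),
      Tendsto (fun t : ℕ => ‖w t‖⁻¹ • w t) atTop (nhds u) →
      Tendsto (fun B : ℝ => B⁻¹ • wbar B) atTop (nhds u') → u = u') :=
  gd_direction_converges_iff_regularization_path_converges_general hn x y hsep ℓ hconv hdiff hanti
    hlim0 R hR η hη w hgd hη2 hdesc wbar hwbar
end

section
/- Suppose the training data is linearly separable and the regularization path converges in direction: lim_{B→∞} w̄(B)/B = ū for some unit vector ū. Then the margin γ̄ := min_{1≤i≤n} y_i⟨ū, x_i⟩ satisfies γ̄ ≥ γ̂²/(2n) > 0, where γ̂ := max_{‖u‖=1} min_{1≤i≤n} y_i⟨u, x_i⟩ is the maximum margin. -/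
/-!
Let `q = -ℓ'`, which is positive and nonincreasing, and let `aᵢ(B)` be the margins of `w̄(B)`, so
that `aᵢ(B)/B → mᵢ = yᵢ⟨ū, xᵢ⟩`. Comparing `w̄(B)` with the feasible point `B u*`, where `u*` attains
the maximum margin `γ̂`, the first-order optimality condition gives `∑ᵢ q(aᵢ)(aᵢ - Bγ̂) ≥ 0`.

If some `mⱼ < γ̂/(n+1)`, pick `t ∈ (mⱼ, γ̂/(n+1))` and `r > 1` such that no `mᵢ` lies in `[t, rt]`.
For large `B` every margin is either below `Bt` or above `rBt`, and the optimality condition forces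
some margin `aᵢ > rBt` with `aᵢ q(aᵢ) ≥ Bt q(Bt)`. So `s ↦ s q(s)`, which is positive, can be pushed
from `s` to some point beyond `rs` without decreasing; but convexity gives
`s q(s) ≤ 2 (ℓ(s/2) - ℓ(s)) → 0`, a contradiction. Hence `γ̄ ≥ γ̂/(n+1) ≥ γ̂²/(2n)`, as `γ̂ ≤ 1`.
-/

open Filter Topology Set RealInnerProductSpace

section Loss

variable {ℓ : ℝ → ℝ}

lemma neg_deriv_pos_of_convexOn_of_strictAnti (hconv : ConvexOn ℝ univ ℓ)
    (hdiff : Differentiable ℝ ℓ) (hanti : StrictAnti ℓ) (t : ℝ) : 0 < -deriv ℓ t := by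
  have hslope := hconv.deriv_le_slope (mem_univ t) (mem_univ (t + 1)) (lt_add_one t) (hdiff t)
  have hdrop : ℓ (t + 1) < ℓ t := hanti (lt_add_one t)
  rw [slope_def_field, add_sub_cancel_left, div_one] at hslope
  linarith

lemma antitone_neg_deriv_of_convexOn (hconv : ConvexOn ℝ univ ℓ) (hdiff : Differentiable ℝ ℓ) :
    Antitone fun t => -deriv ℓ t := fun _ _ hst =>
  neg_le_neg (hconv.monotoneOn_deriv (fun x _ => hdiff x) (mem_univ _) (mem_univ _) hst)

lemma tendsto_mul_neg_deriv_atTop_of_convexOn (hconv : ConvexOn ℝ univ ℓ)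
    (hdiff : Differentiable ℝ ℓ) (hanti : Antitone ℓ) (hlim : Tendsto ℓ atTop (𝓝 0)) :
    Tendsto (fun t => t * -deriv ℓ t) atTop (𝓝 0) := by
  have hupper : Tendsto (fun t => 2 * (ℓ (t / 2) - ℓ t)) atTop (𝓝 0) := by
    simpa using ((hlim.comp (tendsto_id.atTop_div_const two_pos)).sub hlim).const_mul 2
  refine tendsto_of_tendsto_of_tendsto_of_le_of_le' tendsto_const_nhds hupper ?_ ?_
  · filter_upwards [eventually_ge_atTop 0] with t ht
    exact mul_nonneg ht (neg_nonneg.2 hanti.deriv_nonpos)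
  · filter_upwards [eventually_gt_atTop 0] with t ht
    have hslope := hconv.slope_le_deriv (mem_univ (t / 2)) (mem_univ t) (by linarith) (hdiff t)
    rw [slope_def_field, div_le_iff₀ (by linarith)] at hslope
    linarith

end Loss

/-- Otherwise the supremum of the points `t ≥ t₀` with `h t₀ ≤ h t` would be exceeded. -/
lemma not_tendsto_zero_of_forall_exists_ge_mul {h : ℝ → ℝ} {r : ℝ} (hr : 1 < r)
    (hpos : ∀ᶠ t in atTop, 0 < h t) (hstep : ∀ᶠ t in atTop, ∃ t' ≥ r * t, h t ≤ h t') :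
    ¬ Tendsto h atTop (𝓝 0) := by
  intro hlim
  obtain ⟨t₀, ht₀⟩ := eventually_atTop.1 ((hpos.and hstep).and (eventually_gt_atTop 0))
  obtain ⟨⟨hpos₀, -⟩, ht₀pos⟩ := ht₀ t₀ le_rfl
  obtain ⟨N, hN⟩ := eventually_atTop.1 (hlim.eventually (gt_mem_nhds hpos₀))
  set S := {t | t₀ ≤ t ∧ h t₀ ≤ h t}
  have hbdd : BddAbove S := ⟨N, fun t ht => le_of_not_ge fun htN => (hN t htN).not_ge ht.2⟩
  have hmem : t₀ ∈ S := ⟨le_rfl, le_rfl⟩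
  have hsup : 0 < sSup S := ht₀pos.trans_le (le_csSup hbdd hmem)
  obtain ⟨t, ht, hlt⟩ := exists_lt_of_lt_csSup ⟨t₀, hmem⟩ (div_lt_self hsup hr)
  obtain ⟨⟨-, t', ht', hle⟩, htpos⟩ := ht₀ t ht.1
  have hrt : t ≤ r * t := le_mul_of_one_le_left htpos.le hr.le
  have ht'S : t' ∈ S := ⟨ht.1.trans (hrt.trans ht'), ht.2.trans hle⟩
  rw [div_lt_iff₀ (by linarith)] at hlt
  linarith [le_csSup hbdd ht'S]

lemma exists_mem_Ioo_forall_lt_or_mul_lt {ι : Type*} [Finite ι] (m : ι → ℝ) {a b : ℝ}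
    (hab : a < b) : ∃ t ∈ Ioo a b, ∃ r > 1, ∀ i, m i < t ∨ r * t < m i := by
  obtain ⟨t, htab, htm⟩ := ((Ioo_infinite hab).sdiff (finite_range m)).nonempty
  refine ⟨t, htab, ?_⟩
  have hnear : ∀ᶠ r in 𝓝 (1 : ℝ), ∀ i, m i < t ∨ r * t < m i := by
    refine eventually_all.2 fun i => ?_
    rcases Ne.lt_or_gt fun h => htm ⟨i, h⟩ with hi | hi
    · exact .of_forall fun _ => Or.inl hi
    · have hcont : Tendsto (fun r => r * t) (𝓝 1) (𝓝 t) :=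
        (continuous_mul_const t).tendsto' 1 t (one_mul t)
      exact (hcont.eventually (eventually_lt_nhds hi)).mono fun _ => Or.inr
  have hright : ∀ᶠ r in 𝓝[>] (1 : ℝ), 1 < r := self_mem_nhdsWithin
  exact (hright.and (hnear.filter_mono nhdsWithin_le_nhds)).exists

lemma exists_lt_and_mul_le_of_sum_mul_sub_nonneg {ι : Type*} [Fintype ι] {q : ℝ → ℝ}
    (hq : ∀ t, 0 < q t) (hq_anti : Antitone q) {a : ι → ℝ} {s c : ℝ} (hs : 0 ≤ s)
    (hsc : (Fintype.card ι + 1) * s < c) (hsum : 0 ≤ ∑ i, q (a i) * (a i - c))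
    {j : ι} (hj : a j ≤ s) : ∃ i, s < a i ∧ s * q s ≤ a i * q (a i) := by
  classical
  by_contra! hsmall
  have hc : s < c := by nlinarith
  have hterm : ∀ i, q (a i) * (a i - c) ≤ s * q s := by
    intro i
    rcases le_or_gt (a i) s with hi | hi
    · exact (mul_nonpos_of_nonneg_of_nonpos (hq _).le (by linarith)).trans
        (mul_nonneg hs (hq s).le)
    · nlinarith [hsmall i hi, hq (a i)]
  have hj' : q (a j) * (a j - c) ≤ q s * (s - c) :=
    calc q (a j) * (a j - c) ≤ q s * (a j - c) :=
          mul_le_mul_of_nonpos_right (hq_anti hj) (by linarith)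
      _ ≤ q s * (s - c) := mul_le_mul_of_nonneg_left (by linarith) (hq s).le
  have hrest : ∑ i ∈ Finset.univ.erase j, q (a i) * (a i - c) ≤ Fintype.card ι * (s * q s) :=
    calc ∑ i ∈ Finset.univ.erase j, q (a i) * (a i - c)
        ≤ ∑ i ∈ Finset.univ.erase j, s * q s := Finset.sum_le_sum fun i _ => hterm i
      _ ≤ Fintype.card ι * (s * q s) := by
        rw [Finset.sum_const, nsmul_eq_mul]
        gcongr
        · exact mul_nonneg hs (hq s).le
        · exact_mod_cast Finset.card_erase_le
  rw [← Finset.add_sum_erase _ _ (Finset.mem_univ j)] at hsum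
  have hneg := mul_neg_of_pos_of_neg (hq s) (sub_neg.2 hsc)
  linarith

lemma eventually_lt_mul_of_tendsto_inv_mul {f : ℝ → ℝ} {m t : ℝ}
    (hf : Tendsto (fun B => B⁻¹ * f B) atTop (𝓝 m)) (h : m < t) : ∀ᶠ B in atTop, f B < B * t := by
  filter_upwards [hf.eventually (eventually_lt_nhds h), eventually_gt_atTop 0] with B hB hBpos
  rwa [inv_mul_lt_iff₀ hBpos] at hB

lemma eventually_mul_lt_of_tendsto_inv_mul {f : ℝ → ℝ} {m t : ℝ}
    (hf : Tendsto (fun B => B⁻¹ * f B) atTop (𝓝 m)) (h : t < m) : ∀ᶠ B in atTop, B * t < f B := by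
  filter_upwards [hf.eventually (eventually_gt_nhds h), eventually_gt_atTop 0] with B hB hBpos
  rwa [lt_inv_mul_iff₀ hBpos] at hB

section InnerProductSpace

variable {E : Type*} [NormedAddCommGroup E] [InnerProductSpace ℝ E] {ι : Type*} [Fintype ι]
  {ℓ : ℝ → ℝ} {z : ι → E}

lemma real_inner_smul_le_one {u x : E} {c : ℝ} (hu : ‖u‖ ≤ 1) (hc : |c| ≤ 1) (hx : ‖x‖ ≤ 1) :
    ⟪u, c • x⟫ ≤ 1 :=
  calc ⟪u, c • x⟫ ≤ ‖u‖ * (|c| * ‖x‖) := by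
        simpa [norm_smul] using real_inner_le_norm u (c • x)
    _ ≤ 1 := mul_le_one₀ hu (by positivity) (mul_le_one₀ hc (norm_nonneg x) hx)

lemma IsMinOn.sum_deriv_mul_inner_sub_nonneg (hdiff : Differentiable ℝ ℓ) {s : Set E}
    (hs : Convex ℝ s) {w v : E} (hmin : IsMinOn (fun u => ∑ i, ℓ ⟪u, z i⟫) s w) (hw : w ∈ s)
    (hv : v ∈ s) : 0 ≤ ∑ i, deriv ℓ ⟪w, z i⟫ * ⟪v - w, z i⟫ := by
  have hderiv : HasFDerivAt (fun u => ∑ i, ℓ ⟪u, z i⟫)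
      (∑ i, deriv ℓ ⟪w, z i⟫ • innerSL ℝ (z i)) w := by
    refine HasFDerivAt.fun_sum fun i _ => (hdiff ⟪w, z i⟫).hasDerivAt.comp_hasFDerivAt w ?_
    exact (innerSL ℝ (z i)).hasFDerivAt.congr_of_eventuallyEq
      (.of_forall fun u => real_inner_comm _ _)
  simpa [real_inner_comm] using hmin.localize.hasFDerivWithinAt_nonneg
    hderiv.hasFDerivWithinAt (sub_mem_posTangentConeAt_of_segment_subset (hs.segment_subset hw hv))

lemma IsMinOn.sum_neg_deriv_mul_sub_nonneg (hdiff : Differentiable ℝ ℓ)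
    (hderiv : ∀ t, deriv ℓ t ≤ 0) {u : E} (hu : ‖u‖ ≤ 1) {γ : ℝ} (hmargin : ∀ i, γ ≤ ⟪u, z i⟫)
    {B : ℝ} (hB : 0 ≤ B) {w : E} (hw : w ∈ Metric.closedBall 0 B)
    (hmin : IsMinOn (fun v => ∑ i, ℓ ⟪v, z i⟫) (Metric.closedBall 0 B) w) :
    0 ≤ ∑ i, -deriv ℓ ⟪w, z i⟫ * (⟪w, z i⟫ - B * γ) := by
  have hBu : B • u ∈ Metric.closedBall (0 : E) B := by
    simpa [norm_smul, abs_of_nonneg hB] using mul_le_of_le_one_right hB hu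
  refine (hmin.sum_deriv_mul_inner_sub_nonneg hdiff (convex_closedBall 0 B) hw hBu).trans
    (Finset.sum_le_sum fun i _ => ?_)
  rw [inner_sub_left, real_inner_smul_left]
  nlinarith [mul_nonneg (neg_nonneg.2 (hderiv ⟪w, z i⟫))
    (mul_nonneg hB (sub_nonneg.2 (hmargin i)))]

theorem div_card_add_one_le_inner_of_tendsto_regularization_path (hconv : ConvexOn ℝ univ ℓ)
    (hdiff : Differentiable ℝ ℓ) (hanti : StrictAnti ℓ) (hlim0 : Tendsto ℓ atTop (𝓝 0))
    {u : E} {γ : ℝ} (hu : ‖u‖ ≤ 1) (hγ : 0 < γ) (hmargin : ∀ i, γ ≤ ⟪u, z i⟫)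
    {w : ℝ → E} (hw : ∀ᶠ B in atTop, w B ∈ Metric.closedBall 0 B ∧
      IsMinOn (fun v => ∑ i, ℓ ⟪v, z i⟫) (Metric.closedBall 0 B) (w B))
    {ū : E} (hlim : Tendsto (fun B => B⁻¹ • w B) atTop (𝓝 ū)) (j : ι) :
    γ / (Fintype.card ι + 1) ≤ ⟪ū, z j⟫ := by
  set n := Fintype.card ι
  set q := fun t => -deriv ℓ t
  have hq : ∀ t, 0 < q t := neg_deriv_pos_of_convexOn_of_strictAnti hconv hdiff hanti
  have hdir : ∀ i, Tendsto (fun B => B⁻¹ * ⟪w B, z i⟫) atTop (𝓝 ⟪ū, z i⟫) := fun i => by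
    simpa [real_inner_smul_left] using hlim.inner (𝕜 := ℝ) (tendsto_const_nhds (x := z i))
  by_contra! hj
  obtain ⟨t, ⟨ht₀, htγ⟩, r, hr, hgap⟩ :=
    exists_mem_Ioo_forall_lt_or_mul_lt (fun i => ⟪ū, z i⟫) (max_lt hj (by positivity))
  have ht : 0 < t := (le_max_right _ _).trans_lt ht₀
  have hnt : (n + 1) * t < γ := by rwa [lt_div_iff₀ (by positivity), mul_comm] at htγ
  have hsplit : ∀ᶠ B in atTop, ∀ i, ⟪w B, z i⟫ < B * t ∨ r * (B * t) < ⟪w B, z i⟫ := by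
    refine eventually_all.2 fun i => (hgap i).elim
      (fun h => (eventually_lt_mul_of_tendsto_inv_mul (hdir i) h).mono fun _ => Or.inl)
      (fun h => (eventually_mul_lt_of_tendsto_inv_mul (hdir i) h).mono fun B hB => Or.inr ?_)
    rwa [mul_left_comm]
  have hopt : ∀ᶠ B in atTop, 0 ≤ ∑ i, q ⟪w B, z i⟫ * (⟪w B, z i⟫ - B * γ) := by
    filter_upwards [hw, eventually_ge_atTop 0] with B hB hB₀
    exact hB.2.sum_neg_deriv_mul_sub_nonneg hdiff (fun t => (neg_pos.1 (hq t)).le) hu hmargin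
      hB₀ hB.1
  have hstep : ∀ᶠ B in atTop, ∃ s' ≥ r * (B * t), B * t * q (B * t) ≤ s' * q s' := by
    filter_upwards [hsplit, hopt, eventually_lt_mul_of_tendsto_inv_mul (hdir j)
      ((le_max_left _ _).trans_lt ht₀), eventually_gt_atTop 0] with B hB hBopt hBj hBpos
    obtain ⟨i, hi, hle⟩ := exists_lt_and_mul_le_of_sum_mul_sub_nonneg hq
      (antitone_neg_deriv_of_convexOn hconv hdiff) (by positivity)
      (by nlinarith : (n + 1) * (B * t) < B * γ) hBopt hBj.le
    exact ⟨_, ((hB i).resolve_left hi.not_gt).le, hle⟩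
  refine not_tendsto_zero_of_forall_exists_ge_mul hr
    ((eventually_gt_atTop 0).mono fun s hs => mul_pos hs (hq s)) ?_
    (tendsto_mul_neg_deriv_atTop_of_convexOn hconv hdiff hanti.antitone hlim0)
  simpa [div_mul_cancel₀ _ ht.ne'] using (tendsto_id.atTop_div_const ht).eventually hstep

end InnerProductSpace

theorem regularization_direction_margin_lower_bound_general
    {d n : ℕ} (hn : 0 < n)
    (x : Fin n → EuclideanSpace ℝ (Fin d)) (y : Fin n → ℝ)
    (hx : ∀ i, ‖x i‖ ≤ 1) (hy : ∀ i, y i = 1 ∨ y i = -1)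
    (hsep : ∃ (u : EuclideanSpace ℝ (Fin d)) (γ : ℝ), ‖u‖ = 1 ∧ 0 < γ ∧
      ∀ i, γ ≤ y i * ⟪u, x i⟫)
    (ℓ : ℝ → ℝ)
    (hconv : ConvexOn ℝ Set.univ ℓ)
    (hdiff : Differentiable ℝ ℓ)
    (hanti : StrictAnti ℓ)
    (hlim0 : Tendsto ℓ atTop (nhds 0))
    (R : EuclideanSpace ℝ (Fin d) → ℝ)
    (hR : R = fun w => (1 / (n : ℝ)) * ∑ i, ℓ (y i * ⟪w, x i⟫))
    (wbar : ℝ → EuclideanSpace ℝ (Fin d))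
    (hwbar : ∀ B : ℝ, 0 ≤ B → ‖wbar B‖ ≤ B ∧ ∀ v, ‖v‖ ≤ B → R (wbar B) ≤ R v)
    (ubar : EuclideanSpace ℝ (Fin d))
    (hlim : Tendsto (fun B : ℝ => B⁻¹ • wbar B) atTop (nhds ubar))
    (γhat : ℝ)
    (hγhat : IsGreatest
      {g : ℝ | ∃ v : EuclideanSpace ℝ (Fin d), ‖v‖ = 1 ∧ g = ⨅ i, y i * ⟪v, x i⟫}
      γhat) :
    γhat ^ 2 / (2 * n) ≤ (⨅ i, y i * ⟪ubar, x i⟫) ∧ 0 < γhat ^ 2 / (2 * n) := by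
  have : Nonempty (Fin n) := ⟨⟨0, hn⟩⟩
  obtain ⟨⟨ustar, hustar, hγeq⟩, hmax⟩ := hγhat
  have hmargin : ∀ i, γhat ≤ ⟪ustar, y i • x i⟫ := fun i => by
    rw [hγeq, real_inner_smul_right]; exact ciInf_le (Finite.bddBelow_range _) i
  have hγpos : 0 < γhat := by
    obtain ⟨u, γ, hu, hγ, hγu⟩ := hsep
    exact hγ.trans_le ((le_ciInf hγu).trans (hmax ⟨u, hu, rfl⟩))
  have hγle : γhat ≤ 1 := (hmargin ⟨0, hn⟩).trans <| real_inner_smul_le_one hustar.le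
    (by rcases hy ⟨0, hn⟩ with h | h <;> simp [h]) (hx _)
  have hw : ∀ᶠ B in atTop, wbar B ∈ Metric.closedBall 0 B ∧
      IsMinOn (fun v => ∑ i, ℓ ⟪v, y i • x i⟫) (Metric.closedBall 0 B) (wbar B) := by
    filter_upwards [eventually_ge_atTop 0] with B hB
    refine ⟨mem_closedBall_zero_iff.2 (hwbar B hB).1, fun v hv => ?_⟩
    have h := (hwbar B hB).2 v (mem_closedBall_zero_iff.1 hv)
    simp only [hR, real_inner_smul_right] at h ⊢
    exact le_of_mul_le_mul_left h (by positivity)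
  have hbound := div_card_add_one_le_inner_of_tendsto_regularization_path hconv hdiff hanti hlim0
    hustar.le hγpos hmargin hw hlim
  simp only [Fintype.card_fin, real_inner_smul_right] at hbound
  have hn' : (1 : ℝ) ≤ n := by exact_mod_cast hn
  refine ⟨le_ciInf fun i => le_trans ?_ (hbound i), by positivity⟩
  rw [div_le_div_iff₀ (by positivity) (by positivity)]
  nlinarith [mul_le_mul_of_nonneg_left hγle hγpos.le]

/-- For linearly separable data, if the regularization path
converges in direction to a unit vector `ū`, then the margin
`γ̄ = minᵢ yᵢ⟨ū, xᵢ⟩` satisfies `γ̄ ≥ γ̂²/(2n) > 0`, where `γ̂` is the maximum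
margin. -/
theorem regularization_direction_margin_lower_bound
    {d n : ℕ} (hn : 0 < n)
    (x : Fin n → EuclideanSpace ℝ (Fin d)) (y : Fin n → ℝ)
    (hx : ∀ i, ‖x i‖ ≤ 1) (hy : ∀ i, y i = 1 ∨ y i = -1)
    (hsep : ∃ (u : EuclideanSpace ℝ (Fin d)) (γ : ℝ), ‖u‖ = 1 ∧ 0 < γ ∧
      ∀ i, γ ≤ y i * ⟪u, x i⟫)
    (ℓ : ℝ → ℝ)
    (hconv : ConvexOn ℝ Set.univ ℓ)
    (hdiff : Differentiable ℝ ℓ)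
    (hanti : StrictAnti ℓ)
    (hlim0 : Tendsto ℓ atTop (nhds 0))
    (R : EuclideanSpace ℝ (Fin d) → ℝ)
    (hR : R = fun w => (1 / (n : ℝ)) * ∑ i, ℓ (y i * ⟪w, x i⟫))
    (wbar : ℝ → EuclideanSpace ℝ (Fin d))
    (hwbar : ∀ B : ℝ, 0 ≤ B → ‖wbar B‖ ≤ B ∧ ∀ v, ‖v‖ ≤ B → R (wbar B) ≤ R v)
    (ubar : EuclideanSpace ℝ (Fin d)) (hubar : ‖ubar‖ = 1)
    (hlim : Tendsto (fun B : ℝ => B⁻¹ • wbar B) atTop (nhds ubar))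
    (γhat : ℝ)
    (hγhat : IsGreatest
      {g : ℝ | ∃ v : EuclideanSpace ℝ (Fin d), ‖v‖ = 1 ∧ g = ⨅ i, y i * ⟪v, x i⟫}
      γhat) :
    γhat ^ 2 / (2 * n) ≤ (⨅ i, y i * ⟪ubar, x i⟫) ∧ 0 < γhat ^ 2 / (2 * n) :=
  regularization_direction_margin_lower_bound_general hn x y hx hy hsep ℓ hconv hdiff hanti hlim0 R
    hR wbar hwbar ubar hlim γhat hγhat
end

section
/- Suppose the training data is linearly separable and the loss ℓ has an exponential tail: lim_{z→∞} ℓ(z)/(a·exp(−bz)) = 1 for some a, b > 0. Then lim_{B→∞} w̄(B)/B = û, where û is the unique maximum-margin solution, i.e. the unique unit vector maximizing min_{1≤i≤n} y_i⟨u, x_i⟩. -/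
/-!
Write `γ` for the optimal margin, attained at `û`. Comparing `w̄(B)` with the competitor `B û`,
the worst-classified point alone gives `ℓ(margin w̄(B)) ≤ n ℓ(γ B)`, and with an exponential tail
this means `margin w̄(B) ≥ γ B - log (4n) / b`. So `w̄(B) / B` lies in the unit ball and has margin
at least `γ - O(1/B)`. The margin is concave and positively homogeneous, so any such vector is
`O(1/√B)`-close to `û`: its sum with `û` has margin nearly `2γ`, hence norm nearly `2`, and the
parallelogram law does the rest. With `O(1/B)` replaced by `0` this also gives uniqueness of `û`.
-/

open Filter RealInnerProductSpace Topology

section Margin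

variable {E : Type*} [NormedAddCommGroup E] [InnerProductSpace ℝ E] {ι : Type*}

noncomputable def margin (y : ι → ℝ) (x : ι → E) (w : E) : ℝ := ⨅ i, y i * ⟪w, x i⟫

variable (y : ι → ℝ) (x : ι → E)

theorem margin_le [Finite ι] (w : E) (i : ι) : margin y x w ≤ y i * ⟪w, x i⟫ :=
  ciInf_le (Set.finite_range _).bddBelow i

theorem le_margin [Nonempty ι] {w : E} {c : ℝ} (h : ∀ i, c ≤ y i * ⟪w, x i⟫) :
    c ≤ margin y x w :=
  le_ciInf h

theorem exists_margin_eq [Finite ι] [Nonempty ι] (w : E) :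
    ∃ i, margin y x w = y i * ⟪w, x i⟫ := by
  obtain ⟨i, hi⟩ := Finite.exists_min (fun i => y i * ⟪w, x i⟫)
  exact ⟨i, le_antisymm (margin_le y x w i) (le_margin y x hi)⟩

theorem margin_smul {c : ℝ} (hc : 0 ≤ c) (w : E) : margin y x (c • w) = c * margin y x w := by
  simp only [margin, Real.mul_iInf_of_nonneg hc, real_inner_smul_left, mul_left_comm]

theorem margin_zero : margin y x (0 : E) = 0 := by
  simpa using margin_smul y x le_rfl (0 : E)

theorem margin_add_le [Finite ι] [Nonempty ι] (v w : E) :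
    margin y x v + margin y x w ≤ margin y x (v + w) :=
  le_margin y x fun i => by
    rw [inner_add_left, mul_add]
    exact add_le_add (margin_le y x v i) (margin_le y x w i)

variable {y x} {u : E} (hmax : ∀ v : E, ‖v‖ = 1 → margin y x v ≤ margin y x u)
include hmax

theorem margin_le_mul_norm (w : E) : margin y x w ≤ margin y x u * ‖w‖ := by
  rcases eq_or_ne w 0 with rfl | hw
  · simp [margin_zero]
  have hnw : 0 < ‖w‖ := norm_pos_iff.2 hw
  have hunit : ‖‖w‖⁻¹ • w‖ = 1 := by
    rw [norm_smul, norm_inv, norm_norm, inv_mul_cancel₀ hnw.ne']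
  calc margin y x w = ‖w‖ * margin y x (‖w‖⁻¹ • w) := by
        rw [← margin_smul y x hnw.le, smul_smul, mul_inv_cancel₀ hnw.ne', one_smul]
    _ ≤ ‖w‖ * margin y x u := by gcongr; exact hmax _ hunit
    _ = margin y x u * ‖w‖ := mul_comm _ _

theorem norm_sub_sq_le_of_margin_ge [Finite ι] [Nonempty ι] (hu : ‖u‖ = 1)
    (hγ : 0 < margin y x u) {v : E} (hv : ‖v‖ ≤ 1) {ε : ℝ}
    (hmv : margin y x u - ε ≤ margin y x v) :
    ‖v - u‖ ^ 2 ≤ 4 * ε / margin y x u := by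
  set γ := margin y x u
  have hsum : 2 * γ - ε ≤ γ * ‖v + u‖ := by
    linarith [margin_add_le y x v u, margin_le_mul_norm hmax (v + u)]
  have hpar : ‖v - u‖ ^ 2 + ‖v + u‖ ^ 2 = 2 * ‖v‖ ^ 2 + 2 * ‖u‖ ^ 2 := by
    rw [norm_add_sq_real, norm_sub_sq_real]; ring
  have hsum_le : ‖v + u‖ ≤ 2 := by linarith [norm_add_le v u]
  have hε : 0 ≤ ε := by nlinarith [margin_le_mul_norm hmax v]
  have hv_sq : ‖v‖ ^ 2 ≤ 1 := by nlinarith [norm_nonneg v]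
  rw [hu] at hpar
  rw [le_div_iff₀ hγ]
  calc ‖v - u‖ ^ 2 * γ ≤ γ * (2 - ‖v + u‖) * (2 + ‖v + u‖) := by nlinarith
    _ ≤ ε * (2 + ‖v + u‖) := by gcongr; linarith
    _ ≤ 4 * ε := by nlinarith

theorem eq_of_margin_eq [Finite ι] [Nonempty ι] (hu : ‖u‖ = 1) (hγ : 0 < margin y x u) {v : E}
    (hv : ‖v‖ = 1) (hmv : margin y x v = margin y x u) : v = u := by
  have h := norm_sub_sq_le_of_margin_ge hmax hu hγ hv.le (ε := 0) (by rw [hmv, sub_zero])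
  simpa [sub_eq_zero] using h

theorem tendsto_of_margin_ge [Finite ι] [Nonempty ι] (hu : ‖u‖ = 1) (hγ : 0 < margin y x u)
    {α : Type*} {l : Filter α} {v : α → E} {ε : α → ℝ} (hv : ∀ᶠ t in l, ‖v t‖ ≤ 1)
    (hε : Tendsto ε l (𝓝 0)) (hmv : ∀ᶠ t in l, margin y x u - ε t ≤ margin y x (v t)) :
    Tendsto v l (𝓝 u) := by
  have hsq : Tendsto (fun t => ‖v t - u‖ ^ 2) l (𝓝 0) := by
    refine squeeze_zero' (.of_forall fun _ => sq_nonneg _) ?_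
      (by simpa using (hε.const_mul 4).div_const (margin y x u))
    filter_upwards [hv, hmv] with t hvt hmvt
    exact norm_sub_sq_le_of_margin_ge hmax hu hγ hvt hmvt
  rw [tendsto_iff_norm_sub_tendsto_zero]
  simpa [Real.sqrt_sq (norm_nonneg _)] using hsq.sqrt

end Margin

section Loss

variable {ℓ : ℝ → ℝ}

theorem StrictAnti.pos_of_tendsto_zero (hanti : StrictAnti ℓ) (hlim : Tendsto ℓ atTop (𝓝 0))
    (z : ℝ) : 0 < ℓ z :=
  (hanti.antitone.le_of_tendsto hlim (z + 1)).trans_lt (hanti (lt_add_one z))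

theorem loss_margin_le_card_mul_of_sum_le {E : Type*} [NormedAddCommGroup E]
    [InnerProductSpace ℝ E] {ι : Type*} [Fintype ι] [Nonempty ι] {y : ι → ℝ} {x : ι → E}
    (hanti : Antitone ℓ) (hpos : ∀ z, 0 ≤ ℓ z) {w w' : E}
    (hsum : ∑ i, ℓ (y i * ⟪w, x i⟫) ≤ ∑ i, ℓ (y i * ⟪w', x i⟫)) :
    ℓ (margin y x w) ≤ Fintype.card ι * ℓ (margin y x w') := by
  obtain ⟨i, hi⟩ := exists_margin_eq y x w
  calc ℓ (margin y x w) ≤ ∑ i, ℓ (y i * ⟪w, x i⟫) := by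
        rw [hi]
        exact Finset.single_le_sum (f := fun j => ℓ (y j * ⟪w, x j⟫)) (fun j _ => hpos _)
          (Finset.mem_univ i)
    _ ≤ ∑ i, ℓ (y i * ⟪w', x i⟫) := hsum
    _ ≤ ∑ _i : ι, ℓ (margin y x w') := Finset.sum_le_sum fun j _ => hanti (margin_le y x w' j)
    _ = Fintype.card ι * ℓ (margin y x w') := by simp

theorem tendsto_atTop_of_loss_le (hanti : StrictAnti ℓ) (hpos : ∀ z, 0 < ℓ z) {α : Type*}
    {l : Filter α} {m h : α → ℝ} (hh : Tendsto h l (𝓝 0)) (hle : ∀ᶠ t in l, ℓ (m t) ≤ h t) :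
    Tendsto m l atTop :=
  tendsto_atTop.2 fun C => by
    filter_upwards [hle, hh.eventually_lt_const (hpos C)] with t hle hlt
    exact (hanti.lt_iff_gt.1 (hle.trans_lt hlt)).le

theorem eventually_exp_tail_bounds {a b : ℝ} (ha : 0 < a)
    (htail : Tendsto (fun z => ℓ z / (a * Real.exp (-b * z))) atTop (𝓝 1)) :
    ∀ᶠ z in atTop, a / 2 * Real.exp (-b * z) ≤ ℓ z ∧ ℓ z ≤ 2 * a * Real.exp (-b * z) := by
  filter_upwards [htail.eventually (Ioo_mem_nhds one_half_lt_one one_lt_two)] with z ⟨hlo, hhi⟩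
  have he : 0 < a * Real.exp (-b * z) := by positivity
  rw [lt_div_iff₀ he] at hlo
  rw [div_lt_iff₀ he] at hhi
  constructor <;> linarith

theorem sub_log_div_le_of_exp_le {a b N m g : ℝ} (ha : 0 < a) (hb : 0 < b) (hN : 0 < N)
    (h : a / 2 * Real.exp (-b * m) ≤ N * (2 * a * Real.exp (-b * g))) :
    g - Real.log (4 * N) / b ≤ m := by
  have hexp : Real.exp (-b * m) ≤ Real.exp (Real.log (4 * N) + -b * g) := by
    rw [Real.exp_add, Real.exp_log (by positivity)]
    nlinarith
  have := Real.exp_le_exp.1 hexp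
  rw [sub_le_comm, le_div_iff₀ hb]
  linarith

theorem eventually_sub_le_of_loss_le (hanti : StrictAnti ℓ) (hlim : Tendsto ℓ atTop (𝓝 0))
    {a b : ℝ} (ha : 0 < a) (hb : 0 < b)
    (htail : Tendsto (fun z => ℓ z / (a * Real.exp (-b * z))) atTop (𝓝 1))
    {α : Type*} {l : Filter α} {m g : α → ℝ} {N : ℝ} (hN : 0 < N) (hg : Tendsto g l atTop)
    (hle : ∀ᶠ t in l, ℓ (m t) ≤ N * ℓ (g t)) :
    ∀ᶠ t in l, g t - Real.log (4 * N) / b ≤ m t := by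
  have hm : Tendsto m l atTop := tendsto_atTop_of_loss_le hanti (hanti.pos_of_tendsto_zero hlim)
    (by simpa using (hlim.comp hg).const_mul N) hle
  have htail' := eventually_exp_tail_bounds ha htail
  filter_upwards [hle, hm.eventually htail', hg.eventually htail'] with t hle hmt hgt
  exact sub_log_div_le_of_exp_le ha hb hN <|
    hmt.1.trans (hle.trans (mul_le_mul_of_nonneg_left hgt.2 hN.le))

end Loss

theorem exponential_tail_converges_to_max_margin_general
    {d n : ℕ} (hn : 0 < n)
    (x : Fin n → EuclideanSpace ℝ (Fin d)) (y : Fin n → ℝ)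
    (hsep : ∃ (u : EuclideanSpace ℝ (Fin d)) (γ : ℝ), ‖u‖ = 1 ∧ 0 < γ ∧
      ∀ i, γ ≤ y i * ⟪u, x i⟫)
    (ℓ : ℝ → ℝ)
    (hanti : StrictAnti ℓ)
    (hlim0 : Tendsto ℓ atTop (nhds 0))
    (a b : ℝ) (ha : 0 < a) (hb : 0 < b)
    (htail : Tendsto (fun z : ℝ => ℓ z / (a * Real.exp (-b * z))) atTop (nhds 1))
    (R : EuclideanSpace ℝ (Fin d) → ℝ)
    (hR : R = fun w => (1 / (n : ℝ)) * ∑ i, ℓ (y i * ⟪w, x i⟫))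
    (wbar : ℝ → EuclideanSpace ℝ (Fin d))
    (hwbar : ∀ B : ℝ, 0 ≤ B → ‖wbar B‖ ≤ B ∧ ∀ v, ‖v‖ ≤ B → R (wbar B) ≤ R v)
    (uhat : EuclideanSpace ℝ (Fin d)) (huhat : ‖uhat‖ = 1)
    (hmax : ∀ v : EuclideanSpace ℝ (Fin d), ‖v‖ = 1 →
      (⨅ i, y i * ⟪v, x i⟫) ≤ ⨅ i, y i * ⟪uhat, x i⟫) :
    Tendsto (fun B : ℝ => B⁻¹ • wbar B) atTop (nhds uhat) ∧
    (∀ v : EuclideanSpace ℝ (Fin d), ‖v‖ = 1 →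
      (⨅ i, y i * ⟪v, x i⟫) = (⨅ i, y i * ⟪uhat, x i⟫) → v = uhat) := by
  have : Nonempty (Fin n) := ⟨⟨0, hn⟩⟩
  replace hmax : ∀ v, ‖v‖ = 1 → margin y x v ≤ margin y x uhat := hmax
  have hγ : 0 < margin y x uhat := by
    obtain ⟨u, γ, hu, hγ, hsep⟩ := hsep
    exact hγ.trans_le ((le_margin y x hsep).trans (hmax u hu))
  refine ⟨?_, fun v hv hvu => eq_of_margin_eq hmax huhat hγ hv hvu⟩
  have hcomp : ∀ B : ℝ, 0 ≤ B → ℓ (margin y x (wbar B)) ≤ n * ℓ (B * margin y x uhat) := by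
    intro B hB
    have hR_le := (hwbar B hB).2 (B • uhat) (by simp [norm_smul, huhat, abs_of_nonneg hB])
    simp only [hR] at hR_le
    rw [← margin_smul y x hB]
    simpa using loss_margin_le_card_mul_of_sum_le hanti.antitone
      (fun z => (hanti.pos_of_tendsto_zero hlim0 z).le)
      (le_of_mul_le_mul_left hR_le (by positivity))
  have hmargin := eventually_sub_le_of_loss_le hanti hlim0 ha hb htail (by positivity : (0 : ℝ) < n)
    (tendsto_id.atTop_mul_const hγ) ((eventually_ge_atTop 0).mono hcomp)
  refine tendsto_of_margin_ge hmax huhat hγ (ε := fun B => Real.log (4 * n) / b / B) ?_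
    (tendsto_const_nhds.div_atTop tendsto_id) ?_
  · filter_upwards [eventually_gt_atTop 0] with B hB
    rw [norm_smul, norm_inv, Real.norm_of_nonneg hB.le, inv_mul_le_one₀ hB]
    exact (hwbar B hB.le).1
  · filter_upwards [hmargin, eventually_gt_atTop 0] with B hB_margin hB
    rw [margin_smul y x (inv_nonneg.2 hB.le), le_inv_mul_iff₀ hB, mul_sub, mul_div_cancel₀ _ hB.ne']
    simpa [mul_comm] using hB_margin

/-- For linearly separable data and a loss with exponential
tail `ℓ(z) ∼ a e^{−bz}`, the regularization path converges in direction to the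
unique maximum-margin unit vector `û`. -/
theorem exponential_tail_converges_to_max_margin
    {d n : ℕ} (hn : 0 < n)
    (x : Fin n → EuclideanSpace ℝ (Fin d)) (y : Fin n → ℝ)
    (hx : ∀ i, ‖x i‖ ≤ 1) (hy : ∀ i, y i = 1 ∨ y i = -1)
    (hsep : ∃ (u : EuclideanSpace ℝ (Fin d)) (γ : ℝ), ‖u‖ = 1 ∧ 0 < γ ∧
      ∀ i, γ ≤ y i * ⟪u, x i⟫)
    (ℓ : ℝ → ℝ)
    (hconv : ConvexOn ℝ Set.univ ℓ)
    (hdiff : Differentiable ℝ ℓ)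
    (hanti : StrictAnti ℓ)
    (hlim0 : Tendsto ℓ atTop (nhds 0))
    (a b : ℝ) (ha : 0 < a) (hb : 0 < b)
    (htail : Tendsto (fun z : ℝ => ℓ z / (a * Real.exp (-b * z))) atTop (nhds 1))
    (R : EuclideanSpace ℝ (Fin d) → ℝ)
    (hR : R = fun w => (1 / (n : ℝ)) * ∑ i, ℓ (y i * ⟪w, x i⟫))
    (wbar : ℝ → EuclideanSpace ℝ (Fin d))
    (hwbar : ∀ B : ℝ, 0 ≤ B → ‖wbar B‖ ≤ B ∧ ∀ v, ‖v‖ ≤ B → R (wbar B) ≤ R v)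
    (uhat : EuclideanSpace ℝ (Fin d)) (huhat : ‖uhat‖ = 1)
    (hmax : ∀ v : EuclideanSpace ℝ (Fin d), ‖v‖ = 1 →
      (⨅ i, y i * ⟪v, x i⟫) ≤ ⨅ i, y i * ⟪uhat, x i⟫) :
    Tendsto (fun B : ℝ => B⁻¹ • wbar B) atTop (nhds uhat) ∧
    (∀ v : EuclideanSpace ℝ (Fin d), ‖v‖ = 1 →
      (⨅ i, y i * ⟪v, x i⟫) = (⨅ i, y i * ⟪uhat, x i⟫) → v = uhat) :=
  exponential_tail_converges_to_max_margin_general hn x y hsep ℓ hanti hlim0 a b ha hb htail R hR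
    wbar hwbar uhat huhat hmax
end

section
/- Suppose the training data is linearly separable and the loss ℓ has a polynomial tail: lim_{z→∞} −ℓ'(z)/(a z^{−b}) = 1 for some a, b > 0. Then the limit lim_{B→∞} w̄(B)/B exists. -/
/-!
Convexity and `ℓ → 0` force `z ℓ'(z) → 0`, so the tail condition forces `b > 1`, and l'Hôpital's
rule gives `ℓ(z) ∼ C z^p` with `p = 1 - b < 0` and `C = a / (b - 1)`. With `z_i = y_i x_i`, the
rescaled loss `B^{-p} ∑ ℓ(B ⟪u, z_i⟫)` therefore converges to `C ∑ ⟪u, z_i⟫^p`, uniformly where the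
margins stay bounded away from `0`. This potential has a unique minimiser `w` on the unit ball:
strict convexity of `t ↦ t^p` rules out a second minimiser with different margins, and strict
convexity of the ball one with the same margins, because the potential decreases under scaling up,
so minimisers lie on the sphere. As `w̄(B)/B` minimises the rescaled loss on the unit ball, the
potential along it tends to its minimum, and compactness of the ball yields `w̄(B)/B → w`.
-/

open Filter Topology Set Metric RealInnerProductSpace

lemma strictConvexOn_rpow_of_neg {p : ℝ} (hp : p < 0) :
    StrictConvexOn ℝ (Ioi 0) fun t : ℝ => t ^ p := by
  refine strictConvexOn_of_deriv2_pos (convex_Ioi 0) (fun t ht => ?_) fun t ht => ?_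
  · exact (continuousAt_id.rpow_const (Or.inl (ne_of_gt ht))).continuousWithinAt
  · rw [interior_Ioi] at ht
    have hpoch : (descPochhammer ℝ 2).eval p = p * (p - 1) := by
      simp [descPochhammer_succ_right]
    rw [Real.iter_deriv_rpow_const, hpoch]
    exact mul_pos (mul_pos_of_neg_of_neg hp (by linarith)) (Real.rpow_pos_of_pos ht _)

section PolynomialTail

variable {ℓ : ℝ → ℝ}

lemma ConvexOn.tendsto_mul_deriv_atTop (hconv : ConvexOn ℝ univ ℓ) (hdiff : Differentiable ℝ ℓ)
    (hanti : Antitone ℓ) (hlim : Tendsto ℓ atTop (𝓝 0)) :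
    Tendsto (fun z => z * deriv ℓ z) atTop (𝓝 0) := by
  have hsecant : Tendsto (fun z => 2 * (ℓ z - ℓ (z / 2))) atTop (𝓝 0) := by
    simpa using (hlim.sub (hlim.comp (tendsto_id.atTop_div_const two_pos))).const_mul 2
  refine tendsto_of_tendsto_of_tendsto_of_le_of_le' hsecant tendsto_const_nhds ?_ ?_
  · filter_upwards [eventually_gt_atTop 0] with z hz
    have h := hconv.slope_le_deriv (mem_univ (z / 2)) (mem_univ z) (by linarith) (hdiff z)
    rw [slope_def_field, div_le_iff₀ (by linarith)] at h
    linarith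
  · filter_upwards [eventually_ge_atTop 0] with z hz
    exact mul_nonpos_of_nonneg_of_nonpos hz hanti.deriv_nonpos

lemma one_lt_of_tendsto_neg_deriv_div_rpow {a b : ℝ} (ha : 0 < a)
    (hderiv : Tendsto (fun z => z * deriv ℓ z) atTop (𝓝 0))
    (htail : Tendsto (fun z => -deriv ℓ z / (a * z ^ (-b))) atTop (𝓝 1)) : 1 < b := by
  by_contra! hb
  refine one_ne_zero (tendsto_nhds_unique htail (squeeze_zero_norm' ?_
    (by simpa using hderiv.norm.div_const a)))
  filter_upwards [eventually_ge_atTop 1] with z hz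
  have hz0 : 0 < z := by linarith
  have hzb : z⁻¹ ≤ z ^ (-b) := by
    rw [← Real.rpow_neg_one]
    exact Real.rpow_le_rpow_of_exponent_le hz (by linarith)
  have hden : 0 < a * z ^ (-b) := by positivity
  rw [norm_div, norm_neg, Real.norm_of_nonneg hden.le, abs_of_pos hz0,
    Real.norm_eq_abs, div_le_div_iff₀ (by positivity) ha]
  calc |deriv ℓ z| * a = z * |deriv ℓ z| * (a * z⁻¹) := by field_simp
    _ ≤ z * |deriv ℓ z| * (a * z ^ (-b)) := by gcongr

lemma tendsto_div_rpow_of_tendsto_neg_deriv_div_rpow (hdiff : Differentiable ℝ ℓ)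
    (hlim : Tendsto ℓ atTop (𝓝 0)) {a b : ℝ} (ha : a ≠ 0) (hb : 1 < b)
    (htail : Tendsto (fun z => -deriv ℓ z / (a * z ^ (-b))) atTop (𝓝 1)) :
    Tendsto (fun z => ℓ z / z ^ (1 - b)) atTop (𝓝 (a / (b - 1))) := by
  have hderiv : ∀ z : ℝ, deriv (fun z : ℝ => z ^ (1 - b)) z = (1 - b) * z ^ (-b) := fun z => by
    rw [Real.deriv_rpow_const, sub_sub_cancel_left]
  refine deriv.lhopital_zero_atTop (.of_forall hdiff) ?_ hlim ?_ ?_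
  · filter_upwards [eventually_gt_atTop 0] with z hz
    rw [hderiv]
    exact mul_ne_zero (sub_neg.2 hb).ne (Real.rpow_pos_of_pos hz _).ne'
  · simpa only [neg_sub] using tendsto_rpow_neg_atTop (sub_pos.2 hb)
  · have h := htail.const_mul (a / (b - 1))
    rw [mul_one] at h
    refine h.congr' ?_
    filter_upwards [eventually_gt_atTop 0] with z hz
    have hzb := (Real.rpow_pos_of_pos hz (-b)).ne'
    have hb₁ := (sub_pos.2 hb).ne'
    have hb₂ := (sub_neg.2 hb).ne
    rw [hderiv]
    field_simp
    ring

end PolynomialTail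

section MarginPotential

variable {E ι : Type*} [NormedAddCommGroup E] [InnerProductSpace ℝ E] [Fintype ι]

/-- The margins are truncated below at `θ`, which keeps the potential continuous on all of `E`. -/
noncomputable def marginPotential (z : ι → E) (p θ : ℝ) (u : E) : ℝ := ∑ i, max ⟪u, z i⟫ θ ^ p

variable {z : ι → E} {p θ : ℝ} {u v w : E}

lemma continuous_marginPotential (hθ : 0 < θ) : Continuous (marginPotential z p θ) :=
  continuous_finsetSum _ fun _ _ =>
    ((continuous_id.inner continuous_const).max continuous_const).rpow_const
      fun _ => Or.inl (ne_of_gt (hθ.trans_le (le_max_right _ _)))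

lemma marginPotential_eq_sum_rpow (h : ∀ i, θ ≤ ⟪u, z i⟫) :
    marginPotential z p θ u = ∑ i, ⟪u, z i⟫ ^ p :=
  Finset.sum_congr rfl fun i _ => by rw [max_eq_left (h i)]

lemma lt_inner_of_marginPotential_lt (hθ : 0 < θ) (h : marginPotential z p θ u < θ ^ p) (i : ι) :
    θ < ⟪u, z i⟫ := by
  by_contra! hi
  refine h.not_ge ?_
  calc θ ^ p = max ⟪u, z i⟫ θ ^ p := by rw [max_eq_right hi]
    _ ≤ marginPotential z p θ u :=
      Finset.single_le_sum (f := fun i => max ⟪u, z i⟫ θ ^ p)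
        (fun j _ => Real.rpow_nonneg (hθ.le.trans (le_max_right _ _)) _) (Finset.mem_univ i)

lemma marginPotential_combo_lt (hp : p < 0) (hθ : 0 < θ) (hu : ∀ i, θ ≤ ⟪u, z i⟫)
    (hv : ∀ i, θ ≤ ⟪v, z i⟫) (hne : ∃ i, ⟪u, z i⟫ ≠ ⟪v, z i⟫) {a b : ℝ} (ha : 0 < a) (hb : 0 < b)
    (hab : a + b = 1) :
    marginPotential z p θ (a • u + b • v) <
      a * marginPotential z p θ u + b * marginPotential z p θ v := by
  have hcombo : ∀ i, ⟪a • u + b • v, z i⟫ = a * ⟪u, z i⟫ + b * ⟪v, z i⟫ := fun i => by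
    rw [inner_add_left, real_inner_smul_left, real_inner_smul_left]
  have hw : ∀ i, θ ≤ ⟪a • u + b • v, z i⟫ := fun i => by
    rw [hcombo]
    nlinarith [hu i, hv i]
  obtain ⟨i₀, hi₀⟩ := hne
  have hconv := strictConvexOn_rpow_of_neg hp
  rw [marginPotential_eq_sum_rpow hw, marginPotential_eq_sum_rpow hu,
    marginPotential_eq_sum_rpow hv, Finset.mul_sum, Finset.mul_sum, ← Finset.sum_add_distrib]
  refine Finset.sum_lt_sum (fun i _ => ?_) ⟨i₀, Finset.mem_univ _, ?_⟩ <;> rw [hcombo]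
  · exact hconv.convexOn.2 (hθ.trans_le (hu i)) (hθ.trans_le (hv i)) ha.le hb.le hab
  · exact hconv.2 (hθ.trans_le (hu i₀)) (hθ.trans_le (hv i₀)) hi₀ ha hb hab

lemma exists_marginPotential_lt_of_norm_lt_one [Nonempty ι] (hp : p < 0) (hθ : 0 < θ)
    (hv : ‖v‖ < 1) (hvθ : ∀ i, θ ≤ ⟪v, z i⟫) :
    ∃ w, ‖w‖ ≤ 1 ∧ marginPotential z p θ w < marginPotential z p θ v := by
  obtain ⟨i₀⟩ := ‹Nonempty ι›
  have hv0 : 0 < ‖v‖ := norm_pos_iff.2 fun h => by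
    have := hvθ i₀
    rw [h, inner_zero_left] at this
    linarith
  refine ⟨‖v‖⁻¹ • v, by rw [norm_smul, norm_inv, norm_norm, inv_mul_cancel₀ hv0.ne'], ?_⟩
  have hlt : ∀ i, ⟪v, z i⟫ < ⟪‖v‖⁻¹ • v, z i⟫ := fun i => by
    rw [real_inner_smul_left]
    exact lt_mul_left (hθ.trans_le (hvθ i)) ((one_lt_inv₀ hv0).2 hv)
  rw [marginPotential_eq_sum_rpow fun i => (hvθ i).trans (hlt i).le,
    marginPotential_eq_sum_rpow hvθ]
  exact Finset.sum_lt_sum_of_nonempty Finset.univ_nonempty fun i _ =>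
    Real.rpow_lt_rpow_of_neg (hθ.trans_le (hvθ i)) (hlt i) hp

lemma eq_of_isMinOn_marginPotential [Nonempty ι] (hp : p < 0) (hθ : 0 < θ)
    (hw : w ∈ closedBall (0 : E) 1) (hmin : IsMinOn (marginPotential z p θ) (closedBall 0 1) w)
    (hwθ : marginPotential z p θ w < θ ^ p) (hu : u ∈ closedBall (0 : E) 1)
    (huw : marginPotential z p θ u ≤ marginPotential z p θ w) : u = w := by
  have hθu := fun i => (lt_inner_of_marginPotential_lt hθ (huw.trans_lt hwθ) i).le
  have hθw := fun i => (lt_inner_of_marginPotential_lt hθ hwθ i).le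
  by_contra hne
  set v := (1 / 2 : ℝ) • u + (1 / 2 : ℝ) • w
  have hv : v ∈ ball (0 : E) 1 :=
    combo_mem_ball_of_ne hu hw hne one_half_pos one_half_pos (add_halves 1)
  have hGw : marginPotential z p θ w ≤ marginPotential z p θ v := hmin (ball_subset_closedBall hv)
  by_cases hmarg : ∀ i, ⟪u, z i⟫ = ⟪w, z i⟫
  · have hvw : ∀ i, ⟪v, z i⟫ = ⟪w, z i⟫ := fun i => by
      rw [inner_add_left, real_inner_smul_left, real_inner_smul_left, hmarg]
      ring
    have hGv : marginPotential z p θ v = marginPotential z p θ w := by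
      simp only [marginPotential, hvw]
    obtain ⟨w', hw', hlt⟩ := exists_marginPotential_lt_of_norm_lt_one hp hθ
      (mem_ball_zero_iff.1 hv) fun i => hvw i ▸ hθw i
    exact (hmin (mem_closedBall_zero_iff.2 hw')).not_gt (hGv ▸ hlt)
  · have := marginPotential_combo_lt hp hθ hθu hθw (not_forall.1 hmarg) one_half_pos one_half_pos
      (add_halves 1)
    linarith

lemma exists_pos_marginPotential_lt_rpow (hp : p < 0) (hu : ∀ i, 0 < ⟪u, z i⟫) :
    ∃ θ > 0, marginPotential z p θ u < θ ^ p := by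
  have hsmall : ∀ᶠ θ in 𝓝[>] 0, 0 < θ ∧ (∀ i, θ ≤ ⟪u, z i⟫) ∧ ∑ i, ⟪u, z i⟫ ^ p < θ ^ p :=
    eventually_mem_nhdsWithin.and <|
      (eventually_all.2 fun i => eventually_nhdsWithin_of_eventually_nhds
        (eventually_le_nhds (hu i))).and <|
      (tendsto_rpow_neg_nhdsGT_zero hp).eventually_gt_atTop _
  obtain ⟨θ, hθ, hθu, hlt⟩ := hsmall.exists
  exact ⟨θ, hθ, by rwa [marginPotential_eq_sum_rpow hθu]⟩

theorem exists_strict_minimizer_marginPotential [FiniteDimensional ℝ E] [Nonempty ι] (hp : p < 0)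
    (hsep : ∃ u ∈ closedBall (0 : E) 1, ∀ i, 0 < ⟪u, z i⟫) :
    ∃ θ > 0, ∃ w ∈ closedBall (0 : E) 1, (∀ i, θ ≤ ⟪w, z i⟫) ∧
      ∀ u ∈ closedBall (0 : E) 1, u ≠ w → marginPotential z p θ w < marginPotential z p θ u := by
  obtain ⟨u₀, hu₀, hmarg⟩ := hsep
  obtain ⟨θ, hθ, hθu₀⟩ := exists_pos_marginPotential_lt_rpow hp hmarg
  obtain ⟨w, hw, hmin⟩ := (isCompact_closedBall (0 : E) 1).exists_isMinOn ⟨u₀, hu₀⟩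
    (continuous_marginPotential (z := z) (p := p) hθ).continuousOn
  have hwθ : marginPotential z p θ w < θ ^ p := (hmin hu₀).trans_lt hθu₀
  refine ⟨θ, hθ, w, hw, fun i => (lt_inner_of_marginPotential_lt hθ hwθ i).le,
    fun u hu hne => lt_of_not_ge fun h => hne ?_⟩
  exact eq_of_isMinOn_marginPotential hp hθ hw hmin hwθ hu h

end MarginPotential

lemma IsCompact.tendsto_nhds_of_tendsto_of_strict_minimizer {X α : Type*} [TopologicalSpace X]
    {K : Set X} {f : X → ℝ} {x₀ : X} {l : Filter α} {u : α → X} (hK : IsCompact K)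
    (hf : ContinuousOn f K) (hmin : ∀ x ∈ K, x ≠ x₀ → f x₀ < f x) (hu : ∀ᶠ a in l, u a ∈ K)
    (hfu : Tendsto (fun a => f (u a)) l (𝓝 (f x₀))) : Tendsto u l (𝓝 x₀) := by
  refine (nhds_basis_opens x₀).tendsto_right_iff.2 fun U ⟨hx₀U, hU⟩ => ?_
  rcases (K \ U).eq_empty_or_nonempty with hKU | hKU
  · filter_upwards [hu] with a ha
    by_contra haU
    exact (eq_empty_iff_forall_notMem.1 hKU) _ ⟨ha, haU⟩
  obtain ⟨x₁, hx₁, hx₁min⟩ := (hK.diff hU).exists_isMinOn hKU (hf.mono sdiff_subset)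
  have hx₁x₀ : x₁ ≠ x₀ := fun h => hx₁.2 (h ▸ hx₀U)
  filter_upwards [hu, hfu.eventually (gt_mem_nhds (hmin x₁ hx₁.1 hx₁x₀))] with a ha hfa
  by_contra haU
  exact (hx₁min ⟨ha, haU⟩).not_gt hfa

section RescaledLoss

variable {E ι : Type*} [NormedAddCommGroup E] [InnerProductSpace ℝ E] [Fintype ι]
  {ℓ : ℝ → ℝ} {z : ι → E} {p θ C B : ℝ}

noncomputable def rescaledLoss (ℓ : ℝ → ℝ) (z : ι → E) (p θ B : ℝ) (u : E) : ℝ :=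
  (B ^ p)⁻¹ * ∑ i, ℓ (B * max ⟪u, z i⟫ θ)

lemma tendsto_inv_rpow_mul_sub_of_tendsto_div_rpow (hp : p ≤ 0) (hθ : 0 < θ)
    (hℓ : Tendsto (fun t => ℓ t / t ^ p) atTop (𝓝 C)) {t : ℝ → ℝ} (ht : ∀ B, θ ≤ t B) :
    Tendsto (fun B => (B ^ p)⁻¹ * ℓ (B * t B) - C * t B ^ p) atTop (𝓝 0) := by
  have hBt : Tendsto (fun B => B * t B) atTop atTop := by
    refine tendsto_atTop_mono' _ ?_ (tendsto_id.atTop_mul_const hθ)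
    filter_upwards [eventually_ge_atTop 0] with B hB
    exact mul_le_mul_of_nonneg_left (ht B) hB
  have hratio : Tendsto (fun B => θ ^ p * ‖ℓ (B * t B) / (B * t B) ^ p - C‖) atTop (𝓝 0) := by
    simpa using (((hℓ.comp hBt).sub_const C).norm).const_mul (θ ^ p)
  refine squeeze_zero_norm' ?_ hratio
  filter_upwards [eventually_gt_atTop 0] with B hB
  have ht0 : 0 < t B := hθ.trans_le (ht B)
  have hsplit : (B ^ p)⁻¹ * ℓ (B * t B) - C * t B ^ p =
      t B ^ p * (ℓ (B * t B) / (B * t B) ^ p - C) := by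
    have hBp := (Real.rpow_pos_of_pos hB p).ne'
    have htp := (Real.rpow_pos_of_pos ht0 p).ne'
    rw [Real.mul_rpow hB.le ht0.le]
    field_simp
  rw [hsplit, norm_mul, Real.norm_of_nonneg (Real.rpow_nonneg ht0.le _)]
  exact mul_le_mul_of_nonneg_right (Real.rpow_le_rpow_of_nonpos hθ (ht B) hp) (norm_nonneg _)

/-- As `v` is arbitrary, this is convergence uniform in the point. -/
lemma tendsto_rescaledLoss_sub_marginPotential (hp : p ≤ 0) (hθ : 0 < θ)
    (hℓ : Tendsto (fun t => ℓ t / t ^ p) atTop (𝓝 C)) (v : ℝ → E) :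
    Tendsto (fun B => rescaledLoss ℓ z p θ B (v B) - C * marginPotential z p θ (v B))
      atTop (𝓝 0) := by
  have := tendsto_finsetSum Finset.univ fun i _ =>
    tendsto_inv_rpow_mul_sub_of_tendsto_div_rpow hp hθ hℓ (t := fun B => max ⟪v B, z i⟫ θ)
      fun _ => le_max_right _ _
  simpa [rescaledLoss, marginPotential, Finset.mul_sum, Finset.sum_sub_distrib] using this

lemma rescaledLoss_inv_smul_le (hℓ : Antitone ℓ) (hB : 0 < B) {w u : E}
    (hw : ∀ v : E, ‖v‖ ≤ B → ∑ i, ℓ ⟪w, z i⟫ ≤ ∑ i, ℓ ⟪v, z i⟫) (hu : ‖u‖ ≤ 1)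
    (huθ : ∀ i, θ ≤ ⟪u, z i⟫) :
    rescaledLoss ℓ z p θ B (B⁻¹ • w) ≤ rescaledLoss ℓ z p θ B u := by
  refine mul_le_mul_of_nonneg_left ?_ (inv_nonneg.2 (Real.rpow_nonneg hB.le _))
  calc ∑ i, ℓ (B * max ⟪B⁻¹ • w, z i⟫ θ) ≤ ∑ i, ℓ ⟪w, z i⟫ :=
        Finset.sum_le_sum fun i _ => hℓ <| by
          rw [real_inner_smul_left]
          exact (mul_inv_cancel_left₀ hB.ne' _).symm.trans_le
            (mul_le_mul_of_nonneg_left (le_max_left _ _) hB.le)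
    _ ≤ ∑ i, ℓ ⟪B • u, z i⟫ := hw _ (by
          rw [norm_smul, Real.norm_of_nonneg hB.le]; exact mul_le_of_le_one_right hB.le hu)
    _ = ∑ i, ℓ (B * max ⟪u, z i⟫ θ) := by simp only [real_inner_smul_left, max_eq_left (huθ _)]

theorem tendsto_inv_smul_of_strict_minimizer_marginPotential [FiniteDimensional ℝ E] {w : E}
    (hp : p < 0) (hθ : 0 < θ) (hC : 0 < C)
    (hℓ : Antitone ℓ) (hℓC : Tendsto (fun t => ℓ t / t ^ p) atTop (𝓝 C))
    (hw : w ∈ closedBall (0 : E) 1) (hwθ : ∀ i, θ ≤ ⟪w, z i⟫)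
    (hmin : ∀ u ∈ closedBall (0 : E) 1, u ≠ w → marginPotential z p θ w < marginPotential z p θ u)
    {wbar : ℝ → E} (hwbar : ∀ B, 0 ≤ B → ‖wbar B‖ ≤ B ∧
      ∀ v : E, ‖v‖ ≤ B → ∑ i, ℓ ⟪wbar B, z i⟫ ≤ ∑ i, ℓ ⟪v, z i⟫) :
    Tendsto (fun B => B⁻¹ • wbar B) atTop (𝓝 w) := by
  set G := marginPotential z p θ
  set L := rescaledLoss ℓ z p θ
  have hball : ∀ᶠ B in atTop, B⁻¹ • wbar B ∈ closedBall (0 : E) 1 := by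
    filter_upwards [eventually_gt_atTop 0] with B hB
    rw [mem_closedBall_zero_iff, norm_smul, norm_inv, Real.norm_of_nonneg hB.le]
    exact inv_mul_le_one_of_le₀ (hwbar B hB.le).1 hB.le
  refine (isCompact_closedBall 0 1).tendsto_nhds_of_tendsto_of_strict_minimizer
    (continuous_marginPotential (z := z) (p := p) hθ).continuousOn hmin hball ?_
  -- with `e v := L B v - C * G v → 0`, minimality of `wbar B` gives
  -- `C * G (B⁻¹ • wbar B) ≤ C * G w + e w - e (B⁻¹ • wbar B)`
  have herr := (tendsto_rescaledLoss_sub_marginPotential (z := z) hp.le hθ hℓC fun _ => w).sub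
    (tendsto_rescaledLoss_sub_marginPotential (z := z) hp.le hθ hℓC fun B => B⁻¹ • wbar B)
  refine tendsto_of_tendsto_of_tendsto_of_le_of_le' tendsto_const_nhds
    (by simpa using (herr.const_mul C⁻¹).const_add (G w)) ?_ ?_
  · filter_upwards [hball] with B hB
    rcases eq_or_ne (B⁻¹ • wbar B) w with h | h
    · rw [h]
    · exact (hmin _ hB h).le
  · filter_upwards [eventually_gt_atTop 0] with B hB
    have hL := rescaledLoss_inv_smul_le (p := p) hℓ hB (hwbar B hB.le).2
      (mem_closedBall_zero_iff.1 hw) hwθ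
    rw [← sub_nonneg]
    have : G w + C⁻¹ * ((L B w - C * G w) - (L B (B⁻¹ • wbar B) - C * G (B⁻¹ • wbar B))) -
        G (B⁻¹ • wbar B) = C⁻¹ * (L B w - L B (B⁻¹ • wbar B)) := by
      field_simp
      ring
    rw [this]
    exact mul_nonneg (inv_nonneg.2 hC.le) (sub_nonneg.2 hL)

end RescaledLoss

theorem polynomial_tail_regularization_direction_exists_general
    {d n : ℕ} (hn : 0 < n)
    (x : Fin n → EuclideanSpace ℝ (Fin d)) (y : Fin n → ℝ)
    (hsep : ∃ (u : EuclideanSpace ℝ (Fin d)) (γ : ℝ), ‖u‖ = 1 ∧ 0 < γ ∧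
      ∀ i, γ ≤ y i * ⟪u, x i⟫)
    (ℓ : ℝ → ℝ)
    (hconv : ConvexOn ℝ Set.univ ℓ)
    (hdiff : Differentiable ℝ ℓ)
    (hanti : StrictAnti ℓ)
    (hlim0 : Tendsto ℓ atTop (nhds 0))
    (a b : ℝ) (ha : 0 < a)
    (htail : Tendsto (fun z : ℝ => -deriv ℓ z / (a * z ^ (-b))) atTop (nhds 1))
    (R : EuclideanSpace ℝ (Fin d) → ℝ)
    (hR : R = fun w => (1 / (n : ℝ)) * ∑ i, ℓ (y i * ⟪w, x i⟫))
    (wbar : ℝ → EuclideanSpace ℝ (Fin d))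
    (hwbar : ∀ B : ℝ, 0 ≤ B → ‖wbar B‖ ≤ B ∧ ∀ v, ‖v‖ ≤ B → R (wbar B) ≤ R v) :
    ∃ u : EuclideanSpace ℝ (Fin d),
      Tendsto (fun B : ℝ => B⁻¹ • wbar B) atTop (nhds u) := by
  obtain ⟨u₀, γ, hu₀, hγ, hu₀γ⟩ := hsep
  have : Nonempty (Fin n) := ⟨⟨0, hn⟩⟩
  have hb1 : 1 < b := one_lt_of_tendsto_neg_deriv_div_rpow ha
    (hconv.tendsto_mul_deriv_atTop hdiff hanti.antitone hlim0) htail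
  have hmargin : ∀ w i, y i * ⟪w, x i⟫ = ⟪w, y i • x i⟫ := fun w i =>
    (real_inner_smul_right _ _ _).symm
  obtain ⟨θ, hθ, ub, hub, hubθ, hmin⟩ := exists_strict_minimizer_marginPotential
    (z := fun i => y i • x i) (sub_neg.2 hb1)
    ⟨u₀, mem_closedBall_zero_iff.2 hu₀.le, fun i => hγ.trans_le (hmargin u₀ i ▸ hu₀γ i)⟩
  refine ⟨ub, tendsto_inv_smul_of_strict_minimizer_marginPotential (sub_neg.2 hb1) hθ
    (div_pos ha (sub_pos.2 hb1)) hanti.antitone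
    (tendsto_div_rpow_of_tendsto_neg_deriv_div_rpow hdiff hlim0 ha.ne' hb1 htail) hub hubθ hmin
    fun B hB => ⟨(hwbar B hB).1, fun v hv => ?_⟩⟩
  have hRv := (hwbar B hB).2 v hv
  simp only [hR, hmargin] at hRv
  exact le_of_mul_le_mul_left hRv (by positivity)

/-- For linearly separable data and a loss with polynomial
tail `−ℓ'(z) ∼ a z^{−b}`, the regularization-path direction
`lim_{B→∞} w̄(B)/B` exists. -/
theorem polynomial_tail_regularization_direction_exists
    {d n : ℕ} (hn : 0 < n)
    (x : Fin n → EuclideanSpace ℝ (Fin d)) (y : Fin n → ℝ)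
    (hx : ∀ i, ‖x i‖ ≤ 1) (hy : ∀ i, y i = 1 ∨ y i = -1)
    (hsep : ∃ (u : EuclideanSpace ℝ (Fin d)) (γ : ℝ), ‖u‖ = 1 ∧ 0 < γ ∧
      ∀ i, γ ≤ y i * ⟪u, x i⟫)
    (ℓ : ℝ → ℝ)
    (hconv : ConvexOn ℝ Set.univ ℓ)
    (hdiff : Differentiable ℝ ℓ)
    (hanti : StrictAnti ℓ)
    (hlim0 : Tendsto ℓ atTop (nhds 0))
    (a b : ℝ) (ha : 0 < a) (hb : 0 < b)
    (htail : Tendsto (fun z : ℝ => -deriv ℓ z / (a * z ^ (-b))) atTop (nhds 1))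
    (R : EuclideanSpace ℝ (Fin d) → ℝ)
    (hR : R = fun w => (1 / (n : ℝ)) * ∑ i, ℓ (y i * ⟪w, x i⟫))
    (wbar : ℝ → EuclideanSpace ℝ (Fin d))
    (hwbar : ∀ B : ℝ, 0 ≤ B → ‖wbar B‖ ≤ B ∧ ∀ v, ‖v‖ ≤ B → R (wbar B) ≤ R v) :
    ∃ u : EuclideanSpace ℝ (Fin d),
      Tendsto (fun B : ℝ => B⁻¹ • wbar B) atTop (nhds u) :=
  polynomial_tail_regularization_direction_exists_general hn x y hsep ℓ hconv hdiff hanti hlim0 a b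
    ha htail R hR wbar hwbar
end

section
/- There exist a loss function ℓ : ℝ → ℝ that is convex, differentiable, strictly decreasing with lim_{z→∞} ℓ(z) = 0, and 2-smooth (ℓ' is 2-Lipschitz), together with a linearly separable training set {(x_i, y_i)}_{i=1}^n, such that the regularization-path direction w̄(B)/B does not converge as B → ∞. -/
/-!
The loss is `ℓ z = ∫ t in Ioi z, a t`, where the rate `a = -ℓ'` is the upper envelope of the
1-Lipschitz bumps `125 q / max z (5 q) ^ 3` over the scales `q = 125 ^ k`; on `[q, 5 q]` it is
the constant `q⁻²`, on `[5 q, 25 q]` it is `125 q / z ^ 3`.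

For the data `x₁ = e₀`, `x₂ = e₁ / 2` with labels `+1`, a minimizer of `ℓ w₁ + ℓ (w₂ / 2)` on
the disc of radius `B` lies on the circle in the positive quadrant, and since rotating it keeps
it admissible, `2 w₂ a w₁ = w₁ a (w₂ / 2)`. This forces `w₁` and `w₂ / 2` into `[B / 5, B]`, where
at `B = 5 q` the rate is constant, giving `w₁ = 2 w₂`, and at `B = 25 q` it is cubic, giving
`2 w₁ ² = w₂ ²`. Both radii are unbounded, so `w̄ B / B` has two different limit points.
-/

open Filter RealInnerProductSpace MeasureTheory Set

theorem inv_pow_three_sub_inv_pow_three_le {m s t : ℝ} (hm : 0 < m) (hms : m ≤ s) (hst : s ≤ t) :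
    (s ^ 3)⁻¹ - (t ^ 3)⁻¹ ≤ 3 / m ^ 4 * (t - s) := by
  have hs : 0 < s := hm.trans_le hms
  have ht : 0 < t := hs.trans_le hst
  rw [inv_sub_inv (by positivity) (by positivity), div_mul_eq_mul_div,
    div_le_div_iff₀ (by positivity) (by positivity)]
  have h₁ : t ^ 2 + t * s + s ^ 2 ≤ 3 * t ^ 2 := by nlinarith
  have h₂ : m ^ 4 * t ^ 2 ≤ s ^ 3 * t ^ 3 := by
    have : m ^ 3 * m ≤ s ^ 3 * t := mul_le_mul (pow_le_pow_left₀ hm.le hms 3) (hms.trans hst)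
      hm.le (by positivity)
    nlinarith [sq_nonneg t]
  calc (t ^ 3 - s ^ 3) * m ^ 4 = (t - s) * ((t ^ 2 + t * s + s ^ 2) * m ^ 4) := by ring
    _ ≤ (t - s) * (3 * (s ^ 3 * t ^ 3)) := by
        refine mul_le_mul_of_nonneg_left ?_ (sub_nonneg.2 hst)
        nlinarith [mul_le_mul_of_nonneg_right h₁ (pow_pos hm 4).le]
    _ = 3 * (t - s) * (s ^ 3 * t ^ 3) := by ring

section TailIntegral

variable {a : ℝ → ℝ}

theorem Continuous.integrableOn_Ioi_of_integrableOn_Ioi {c₀ : ℝ} (ha : Continuous a)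
    (h : IntegrableOn a (Ioi c₀)) (c : ℝ) : IntegrableOn a (Ioi c) := by
  rcases le_total c₀ c with hc | hc
  · exact h.mono_set (Ioi_subset_Ioi hc)
  · rw [← Ioc_union_Ioi_eq_Ioi hc]
    exact ha.integrableOn_Ioc.union h

theorem hasDerivAt_integral_Ioi (ha : Continuous a) (hint : ∀ c, IntegrableOn a (Ioi c))
    (z : ℝ) : HasDerivAt (fun z => ∫ t in Ioi z, a t) (-a z) z := by
  have heq : (fun z => ∫ t in Ioi z, a t) = fun z => (∫ t in Ioi 0, a t) - ∫ t in 0..z, a t := by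
    ext z
    rw [← intervalIntegral.integral_Ioi_sub_Ioi' (hint 0) (hint z), sub_sub_cancel]
  rw [heq]
  exact ((ha.integral_hasStrictDerivAt 0 z).hasDerivAt).const_sub _

end TailIntegral

theorem LipschitzWith.ciSup {α ι : Type*} [PseudoMetricSpace α] [Nonempty ι] {K : NNReal}
    {f : ι → α → ℝ} (hf : ∀ i, LipschitzWith K (f i))
    (hbdd : ∀ x, BddAbove (range fun i => f i x)) :
    LipschitzWith K fun x => ⨆ i, f i x :=
  LipschitzWith.of_le_add_mul K fun x y => ciSup_le fun i =>
    ((hf i).le_add_mul x y).trans (add_le_add_left (le_ciSup (hbdd y) i) _)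

namespace SmoothLossCounterexample

/-- `(w₁, w₂)` minimizes the risk `L ⟪w, e₀⟫ + L ⟪w, e₁ / 2⟫` over the disc of radius `B`. -/
def IsRegularizedMin (L : ℝ → ℝ) (B w₁ w₂ : ℝ) : Prop :=
  w₁ ^ 2 + w₂ ^ 2 ≤ B ^ 2 ∧
    ∀ v₁ v₂ : ℝ, v₁ ^ 2 + v₂ ^ 2 ≤ B ^ 2 → L w₁ + L (w₂ / 2) ≤ L v₁ + L (v₂ / 2)

namespace IsRegularizedMin

variable {L a : ℝ → ℝ} {B w₁ w₂ : ℝ}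

theorem nonneg_and_sq_add_sq_eq (h : IsRegularizedMin L B w₁ w₂) (hL : StrictAnti L) :
    0 ≤ w₁ ∧ 0 ≤ w₂ ∧ w₁ ^ 2 + w₂ ^ 2 = B ^ 2 := by
  obtain ⟨hw, hmin⟩ := h
  set p := Real.sqrt (B ^ 2 - w₂ ^ 2)
  have hp : p ^ 2 = B ^ 2 - w₂ ^ 2 := Real.sq_sqrt (by linarith [sq_nonneg w₁])
  have hw₁p : w₁ ≤ p := Real.le_sqrt_of_sq_le (by linarith)
  have hw₂ : w₂ / 2 ≤ |w₂| / 2 := by linarith [le_abs_self w₂]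
  have hle := hmin p |w₂| (by rw [sq_abs]; linarith)
  have h₁ : w₁ = p := hL.injective
    (le_antisymm (by linarith [hL.antitone hw₂]) (hL.antitone hw₁p))
  have h₂ : w₂ / 2 = |w₂| / 2 := hL.injective
    (le_antisymm (by linarith [hL.antitone hw₁p]) (hL.antitone hw₂))
  exact ⟨h₁ ▸ Real.sqrt_nonneg _, by linarith [abs_nonneg w₂], by rw [h₁, hp]; ring⟩

/-- Rotating the minimizer keeps it feasible, so the angle `θ = 0` is a critical point. -/
theorem first_order_condition (h : IsRegularizedMin L B w₁ w₂) (hL : ∀ z, HasDerivAt L (-a z) z) :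
    2 * w₂ * a w₁ = w₁ * a (w₂ / 2) := by
  obtain ⟨hw, hmin⟩ := h
  set f : ℝ → ℝ := fun θ =>
    L (w₁ * Real.cos θ - w₂ * Real.sin θ) + L ((w₁ * Real.sin θ + w₂ * Real.cos θ) / 2)
  have hf : HasDerivAt f (-a w₁ * -w₂ + -a (w₂ / 2) * (w₁ / 2)) 0 := by
    have h₁ : HasDerivAt (fun θ => w₁ * Real.cos θ - w₂ * Real.sin θ) (-w₂) 0 := by
      simpa using ((Real.hasDerivAt_cos 0).const_mul w₁).fun_sub
        ((Real.hasDerivAt_sin 0).const_mul w₂)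
    have h₂ : HasDerivAt (fun θ => (w₁ * Real.sin θ + w₂ * Real.cos θ) / 2) (w₁ / 2) 0 := by
      simpa using (((Real.hasDerivAt_sin 0).const_mul w₁).fun_add
        ((Real.hasDerivAt_cos 0).const_mul w₂)).div_const 2
    exact ((hL w₁).comp_of_eq 0 h₁ (by simp)).fun_add ((hL (w₂ / 2)).comp_of_eq 0 h₂ (by simp))
  have hmin₀ : IsLocalMin f 0 := Eventually.of_forall fun θ => by
    simpa [f] using hmin _ _ (by nlinarith [Real.sin_sq_add_cos_sq θ])
  linear_combination 2 * hmin₀.hasDerivAt_eq_zero hf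

theorem mem_window (h : IsRegularizedMin L B w₁ w₂) (hL : ∀ z, HasDerivAt L (-a z) z)
    (ha : ∀ z, 0 < a z) (ha' : Antitone a) (hB : 0 < B) :
    w₁ ∈ Icc (B / 5) B ∧ w₂ / 2 ∈ Icc (B / 5) B := by
  have hanti : StrictAnti L := strictAnti_of_deriv_neg fun z => by
    simpa [(hL z).deriv] using ha z
  obtain ⟨hw₁, hw₂, hs⟩ := h.nonneg_and_sq_add_sq_eq hanti
  have hfo := h.first_order_condition hL
  have ha₂ := ha (w₂ / 2)
  have hw₁' : 0 < w₁ := hw₁.lt_of_ne fun h₀ => by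
    subst h₀
    obtain rfl : w₂ = 0 := by simpa [(ha 0).ne'] using hfo
    nlinarith
  have hw₂' : 0 < w₂ := hw₂.lt_of_ne fun h₀ => by
    subst h₀
    simp [(ha 0).ne', hw₁'.ne'] at hfo
  have hlo : w₂ / 2 ≤ w₁ := by
    by_contra! hlt
    nlinarith [ha' hlt.le, mul_pos hw₁' ha₂]
  have hhi : w₁ ≤ 2 * w₂ := by
    by_contra! hlt
    nlinarith [ha' (show w₂ / 2 ≤ w₁ by linarith), mul_pos hw₂' ha₂]
  refine ⟨⟨?_, ?_⟩, ?_, ?_⟩ <;> nlinarith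

theorem eq_two_mul_of_const (h : IsRegularizedMin L B w₁ w₂) (hL : ∀ z, HasDerivAt L (-a z) z)
    (ha : ∀ z, 0 < a z) (ha' : Antitone a) (hB : 0 < B) {c : ℝ}
    (hconst : ∀ z ∈ Icc (B / 5) B, a z = c) : w₁ = 2 * w₂ := by
  obtain ⟨hw₁, hw₂⟩ := h.mem_window hL ha ha' hB
  have hfo := h.first_order_condition hL
  have hc : 0 < c := hconst _ hw₁ ▸ ha w₁
  rw [hconst _ hw₁, hconst _ hw₂] at hfo
  exact (mul_right_cancel₀ hc.ne' hfo).symm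

theorem two_mul_sq_eq_of_cubic (h : IsRegularizedMin L B w₁ w₂)
    (hL : ∀ z, HasDerivAt L (-a z) z) (ha : ∀ z, 0 < a z) (ha' : Antitone a) (hB : 0 < B)
    {c : ℝ} (hcubic : ∀ z ∈ Icc (B / 5) B, a z = c / z ^ 3) : 2 * w₁ ^ 2 = w₂ ^ 2 := by
  obtain ⟨hw₁, hw₂⟩ := h.mem_window hL ha ha' hB
  have hw₁' : 0 < w₁ := by linarith [hw₁.1]
  have hw₂' : 0 < w₂ := by linarith [hw₂.1]
  have hc : 0 < c := by
    have := hcubic _ hw₁ ▸ ha w₁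
    exact (div_pos_iff_of_pos_right (by positivity)).mp this
  have hfo := h.first_order_condition hL
  rw [hcubic _ hw₁, hcubic _ hw₂] at hfo
  field_simp at hfo
  have h4 : (w₂ ^ 2 - 2 * w₁ ^ 2) * (w₂ ^ 2 + 2 * w₁ ^ 2) = 0 := by linear_combination hfo
  have : w₂ ^ 2 + 2 * w₁ ^ 2 ≠ 0 := by positivity
  linarith [(mul_eq_zero.mp h4).resolve_right this]

end IsRegularizedMin

noncomputable def scale (k : ℕ) : ℝ := 125 ^ k

theorem one_le_scale (k : ℕ) : 1 ≤ scale k := one_le_pow₀ (by norm_num)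

theorem scale_pos (k : ℕ) : 0 < scale k := one_pos.trans_le (one_le_scale k)

theorem scale_monotone : Monotone scale := pow_right_mono₀ (by norm_num)

theorem mul_scale_le_scale {i j : ℕ} (hij : i < j) : 125 * scale i ≤ scale j := by
  rw [scale, ← pow_succ']
  exact pow_right_mono₀ (by norm_num) hij

theorem tendsto_scale : Tendsto scale atTop atTop :=
  tendsto_pow_atTop_atTop_of_one_lt (by norm_num)

noncomputable def rateTerm (k : ℕ) (z : ℝ) : ℝ := 125 * scale k / max z (5 * scale k) ^ 3

theorem rateTerm_of_le {k : ℕ} {z : ℝ} (hz : z ≤ 5 * scale k) :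
    rateTerm k z = (scale k ^ 2)⁻¹ := by
  have := scale_pos k
  rw [rateTerm, max_eq_right hz]
  field_simp
  ring

theorem rateTerm_of_ge {k : ℕ} {z : ℝ} (hz : 5 * scale k ≤ z) :
    rateTerm k z = 125 * scale k / z ^ 3 := by
  rw [rateTerm, max_eq_left hz]

theorem rateTerm_pos (k : ℕ) (z : ℝ) : 0 < rateTerm k z := by
  have := scale_pos k
  unfold rateTerm
  have : 0 < max z (5 * scale k) := lt_max_of_lt_right (by positivity)
  positivity

theorem rateTerm_antitone (k : ℕ) : Antitone (rateTerm k) := fun z z' hz => by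
  have := scale_pos k
  unfold rateTerm
  gcongr

theorem rateTerm_le (k : ℕ) (z : ℝ) : rateTerm k z ≤ (scale k ^ 2)⁻¹ := by
  rcases le_total z (5 * scale k) with hz | hz
  · exact (rateTerm_of_le hz).le
  · exact (rateTerm_antitone k hz).trans (rateTerm_of_le le_rfl).le

theorem rateTerm_lipschitz (k : ℕ) : LipschitzWith 1 (rateTerm k) := by
  refine LipschitzWith.of_le_add_mul 1 fun x y => ?_
  rw [NNReal.coe_one, one_mul, Real.dist_eq]
  rcases le_total y x with hyx | hxy
  · linarith [rateTerm_antitone k hyx, abs_nonneg (x - y)]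
  have hq := one_le_scale k
  set m := 5 * scale k
  have hdiff := inv_pow_three_sub_inv_pow_three_le (by positivity) (le_max_right x m)
    (max_le_max_right m hxy)
  have hmax : max y m - max x m ≤ |x - y| := by
    rw [abs_sub_comm]
    exact (le_abs_self _).trans (abs_max_sub_max_le_abs y x m)
  have hconst : 125 * scale k * (3 / m ^ 4) ≤ 1 := by
    rw [mul_div_assoc', div_le_one (by positivity)]
    nlinarith [pow_le_pow_left₀ zero_le_one hq 3]
  have hts : 0 ≤ max y m - max x m := sub_nonneg.2 (max_le_max_right m hxy)
  calc rateTerm k x = rateTerm k y + 125 * scale k * ((max x m ^ 3)⁻¹ - (max y m ^ 3)⁻¹) := by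
        simp only [rateTerm, div_eq_mul_inv]; ring
    _ ≤ rateTerm k y + 125 * scale k * (3 / m ^ 4) * (max y m - max x m) := by
        rw [mul_assoc _ (3 / m ^ 4)]
        gcongr
    _ ≤ rateTerm k y + |x - y| := by nlinarith

theorem rateTerm_le_inv_one_add_sq (k : ℕ) {z : ℝ} (hz : 0 ≤ z) :
    rateTerm k z ≤ 26 * (1 + z ^ 2)⁻¹ := by
  have hq := one_le_scale k
  rw [← div_eq_mul_inv, le_div_iff₀ (by positivity)]
  rcases le_total z (5 * scale k) with hzq | hqz
  · rw [rateTerm_of_le hzq, inv_mul_le_iff₀ (by positivity)]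
    nlinarith
  · have hz5 : 5 ≤ z := by linarith
    rw [rateTerm_of_ge hqz, div_mul_eq_mul_div, div_le_iff₀ (by positivity)]
    nlinarith [mul_le_mul_of_nonneg_left hqz (sq_nonneg z), pow_le_pow_left₀ (by norm_num) hz5 2]

theorem bddAbove_range_rateTerm (z : ℝ) : BddAbove (range fun k => rateTerm k z) :=
  ⟨1, by
    rintro _ ⟨k, rfl⟩
    exact (rateTerm_le k z).trans (inv_le_one_of_one_le₀ (one_le_pow₀ (one_le_scale k)))⟩

noncomputable def rate (z : ℝ) : ℝ := ⨆ k, rateTerm k z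

theorem rateTerm_le_rate (k : ℕ) (z : ℝ) : rateTerm k z ≤ rate z :=
  le_ciSup (bddAbove_range_rateTerm z) k

theorem rate_pos (z : ℝ) : 0 < rate z := (rateTerm_pos 0 z).trans_le (rateTerm_le_rate 0 z)

theorem rate_antitone : Antitone rate := fun _ _ h =>
  ciSup_le fun k => (rateTerm_antitone k h).trans (rateTerm_le_rate k _)

theorem rate_lipschitz : LipschitzWith 1 rate :=
  LipschitzWith.ciSup rateTerm_lipschitz bddAbove_range_rateTerm

theorem integrableOn_rate (c : ℝ) : IntegrableOn rate (Ioi c) := by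
  refine rate_lipschitz.continuous.integrableOn_Ioi_of_integrableOn_Ioi (c₀ := 0) ?_ c
  refine (integrable_inv_one_add_sq.const_mul 26).integrableOn.mono'
    rate_lipschitz.continuous.aestronglyMeasurable.restrict ?_
  refine (ae_restrict_iff' (measurableSet_Ioi (a := 0))).2 (Eventually.of_forall fun z hz => ?_)
  rw [Real.norm_of_nonneg (rate_pos z).le]
  exact ciSup_le fun k => rateTerm_le_inv_one_add_sq k hz.le

theorem rate_eq_of_forall_le {k : ℕ} {z : ℝ} (h : ∀ j, rateTerm j z ≤ rateTerm k z) :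
    rate z = rateTerm k z :=
  le_antisymm (ciSup_le h) (rateTerm_le_rate k z)

theorem rate_eq_of_mem_flat {k : ℕ} {z : ℝ} (hz : z ∈ Icc (scale k) (5 * scale k)) :
    rate z = (scale k ^ 2)⁻¹ := by
  obtain ⟨hz₁, hz₂⟩ := hz
  have hq := scale_pos k
  have hz : 0 < z := hq.trans_le hz₁
  rw [← rateTerm_of_le hz₂]
  refine rate_eq_of_forall_le fun j => ?_
  rw [rateTerm_of_le hz₂]
  rcases lt_trichotomy j k with hjk | rfl | hkj
  · have hj := mul_scale_le_scale hjk
    rw [rateTerm_of_ge (by linarith [one_le_scale j]), div_le_iff₀ (by positivity),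
      ← div_eq_inv_mul, le_div_iff₀ (by positivity)]
    nlinarith [pow_le_pow_left₀ hq.le hz₁ 3]
  · exact rateTerm_le j z
  · refine (rateTerm_le j z).trans (inv_anti₀ (by positivity) ?_)
    gcongr
    exact scale_monotone hkj.le

theorem rate_eq_of_mem_cubic {k : ℕ} {z : ℝ} (hz : z ∈ Icc (5 * scale k) (25 * scale k)) :
    rate z = 125 * scale k / z ^ 3 := by
  obtain ⟨hz₁, hz₂⟩ := hz
  have hq := scale_pos k
  have hz : 0 < z := by linarith
  rw [← rateTerm_of_ge hz₁]
  refine rate_eq_of_forall_le fun j => ?_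
  rw [rateTerm_of_ge hz₁]
  rcases lt_trichotomy j k with hjk | rfl | hkj
  · rw [rateTerm_of_ge (by linarith [scale_monotone hjk.le])]
    gcongr
    exact scale_monotone hjk.le
  · exact (rateTerm_of_ge hz₁).le
  · have hj := mul_scale_le_scale hkj
    have := scale_pos j
    refine (rateTerm_le j z).trans ?_
    rw [← one_div, div_le_div_iff₀ (by positivity) (by positivity), one_mul]
    nlinarith [pow_le_pow_left₀ hz.le hz₂ 3, mul_le_mul hj hj (by positivity) (by positivity)]

noncomputable def loss (z : ℝ) : ℝ := ∫ t in Ioi z, rate t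

theorem hasDerivAt_loss (z : ℝ) : HasDerivAt loss (-rate z) z :=
  hasDerivAt_integral_Ioi rate_lipschitz.continuous integrableOn_rate z

theorem differentiable_loss : Differentiable ℝ loss := fun z =>
  (hasDerivAt_loss z).differentiableAt

theorem deriv_loss (z : ℝ) : deriv loss z = -rate z := (hasDerivAt_loss z).deriv

theorem convexOn_loss : ConvexOn ℝ univ loss :=
  Monotone.convexOn_univ_of_deriv differentiable_loss fun _ _ h => by
    simpa only [deriv_loss, neg_le_neg_iff] using rate_antitone h

theorem strictAnti_loss : StrictAnti loss :=
  strictAnti_of_deriv_neg fun z => by simpa only [deriv_loss, neg_lt_zero] using rate_pos z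

theorem tendsto_loss : Tendsto loss atTop (nhds 0) := tendsto_integral_Ioi_zero tendsto_id

theorem abs_deriv_loss_sub_le (z z' : ℝ) : |deriv loss z - deriv loss z'| ≤ |z - z'| := by
  simpa only [deriv_loss, Real.dist_eq, neg_sub_neg, abs_sub_comm (rate z'), NNReal.coe_one,
    one_mul] using rate_lipschitz.dist_le_mul z z'

theorem IsRegularizedMin.eq_two_mul_of_loss_five_mul_scale {k : ℕ} {w₁ w₂ : ℝ}
    (h : IsRegularizedMin loss (5 * scale k) w₁ w₂) :
    w₁ = 2 * w₂ ∧ w₁ ^ 2 + w₂ ^ 2 = (5 * scale k) ^ 2 := by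
  have hB : 0 < 5 * scale k := by have := scale_pos k; positivity
  refine ⟨h.eq_two_mul_of_const hasDerivAt_loss rate_pos rate_antitone hB
    (c := (scale k ^ 2)⁻¹) fun z hz => ?_, (h.nonneg_and_sq_add_sq_eq strictAnti_loss).2.2⟩
  rw [mul_div_cancel_left₀ _ (by norm_num : (5 : ℝ) ≠ 0)] at hz
  exact rate_eq_of_mem_flat hz

theorem IsRegularizedMin.two_mul_sq_eq_of_loss_twentyFive_mul_scale {k : ℕ} {w₁ w₂ : ℝ}
    (h : IsRegularizedMin loss (25 * scale k) w₁ w₂) : 2 * w₁ ^ 2 = w₂ ^ 2 := by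
  have hB : 0 < 25 * scale k := by have := scale_pos k; positivity
  refine h.two_mul_sq_eq_of_cubic hasDerivAt_loss rate_pos rate_antitone hB
    (c := 125 * scale k) fun z hz => ?_
  rw [show 25 * scale k / 5 = 5 * scale k by ring] at hz
  exact rate_eq_of_mem_cubic hz

noncomputable def trainingPoint : Fin 2 → EuclideanSpace ℝ (Fin 2) :=
  ![EuclideanSpace.single 0 1, EuclideanSpace.single 1 (1 / 2)]

theorem norm_trainingPoint_le (i : Fin 2) : ‖trainingPoint i‖ ≤ 1 := by
  fin_cases i <;> norm_num [trainingPoint]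

theorem sum_loss_trainingPoint (ℓ : ℝ → ℝ) (w : EuclideanSpace ℝ (Fin 2)) :
    ∑ i, ℓ (1 * ⟪w, trainingPoint i⟫) = ℓ (w 0) + ℓ (w 1 / 2) := by
  simp [Fin.sum_univ_two, trainingPoint, EuclideanSpace.inner_single_right, div_eq_inv_mul]

theorem norm_le_iff_sq_add_sq_le (v : EuclideanSpace ℝ (Fin 2)) {B : ℝ} (hB : 0 ≤ B) :
    ‖v‖ ≤ B ↔ v 0 ^ 2 + v 1 ^ 2 ≤ B ^ 2 := by
  rw [← sq_le_sq₀ (norm_nonneg v) hB, EuclideanSpace.norm_sq_eq]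
  simp [Fin.sum_univ_two]

theorem isRegularizedMin_of_forall_le (ℓ : ℝ → ℝ) {B : ℝ} (hB : 0 ≤ B)
    {w : EuclideanSpace ℝ (Fin 2)} (hw : ‖w‖ ≤ B)
    (hmin : ∀ v, ‖v‖ ≤ B → (1 / ((2 : ℕ) : ℝ)) * ∑ i, ℓ (1 * ⟪w, trainingPoint i⟫) ≤
      (1 / ((2 : ℕ) : ℝ)) * ∑ i, ℓ (1 * ⟪v, trainingPoint i⟫)) :
    IsRegularizedMin ℓ B (w 0) (w 1) := by
  refine ⟨(norm_le_iff_sq_add_sq_le w hB).1 hw, fun v₁ v₂ hv => ?_⟩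
  have := hmin !₂[v₁, v₂] ((norm_le_iff_sq_add_sq_le _ hB).2 (by simpa using hv))
  rw [sum_loss_trainingPoint, sum_loss_trainingPoint] at this
  simpa using this

theorem not_tendsto_smul_of_frequently {w : ℝ → EuclideanSpace ℝ (Fin 2)}
    (hflat : ∃ᶠ B in atTop, w B 0 = 2 * w B 1 ∧ w B 0 ^ 2 + w B 1 ^ 2 = B ^ 2)
    (hcubic : ∃ᶠ B in atTop, 2 * w B 0 ^ 2 = w B 1 ^ 2) (u : EuclideanSpace ℝ (Fin 2)) :
    ¬ Tendsto (fun B : ℝ => B⁻¹ • w B) atTop (nhds u) := by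
  intro hu
  have hu₁ : u 0 = 2 * u 1 ∧ u 0 ^ 2 + u 1 ^ 2 = 1 := by
    have hclosed :
        IsClosed {v : EuclideanSpace ℝ (Fin 2) | v 0 = 2 * v 1 ∧ v 0 ^ 2 + v 1 ^ 2 = 1} :=
      (isClosed_eq (by fun_prop) (by fun_prop)).inter (isClosed_eq (by fun_prop) (by fun_prop))
    refine hclosed.mem_of_frequently_of_tendsto
      ((hflat.and_eventually (eventually_gt_atTop 0)).mono ?_) hu
    rintro B ⟨⟨h₁, h₂⟩, hB⟩
    refine ⟨by simp [h₁]; ring, ?_⟩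
    simp only [PiLp.smul_apply, smul_eq_mul, mul_pow, ← mul_add, h₂]
    field_simp
  have hu₂ : 2 * u 0 ^ 2 = u 1 ^ 2 := by
    have hclosed : IsClosed {v : EuclideanSpace ℝ (Fin 2) | 2 * v 0 ^ 2 = v 1 ^ 2} :=
      isClosed_eq (by fun_prop) (by fun_prop)
    refine hclosed.mem_of_frequently_of_tendsto (hcubic.mono fun B h => ?_) hu
    simp only [mem_ofPred_eq, PiLp.smul_apply, smul_eq_mul, mul_pow, ← h]
    ring
  obtain ⟨h₁, h₂⟩ := hu₁
  rw [h₁] at h₂ hu₂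
  linarith

end SmoothLossCounterexample

open SmoothLossCounterexample in
/-- There exist a convex, differentiable, strictly decreasing
loss `ℓ` with `ℓ(z) → 0` as `z → ∞` whose derivative is 2-Lipschitz
(2-smoothness), together with a linearly separable training set, such that the
regularization-path direction `w̄(B)/B` does not converge as `B → ∞`. -/
theorem exists_smooth_loss_regularization_direction_diverges :
    ∃ (ℓ : ℝ → ℝ) (d n : ℕ) (x : Fin n → EuclideanSpace ℝ (Fin d))
      (y : Fin n → ℝ),
      0 < n ∧
      ConvexOn ℝ Set.univ ℓ ∧
      Differentiable ℝ ℓ ∧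
      StrictAnti ℓ ∧
      Tendsto ℓ atTop (nhds 0) ∧
      (∀ z z' : ℝ, |deriv ℓ z - deriv ℓ z'| ≤ 2 * |z - z'|) ∧
      (∀ i, ‖x i‖ ≤ 1) ∧ (∀ i, y i = 1 ∨ y i = -1) ∧
      (∃ (u : EuclideanSpace ℝ (Fin d)) (γ : ℝ), ‖u‖ = 1 ∧ 0 < γ ∧
        ∀ i, γ ≤ y i * ⟪u, x i⟫) ∧
      ∀ wbar : ℝ → EuclideanSpace ℝ (Fin d),
        (∀ B : ℝ, 0 ≤ B → ‖wbar B‖ ≤ B ∧ ∀ v, ‖v‖ ≤ B →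
          (1 / (n : ℝ)) * ∑ i, ℓ (y i * ⟪wbar B, x i⟫) ≤
            (1 / (n : ℝ)) * ∑ i, ℓ (y i * ⟪v, x i⟫)) →
        ¬ ∃ u : EuclideanSpace ℝ (Fin d),
            Tendsto (fun B : ℝ => B⁻¹ • wbar B) atTop (nhds u) := by
  refine ⟨loss, 2, 2, trainingPoint, fun _ => 1, two_pos, convexOn_loss, differentiable_loss,
    strictAnti_loss, tendsto_loss, fun z z' => ?_, norm_trainingPoint_le, fun _ => .inl rfl,
    ⟨!₂[3 / 5, 4 / 5], 2 / 5, ?_, by norm_num, fun i => ?_⟩, fun wbar hwbar ⟨u, hu⟩ => ?_⟩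
  · linarith [abs_deriv_loss_sub_le z z', abs_nonneg (z - z')]
  · rw [EuclideanSpace.norm_eq]
    norm_num [Fin.sum_univ_two]
  · fin_cases i <;> norm_num [trainingPoint, EuclideanSpace.inner_single_right]
  have hmin (B : ℝ) (hB : 0 < B) : IsRegularizedMin loss B (wbar B 0) (wbar B 1) :=
    isRegularizedMin_of_forall_le loss hB.le (hwbar B hB.le).1 (hwbar B hB.le).2
  have hscale (c : ℝ) (hc : 0 < c) : Tendsto (fun k => c * scale k) atTop atTop :=
    tendsto_scale.const_mul_atTop hc
  refine not_tendsto_smul_of_frequently ?_ ?_ u hu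
  · exact (hscale 5 (by norm_num)).frequently (Frequently.of_forall fun k =>
      (hmin _ (by have := scale_pos k; positivity)).eq_two_mul_of_loss_five_mul_scale)
  · exact (hscale 25 (by norm_num)).frequently (Frequently.of_forall fun k =>
      (hmin _ (by have := scale_pos k; positivity)).two_mul_sq_eq_of_loss_twentyFive_mul_scale)
end

section
/- For every C₀ > 1 there exist C₁ > C₀ and a function ℓ₁ : ℝ → ℝ that is convex, differentiable with 2-Lipschitz derivative, and satisfies ℓ₁(z) = e^{−z} for z ∈ [1, C₀] and ℓ₁(z) = 1/z for z ∈ [C₁, ∞). Similarly, for every C₀ > 1 there exist C₂ > C₀ and a convex, differentiable ℓ₂ with 2-Lipschitz derivative satisfying ℓ₂(z) = 1/z for z ∈ [1, C₀] and ℓ₂(z) = e^{−z} for z ∈ [C₂, ∞). -/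
/-!
A convex function whose derivative is `K`-Lipschitz is a primitive of a nondecreasing `K`-Lipschitz
function `g`. To switch from `f` on `[c, a]` to `h` on `[b, ∞)` it therefore suffices to join
`f'` to `h'` by such a `g` with `∫ x in a..b, g x = h b - f a`. We let `g` rise linearly from
`f' a` to `h' b` on `[a, m]` and stay constant on `[m, b]`. Its integral over `[a, b]` is affine
in `m`, so it takes every value between the slowest ramp (`m = b`) and the steepest one
(`m - a = (h' b - f' a) / K`). For `e^{-z} → 1/z` the choice `b = 4 e^{C₀}` puts `1/b - e^{-C₀}`
in this window, and for `1/z → e^{-z}` the choice `b = 3 C₀` does the same for `e^{-b} - 1/C₀`.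
-/

open Set Real
open scoped NNReal

/-- Monotone and `K`-Lipschitz on `s`, in a form that glues along intervals by
`MonotoneOn.union_right`. -/
def MonotoneLipschitzOn (K : ℝ≥0) (g : ℝ → ℝ) (s : Set ℝ) : Prop :=
  MonotoneOn g s ∧ MonotoneOn (fun x => K * x - g x) s

namespace MonotoneLipschitzOn

variable {K : ℝ≥0} {g u v : ℝ → ℝ} {s t : Set ℝ} {a : ℝ}

theorem mono (h : MonotoneLipschitzOn K g t) (hst : s ⊆ t) : MonotoneLipschitzOn K g s :=
  ⟨h.1.mono hst, h.2.mono hst⟩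

theorem congr (h : MonotoneLipschitzOn K u s) (huv : EqOn u v s) : MonotoneLipschitzOn K v s :=
  ⟨h.1.congr huv, h.2.congr fun x hx => by simp only [huv hx]⟩

theorem ite_le (hs : IsGreatest s a) (hu : MonotoneLipschitzOn K u s)
    (hv : MonotoneLipschitzOn K v (Ici a)) (ha : u a = v a) :
    MonotoneLipschitzOn K (fun x => if x ≤ a then u x else v x) (s ∪ Ici a) := by
  have hu' : MonotoneLipschitzOn K (fun x => if x ≤ a then u x else v x) s :=
    hu.congr fun x hx => (if_pos (hs.2 hx)).symm
  have hv' : MonotoneLipschitzOn K (fun x => if x ≤ a then u x else v x) (Ici a) :=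
    hv.congr fun x (hx : a ≤ x) => by
      by_cases hxa : x ≤ a
      · rw [if_pos hxa, le_antisymm hxa hx, ha]
      · rw [if_neg hxa]
  exact ⟨hu'.1.union_right hv'.1 hs isLeast_Ici, hu'.2.union_right hv'.2 hs isLeast_Ici⟩

theorem lipschitzWith (h : MonotoneLipschitzOn K g univ) : LipschitzWith K g := by
  refine LipschitzWith.of_dist_le_mul fun x y => ?_
  wlog hxy : x ≤ y generalizing x y
  · rw [dist_comm, dist_comm x]
    exact this y x (le_of_not_ge hxy)
  have hg := h.1 (mem_univ x) (mem_univ y) hxy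
  have hKg : K * x - g x ≤ K * y - g y := h.2 (mem_univ x) (mem_univ y) hxy
  rw [dist_comm, Real.dist_eq, abs_of_nonneg (sub_nonneg.2 hg), dist_comm, Real.dist_eq,
    abs_of_nonneg (sub_nonneg.2 hxy)]
  linarith

end MonotoneLipschitzOn

theorem monotoneLipschitzOn_affine {K : ℝ≥0} {σ : ℝ} (hσ : σ ∈ Icc 0 (K : ℝ)) (p a : ℝ)
    (s : Set ℝ) : MonotoneLipschitzOn K (fun x => p + σ * (x - a)) s :=
  ⟨fun x _ y _ h => by nlinarith [hσ.1], fun x _ y _ h => by nlinarith [hσ.2]⟩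

theorem monotoneLipschitzOn_of_hasDerivAt {K : ℝ≥0} {g g' : ℝ → ℝ} {s : Set ℝ}
    (hs : Convex ℝ s) (hg : ContinuousOn g s) (hderiv : ∀ x ∈ interior s, HasDerivAt g (g' x) x)
    (hg' : ∀ x ∈ interior s, g' x ∈ Icc 0 (K : ℝ)) : MonotoneLipschitzOn K g s :=
  ⟨monotoneOn_of_hasDerivWithinAt_nonneg hs hg (fun x hx => (hderiv x hx).hasDerivWithinAt)
      fun x hx => (hg' x hx).1,
    monotoneOn_of_hasDerivWithinAt_nonneg hs ((continuousOn_const.mul continuousOn_id).sub hg)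
      (fun x hx => (((hasDerivAt_id x).const_mul (K : ℝ)).sub (hderiv x hx)).hasDerivWithinAt)
      fun x hx => by simpa using (hg' x hx).2⟩

theorem monotoneLipschitzOn_neg_exp_neg {K : ℝ≥0} (hK : 1 ≤ K) :
    MonotoneLipschitzOn K (fun x => -exp (-x)) (Ici 0) := by
  refine monotoneLipschitzOn_of_hasDerivAt (convex_Ici 0) (by fun_prop)
    (fun x _ => by simpa using ((hasDerivAt_neg x).exp).fun_neg) fun x hx => ?_
  rw [interior_Ici, mem_Ioi] at hx
  exact ⟨(exp_pos _).le, (exp_le_one_iff.2 (by linarith)).trans (by exact_mod_cast hK)⟩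

theorem monotoneLipschitzOn_neg_inv_sq {K : ℝ≥0} (hK : 2 ≤ K) :
    MonotoneLipschitzOn K (fun x => -(x ^ 2)⁻¹) (Ici 1) := by
  refine monotoneLipschitzOn_of_hasDerivAt (g' := fun x => 2 * (x ^ 3)⁻¹) (convex_Ici 1)
    (fun x hx => by fun_prop (disch := exact pow_ne_zero _ (by linarith [mem_Ici.1 hx])))
    (fun x hx => ?_) fun x hx => ?_ <;> rw [interior_Ici, mem_Ioi] at hx
  · refine (((hasDerivAt_pow 2 x).fun_inv (by positivity)).fun_neg).congr_deriv ?_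
    field_simp
    ring
  · refine ⟨by positivity, ?_⟩
    have : (x ^ 3)⁻¹ ≤ 1 := inv_le_one_of_one_le₀ (one_le_pow₀ hx.le)
    have hK' : (2 : ℝ) ≤ K := by exact_mod_cast hK
    linarith

theorem sub_eq_sub_of_hasDerivAt {f F g : ℝ → ℝ} {x y : ℝ} (hxy : x ≤ y)
    (hf : ContinuousOn f (Icc x y)) (hF : ContinuousOn F (Icc x y))
    (hf' : ∀ z ∈ Ioo x y, HasDerivAt f (g z) z) (hF' : ∀ z ∈ Ioo x y, HasDerivAt F (g z) z) :
    f y - f x = F y - F x := by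
  rcases hxy.eq_or_lt with rfl | hxy
  · simp
  obtain ⟨z, -, hz⟩ := exists_hasDerivAt_eq_slope (f - F) (fun z => g z - g z) hxy (hf.sub hF)
    fun z hz => (hf' z hz).sub (hF' z hz)
  rw [sub_self, eq_comm, div_eq_zero_iff, sub_eq_zero, sub_eq_zero] at hz
  simp only [Pi.sub_apply] at hz
  rcases hz with hz | hz <;> linarith

noncomputable def switchProfile (c a m b : ℝ) (u v : ℝ → ℝ) (x : ℝ) : ℝ :=
  if x ≤ c then u c else if x ≤ a then u x else
    if x ≤ m then u a + (v b - u a) / (m - a) * (x - a) else if x ≤ b then v b else v x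

section switchProfile

variable {K : ℝ≥0} {c a m b : ℝ} {u v : ℝ → ℝ}

theorem monotoneLipschitzOn_switchProfile (hca : c ≤ a) (ham : a < m) (hmb : m ≤ b)
    (hu : MonotoneLipschitzOn K u (Icc c a)) (hv : MonotoneLipschitzOn K v (Ici b))
    (huv : u a ≤ v b) (hslope : v b - u a ≤ K * (m - a)) :
    MonotoneLipschitzOn K (switchProfile c a m b u v) univ := by
  have hma : 0 < m - a := sub_pos.2 ham
  have hconst (q : ℝ) (s : Set ℝ) : MonotoneLipschitzOn K (fun _ => q) s :=
    (monotoneLipschitzOn_affine ⟨le_rfl, K.2⟩ q 0 s).congr fun _ _ => by simp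
  have hσ : (v b - u a) / (m - a) ∈ Icc 0 (K : ℝ) :=
    ⟨div_nonneg (sub_nonneg.2 huv) hma.le, (div_le_iff₀ hma).2 hslope⟩
  have h₃ : MonotoneLipschitzOn K (fun x => if x ≤ b then v b else v x) (Ici m) := by
    rw [← Icc_union_Ici_eq_Ici hmb]
    exact (hconst _ _).ite_le (isGreatest_Icc hmb) hv rfl
  have h₂ : MonotoneLipschitzOn K (fun x => if x ≤ m then u a + (v b - u a) / (m - a) * (x - a)
      else if x ≤ b then v b else v x) (Ici a) := by
    rw [← Icc_union_Ici_eq_Ici ham.le]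
    refine (monotoneLipschitzOn_affine hσ _ _ _).ite_le (isGreatest_Icc ham.le) h₃ ?_
    rw [if_pos hmb, div_mul_cancel₀ _ hma.ne']
    ring
  have h₁ : MonotoneLipschitzOn K (fun x => if x ≤ a then u x else
      if x ≤ m then u a + (v b - u a) / (m - a) * (x - a) else if x ≤ b then v b else v x)
      (Ici c) := by
    rw [← Icc_union_Ici_eq_Ici hca]
    exact hu.ite_le (isGreatest_Icc hca) h₂ (by simp [ham.le])
  rw [← Iic_union_Ici (a := c)]
  exact (hconst _ _).ite_le isGreatest_Iic h₁ (by simp [hca])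

theorem sub_eq_of_hasDerivAt_switchProfile {ℓ : ℝ → ℝ} (hca : c ≤ a) (ham : a < m)
    (hmb : m ≤ b) (hℓ : ∀ x, HasDerivAt ℓ (switchProfile c a m b u v x) x) :
    ℓ b - ℓ a = v b * (b - a) - (v b - u a) * (m - a) / 2 := by
  set σ := (v b - u a) / (m - a)
  have hℓc := fun x y => (HasDerivAt.continuousOn fun z (_ : z ∈ Icc x y) => hℓ z)
  have hramp := sub_eq_sub_of_hasDerivAt ham.le (hℓc a m)
    (F := fun x => u a * x + σ * (x - a) ^ 2 / 2) (by fun_prop) (fun x _ => hℓ x) fun x hx => by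
      rw [switchProfile, if_neg (hca.trans_lt hx.1).not_ge, if_neg hx.1.not_ge, if_pos hx.2.le]
      refine (((hasDerivAt_id x).const_mul (u a)).add
        ((((hasDerivAt_id x).sub_const a).pow 2).const_mul σ |>.div_const 2)).congr_deriv ?_
      simp only [id_eq]
      ring
  have hflat := sub_eq_sub_of_hasDerivAt hmb (hℓc m b) (F := fun x => v b * x) (by fun_prop)
    (fun x _ => hℓ x) fun x hx => by
      rw [switchProfile, if_neg (hca.trans_lt (ham.trans hx.1)).not_ge,
        if_neg (ham.trans hx.1).not_ge, if_neg hx.1.not_ge, if_pos hx.2.le]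
      simpa using (hasDerivAt_id x).const_mul (v b)
  have hσ : σ * (m - a) = v b - u a := div_mul_cancel₀ _ (sub_pos.2 ham).ne'
  linear_combination hramp + hflat + (m - a) / 2 * hσ

end switchProfile

theorem MonotoneLipschitzOn.exists_primitive {K : ℝ≥0} {g : ℝ → ℝ}
    (hg : MonotoneLipschitzOn K g univ) (c v : ℝ) :
    ∃ ℓ : ℝ → ℝ, (∀ x, HasDerivAt ℓ (g x) x) ∧ ConvexOn ℝ univ ℓ ∧ LipschitzWith K (deriv ℓ) ∧
      ℓ c = v := by
  have hℓ : ∀ x, HasDerivAt (fun y => v + ∫ t in c..y, g t) (g x) x := fun x =>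
    ((hg.lipschitzWith.continuous.integral_hasStrictDerivAt c x).hasDerivAt).const_add v
  have hderiv : deriv (fun y => v + ∫ t in c..y, g t) = g := funext fun x => (hℓ x).deriv
  refine ⟨_, hℓ, ?_, by rw [hderiv]; exact hg.lipschitzWith, by simp⟩
  refine Monotone.convexOn_univ_of_deriv (fun x => (hℓ x).differentiableAt) ?_
  rw [hderiv]
  exact monotoneOn_univ.1 hg.1

theorem exists_convexOn_eqOn_of_monotoneLipschitzOn {K : ℝ≥0} {f h f' h' : ℝ → ℝ} {c a b : ℝ}
    (hK : 0 < K) (hca : c ≤ a)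
    (hf : ∀ x ∈ Icc c a, HasDerivAt f (f' x) x) (hh : ∀ x ∈ Ici b, HasDerivAt h (h' x) x)
    (hf' : MonotoneLipschitzOn K f' (Icc c a)) (hh' : MonotoneLipschitzOn K h' (Ici b))
    (hslope : f' a < h' b) (hlo : (f' a + h' b) * (b - a) / 2 ≤ h b - f a)
    (hhi : h b - f a ≤ h' b * (b - a) - (h' b - f' a) ^ 2 / (2 * K)) :
    ∃ ℓ : ℝ → ℝ, ConvexOn ℝ univ ℓ ∧ Differentiable ℝ ℓ ∧ LipschitzWith K (deriv ℓ) ∧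
      EqOn ℓ f (Icc c a) ∧ EqOn ℓ h (Ici b) := by
  -- the end of the ramp for which the profile has integral `h b - f a` over `[a, b]`
  set m := a + 2 * (h' b * (b - a) - (h b - f a)) / (h' b - f' a)
  have hqp : 0 < h' b - f' a := sub_pos.2 hslope
  have hma : m - a = 2 * (h' b * (b - a) - (h b - f a)) / (h' b - f' a) := by ring
  have hsteep : h' b - f' a ≤ K * (m - a) := by
    rw [hma, mul_div_assoc', le_div_iff₀ hqp]
    rw [le_sub_iff_add_le, ← le_sub_iff_add_le', div_le_iff₀ (by positivity)] at hhi
    nlinarith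
  have ham : a < m := by nlinarith
  have hmb : m ≤ b := by
    rw [← sub_nonneg, show b - m = b - a - (m - a) by ring, hma, sub_nonneg, div_le_iff₀ hqp]
    linarith
  obtain ⟨ℓ, hℓ, hconv, hlip, hℓc⟩ := (monotoneLipschitzOn_switchProfile hca ham hmb hf' hh'
    hslope.le hsteep).exists_primitive c (f c)
  have hℓcont := fun x y => (HasDerivAt.continuousOn fun z (_ : z ∈ Icc x y) => hℓ z)
  have hleft : EqOn ℓ f (Icc c a) := fun x hx => by
    have := sub_eq_sub_of_hasDerivAt hx.1 (hℓcont c x)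
      (HasDerivAt.continuousOn fun z hz => hf z ⟨hz.1, hz.2.trans hx.2⟩) (fun z _ => hℓ z)
      fun z hz => by
        rw [switchProfile, if_neg hz.1.not_ge, if_pos (hz.2.le.trans hx.2)]
        exact hf z ⟨hz.1.le, hz.2.le.trans hx.2⟩
    linarith
  have hmid : ℓ b = h b := by
    have := sub_eq_of_hasDerivAt_switchProfile hca ham hmb hℓ
    have hfa := hleft ⟨hca, le_rfl⟩
    rw [hma] at this
    field_simp at this
    linarith
  refine ⟨ℓ, hconv, fun x => (hℓ x).differentiableAt, hlip, hleft, fun x hx => ?_⟩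
  have := sub_eq_sub_of_hasDerivAt hx (hℓcont b x)
    (HasDerivAt.continuousOn fun z hz => hh z hz.1) (fun z _ => hℓ z) fun z hz => by
      rw [switchProfile, if_neg (hca.trans_lt (ham.trans (hmb.trans_lt hz.1))).not_ge,
        if_neg (ham.trans (hmb.trans_lt hz.1)).not_ge, if_neg (hmb.trans_lt hz.1).not_ge,
        if_neg hz.1.not_ge]
      exact hh z hz.1.le
  linarith

theorem exists_convexOn_exp_neg_to_inv {a : ℝ} (ha : 1 < a) :
    ∃ b, a < b ∧ ∃ ℓ : ℝ → ℝ, ConvexOn ℝ univ ℓ ∧ Differentiable ℝ ℓ ∧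
      LipschitzWith 2 (deriv ℓ) ∧ EqOn ℓ (fun x => exp (-x)) (Icc 1 a) ∧
      EqOn ℓ (fun x => x⁻¹) (Ici b) := by
  set X := exp a with hX_def
  have hX : a + 1 ≤ X := add_one_le_exp a
  have hX0 : 0 < X := exp_pos a
  refine ⟨4 * X, by linarith, exists_convexOn_eqOn_of_monotoneLipschitzOn
    (f' := fun x => -exp (-x)) (h' := fun x => -(x ^ 2)⁻¹) two_pos ha.le
    (fun x _ => by simpa using (hasDerivAt_neg x).exp)
    (fun x hx => hasDerivAt_inv (ne_of_gt (by linarith [mem_Ici.1 hx])))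
    ((monotoneLipschitzOn_neg_exp_neg one_le_two).mono fun x hx => zero_le_one.trans hx.1)
    ((monotoneLipschitzOn_neg_inv_sq le_rfl).mono fun x hx =>
      mem_Ici.2 (by linarith [mem_Ici.1 hx]))
    ?_ ?_ ?_⟩ <;> simp only [exp_neg, NNReal.coe_ofNat, ← hX_def]
  · rw [neg_lt_neg_iff]
    exact inv_strictAnti₀ hX0 (by nlinarith)
  · field_simp
    nlinarith
  · field_simp
    nlinarith [mul_pos hX0 hX0]

theorem exists_convexOn_inv_to_exp_neg {a : ℝ} (ha : 1 < a) :
    ∃ b, a < b ∧ ∃ ℓ : ℝ → ℝ, ConvexOn ℝ univ ℓ ∧ Differentiable ℝ ℓ ∧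
      LipschitzWith 2 (deriv ℓ) ∧ EqOn ℓ (fun x => x⁻¹) (Icc 1 a) ∧
      EqOn ℓ (fun x => exp (-x)) (Ici b) := by
  set Y := exp (3 * a) with hY_def
  have ha0 : 0 < a := by linarith
  have hY : 9 * a ^ 2 / 2 ≤ Y := by
    have := pow_div_factorial_le_exp (3 * a) (by positivity) 2
    norm_num [Nat.factorial] at this
    linarith
  have hY0 : 0 < Y := exp_pos _
  refine ⟨3 * a, by linarith, exists_convexOn_eqOn_of_monotoneLipschitzOn
    (f' := fun x => -(x ^ 2)⁻¹) (h' := fun x => -exp (-x)) two_pos ha.le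
    (fun x hx => hasDerivAt_inv (ne_of_gt (by linarith [hx.1])))
    (fun x _ => by simpa using (hasDerivAt_neg x).exp)
    ((monotoneLipschitzOn_neg_inv_sq le_rfl).mono fun x hx => hx.1)
    ((monotoneLipschitzOn_neg_exp_neg one_le_two).mono fun x hx =>
      mem_Ici.2 (by linarith [mem_Ici.1 hx]))
    ?_ ?_ ?_⟩ <;> simp only [exp_neg, NNReal.coe_ofNat, ← hY_def]
  · rw [neg_lt_neg_iff]
    exact inv_strictAnti₀ (by positivity) (by nlinarith)
  · field_simp
    nlinarith
  · have h1 : 4 * a ^ 4 + 8 * a ^ 5 + Y ≤ 4 * a ^ 3 * Y := by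
      have h3 : 1 ≤ a ^ 3 := one_le_pow₀ ha.le
      have h4 : a ^ 4 ≤ a ^ 5 := pow_le_pow_right₀ ha.le (by norm_num)
      have h2 : a ^ 2 ≤ a ^ 5 := pow_le_pow_right₀ ha.le (by norm_num)
      nlinarith [mul_le_mul_of_nonneg_left hY (by linarith : (0 : ℝ) ≤ 4 * a ^ 3 - 1)]
    field_simp
    nlinarith [mul_le_mul_of_nonneg_left h1 hY0.le, mul_pos ha0 ha0]

/-- For every `C₀ > 1` there exist `C₁ > C₀` and a convex,
differentiable function `ℓ₁` with 2-Lipschitz derivative which equals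
`e^{−z}` on `[1, C₀]` and `1/z` on `[C₁, ∞)`; and likewise there exist
`C₂ > C₀` and a convex, differentiable `ℓ₂` with 2-Lipschitz derivative which
equals `1/z` on `[1, C₀]` and `e^{−z}` on `[C₂, ∞)`. -/
theorem switch_between_exponential_and_reciprocal_tails (C₀ : ℝ) (hC₀ : 1 < C₀) :
    (∃ C₁ : ℝ, C₀ < C₁ ∧ ∃ ℓ₁ : ℝ → ℝ,
      ConvexOn ℝ Set.univ ℓ₁ ∧
      Differentiable ℝ ℓ₁ ∧
      (∀ z z' : ℝ, |deriv ℓ₁ z - deriv ℓ₁ z'| ≤ 2 * |z - z'|) ∧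
      (∀ z : ℝ, 1 ≤ z → z ≤ C₀ → ℓ₁ z = Real.exp (-z)) ∧
      (∀ z : ℝ, C₁ ≤ z → ℓ₁ z = 1 / z)) ∧
    (∃ C₂ : ℝ, C₀ < C₂ ∧ ∃ ℓ₂ : ℝ → ℝ,
      ConvexOn ℝ Set.univ ℓ₂ ∧
      Differentiable ℝ ℓ₂ ∧
      (∀ z z' : ℝ, |deriv ℓ₂ z - deriv ℓ₂ z'| ≤ 2 * |z - z'|) ∧
      (∀ z : ℝ, 1 ≤ z → z ≤ C₀ → ℓ₂ z = 1 / z) ∧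
      (∀ z : ℝ, C₂ ≤ z → ℓ₂ z = Real.exp (-z))) := by
  have hlip {ℓ : ℝ → ℝ} (h : LipschitzWith 2 (deriv ℓ)) (z z' : ℝ) :
      |deriv ℓ z - deriv ℓ z'| ≤ 2 * |z - z'| := by
    simpa [Real.dist_eq] using h.dist_le_mul z z'
  obtain ⟨C₁, hC₁, ℓ₁, hconv₁, hdiff₁, hlip₁, hexp₁, hinv₁⟩ := exists_convexOn_exp_neg_to_inv hC₀
  obtain ⟨C₂, hC₂, ℓ₂, hconv₂, hdiff₂, hlip₂, hinv₂, hexp₂⟩ := exists_convexOn_inv_to_exp_neg hC₀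
  exact ⟨⟨C₁, hC₁, ℓ₁, hconv₁, hdiff₁, hlip hlip₁, fun z h₁ h₂ => hexp₁ ⟨h₁, h₂⟩,
      fun z hz => (hinv₁ hz).trans (one_div z).symm⟩,
    ⟨C₂, hC₂, ℓ₂, hconv₂, hdiff₂, hlip hlip₂,
      fun z h₁ h₂ => (hinv₂ ⟨h₁, h₂⟩).trans (one_div z).symm, fun z hz => hexp₂ hz⟩⟩
end
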